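/- arXiv:2404.18806 — 7 statements merged into one kernel-verified Lean document; each statement's English description precedes it below -/
import Mathlib

section
/- For every natural number r ≥ 1, the maximum number of pairwise non-bonding dominoes that can be placed on the r×2 board is ⌊(r+1)/2⌋; that is, D(r,2,⌊(r+1)/2⌋) > 0 and D(r,2,d) = 0 for every d > ⌊(r+1)/2⌋. -/
/-- L1 (Manhattan) distance between two cells of the grid, via truncated
natural subtraction. -/
def cellDist (p q : ℕ × ℕ) : ℕ :=
  ((p.1 - q.1) + (q.1 - p.1)) + ((p.2 - q.2) + (q.2 - p.2))

/-- A domino on the `r × c` board: a 2-element set of cells of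
`{0,…,r−1} × {0,…,c−1}` whose two cells are at L1-distance 1. -/
def IsDomino (r c : ℕ) (dom : Finset (ℕ × ℕ)) : Prop :=
  dom.card = 2 ∧ (∀ p ∈ dom, p.1 < r ∧ p.2 < c) ∧
    ∀ p ∈ dom, ∀ q ∈ dom, p ≠ q → cellDist p q = 1

/-- Two dominoes are non-bonding if every cell of one is at L1-distance
at least 2 from every cell of the other. -/
def NonBonding (d₁ d₂ : Finset (ℕ × ℕ)) : Prop :=
  ∀ p ∈ d₁, ∀ q ∈ d₂, 2 ≤ cellDist p q

/-- `nbD r c d` is the number of `d`-element sets of pairwise non-bonding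
dominoes on the `r × c` board. -/
noncomputable def nbD (r c d : ℕ) : ℕ :=
  {S : Finset (Finset (ℕ × ℕ)) | S.card = d ∧ (∀ x ∈ S, IsDomino r c x) ∧
    ∀ x ∈ S, ∀ y ∈ S, x ≠ y → NonBonding x y}.ncard

lemma domino_structure {r c : ℕ} {D : Finset (ℕ × ℕ)} (h : IsDomino r c D) :
    ∃ p q : ℕ × ℕ, p ≠ q ∧ D = {p, q} ∧ p.1 < r ∧ p.2 < c ∧ q.1 < r ∧ q.2 < c ∧
      cellDist p q = 1 := by
  obtain ⟨hcard, hb, hd⟩ := h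
  obtain ⟨p, q, hpq, hD⟩ := Finset.card_eq_two.mp hcard
  subst hD
  exact ⟨p, q, hpq, rfl, (hb p (by simp)).1, (hb p (by simp)).2,
    (hb q (by simp)).1, (hb q (by simp)).2, hd p (by simp) q (by simp) hpq⟩

lemma dig1 (a b a' b' : ℕ) (hb : b < 2) (hb' : b' < 2)
    (h : a - a' + (a' - a) + (b - b' + (b' - b)) = 1) :
    (a = a' ∧ b ≠ b') ∨ (b = b' ∧ (a + 1 = a' ∨ a' + 1 = a)) := by omega

lemma dig2 (a b a' b' : ℕ) (hb : b < 2) (hb' : b' < 2)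
    (h : 2 ≤ a - a' + (a' - a) + (b - b' + (b' - b))) :
    a ≠ a' ∧ ((a' = a + 1 ∨ a = a' + 1) → b ≠ b') := by omega

lemma arith (a1 b1 a2 b2 a3 b3 a4 b4 : ℕ)
    (hp1c : b1 < 2) (hq1c : b2 < 2) (hp2c : b3 < 2) (hq2c : b4 < 2)
    (hd1 : a1 - a2 + (a2 - a1) + (b1 - b2 + (b2 - b1)) = 1)
    (hd2 : a3 - a4 + (a4 - a3) + (b3 - b4 + (b4 - b3)) = 1)
    (A : 2 ≤ a1 - a3 + (a3 - a1) + (b1 - b3 + (b3 - b1)))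
    (B : 2 ≤ a1 - a4 + (a4 - a1) + (b1 - b4 + (b4 - b1)))
    (C : 2 ≤ a2 - a3 + (a3 - a2) + (b2 - b3 + (b3 - b2)))
    (E : 2 ≤ a2 - a4 + (a4 - a2) + (b2 - b4 + (b4 - b2))) :
    max a1 a2 / 2 ≠ max a3 a4 / 2 := by
  have h1 := dig1 a1 b1 a2 b2 hp1c hq1c hd1
  have h2 := dig1 a3 b3 a4 b4 hp2c hq2c hd2
  have hA := dig2 a1 b1 a3 b3 hp1c hp2c A
  have hB := dig2 a1 b1 a4 b4 hp1c hq2c B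
  have hC := dig2 a2 b2 a3 b3 hq1c hp2c C
  have hE := dig2 a2 b2 a4 b4 hq1c hq2c E
  clear hd1 hd2 A B C E
  omega

lemma key {r : ℕ} {D1 D2 : Finset (ℕ × ℕ)} (h1 : IsDomino r 2 D1) (h2 : IsDomino r 2 D2)
    (hnb : NonBonding D1 D2) :
    D1.sup Prod.fst / 2 ≠ D2.sup Prod.fst / 2 := by
  obtain ⟨p1, q1, hne1, hD1, hp1r, hp1c, hq1r, hq1c, hd1⟩ := domino_structure h1
  obtain ⟨p2, q2, hne2, hD2, hp2r, hp2c, hq2r, hq2c, hd2⟩ := domino_structure h2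
  subst hD1; subst hD2
  have A := hnb p1 (by simp) p2 (by simp)
  have B := hnb p1 (by simp) q2 (by simp)
  have C := hnb q1 (by simp) p2 (by simp)
  have E := hnb q1 (by simp) q2 (by simp)
  obtain ⟨a1, b1⟩ := p1
  obtain ⟨a2, b2⟩ := q1
  obtain ⟨a3, b3⟩ := p2
  obtain ⟨a4, b4⟩ := q2
  simp only [Finset.sup_insert, Finset.sup_singleton]
  simp only [cellDist] at A B C E hd1 hd2
  simp only at hp1c hq1c hp2c hq2c
  exact arith a1 b1 a2 b2 a3 b3 a4 b4 hp1c hq1c hp2c hq2c hd1 hd2 A B C E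

lemma card_le {r : ℕ} {S : Finset (Finset (ℕ × ℕ))} (hd : ∀ x ∈ S, IsDomino r 2 x)
    (hnb : ∀ x ∈ S, ∀ y ∈ S, x ≠ y → NonBonding x y) : S.card ≤ (r + 1) / 2 := by
  have h := Finset.card_le_card_of_injOn (s := S) (f := fun D : Finset (ℕ × ℕ) => D.sup Prod.fst / 2)
    (t := Finset.range ((r + 1) / 2)) ?_ ?_
  · simpa using h
  · intro D hD
    obtain ⟨p, q, hne, hDeq, hpr, _, hqr, _, _⟩ := domino_structure (hd D hD)
    subst hDeq
    simp only [Finset.mem_coe, Finset.mem_range, Finset.sup_insert, Finset.sup_singleton]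
    omega
  · intro x hx y hy hxy
    by_contra hne
    exact key (hd x hx) (hd y hy) (hnb x hx y hy hne) hxy

lemma set_finite (r c d : ℕ) :
    {S : Finset (Finset (ℕ × ℕ)) | S.card = d ∧ (∀ x ∈ S, IsDomino r c x) ∧
      ∀ x ∈ S, ∀ y ∈ S, x ≠ y → NonBonding x y}.Finite := by
  apply Set.Finite.subset
    (Finset.finite_toSet ((Finset.range r ×ˢ Finset.range c).powerset.powerset))
  intro S hS
  obtain ⟨-, hdom, -⟩ := hS
  simp only [Finset.mem_coe, Finset.mem_powerset]
  intro x hx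
  rw [Finset.mem_powerset]
  intro p hp
  obtain ⟨h1, h2⟩ := (hdom x hx).2.1 p hp
  simp [Finset.mem_product, h1, h2]

theorem nbD_max_col2 (r : ℕ) (hr : 1 ≤ r) :
    0 < nbD r 2 ((r + 1) / 2) ∧ ∀ d : ℕ, (r + 1) / 2 < d → nbD r 2 d = 0 := by
  constructor
  · rw [nbD]
    rw [Set.ncard_pos (set_finite r 2 ((r + 1) / 2))]
    refine ⟨Finset.image (fun i => ({(2 * i, 0), (2 * i, 1)} : Finset (ℕ × ℕ)))
      (Finset.range ((r + 1) / 2)), ?_, ?_, ?_⟩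
    · rw [Finset.card_image_of_injOn, Finset.card_range]
      intro i _ j _ hij
      have hij' : ({(2 * i, 0), (2 * i, 1)} : Finset (ℕ × ℕ)) = {(2 * j, 0), (2 * j, 1)} := hij
      have : ((2 * i, 0) : ℕ × ℕ) ∈ ({(2 * j, 0), (2 * j, 1)} : Finset (ℕ × ℕ)) := by
        rw [← hij']; simp
      simp only [Finset.mem_insert, Finset.mem_singleton, Prod.mk.injEq] at this
      omega
    · intro x hx
      simp only [Finset.mem_image, Finset.mem_range] at hx
      obtain ⟨i, hi, rfl⟩ := hx
      refine ⟨?_, ?_, ?_⟩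
      · rw [Finset.card_insert_of_notMem (by simp), Finset.card_singleton]
      · intro p hp
        simp only [Finset.mem_insert, Finset.mem_singleton] at hp
        rcases hp with rfl | rfl <;> constructor <;> simp <;> omega
      · intro p hp q hq hpq
        simp only [Finset.mem_insert, Finset.mem_singleton] at hp hq
        rcases hp with rfl | rfl <;> rcases hq with rfl | rfl <;>
          simp_all [cellDist]
    · intro x hx y hy hxy
      simp only [Finset.mem_image, Finset.mem_range] at hx hy
      obtain ⟨i, hi, rfl⟩ := hx
      obtain ⟨j, hj, rfl⟩ := hy
      have hij : i ≠ j := by rintro rfl; exact hxy rfl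
      intro p hp q hq
      simp only [Finset.mem_insert, Finset.mem_singleton] at hp hq
      rcases hp with rfl | rfl <;> rcases hq with rfl | rfl <;>
        · simp only [cellDist]; omega
  · intro d hdgt
    rw [nbD]
    convert Set.ncard_empty (Finset (Finset (ℕ × ℕ)))
    rw [Set.eq_empty_iff_forall_notMem]
    rintro S ⟨hcard, hdom, hnb⟩
    have := card_le hdom hnb
    omega
end

section
/- For all natural numbers r ≥ 4 and d ≥ 2, the counts on two-column boards satisfy the recurrence D(r,2,d) = D(r−1,2,d) + 2·D(r−2,2,d−1) + D(r−3,2,d−1) − D(r−4,2,d−2). (This recurrence is equivalent to the rational generating function Σ_{r,d} D(r,2,d) x^r y^d = (1+xy+x²y−x³y²)/(1−x−2x²y−x³y+x⁴y²).) -/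
namespace NBD

open Finset

/-- horizontal domino in row i -/
def Hd (i : ℕ) : Finset (ℕ × ℕ) := {(i,0),(i,1)}
/-- vertical domino rows i,i+1, column j -/
def Vd (i j : ℕ) : Finset (ℕ × ℕ) := {(i,j),(i+1,j)}

lemma mem_Hd {p : ℕ × ℕ} {i : ℕ} : p ∈ Hd i ↔ p = (i,0) ∨ p = (i,1) := by
  simp [Hd]

lemma mem_Vd {p : ℕ × ℕ} {i j : ℕ} : p ∈ Vd i j ↔ p = (i,j) ∨ p = (i+1,j) := by
  simp [Vd]

lemma cellDist_mk (a b c d : ℕ) : cellDist (a,b) (c,d) = (a-c)+(c-a)+((b-d)+(d-b)) := rfl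

lemma isDomino_Hd {n i : ℕ} (h : i < n) : IsDomino n 2 (Hd i) := by
  refine ⟨by simp [Hd], ?_, ?_⟩
  · intro p hp; rcases mem_Hd.mp hp with rfl | rfl <;> simp [h]
  · intro p hp q hq hpq
    rcases mem_Hd.mp hp with rfl | rfl <;> rcases mem_Hd.mp hq with rfl | rfl <;>
      simp_all [cellDist_mk]

lemma isDomino_Vd {n i j : ℕ} (h : i + 1 < n) (hj : j < 2) : IsDomino n 2 (Vd i j) := by
  refine ⟨by simp [Vd], ?_, ?_⟩
  · intro p hp; rcases mem_Vd.mp hp with rfl | rfl <;> simp <;> omega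
  · intro p hp q hq hpq
    rcases mem_Vd.mp hp with rfl | rfl <;> rcases mem_Vd.mp hq with rfl | rfl <;>
      simp_all [cellDist_mk]

lemma isDomino_mono {n m : ℕ} {x : Finset (ℕ × ℕ)} (h : IsDomino n 2 x) (hnm : n ≤ m) :
    IsDomino m 2 x :=
  ⟨h.1, fun p hp => ⟨lt_of_lt_of_le (h.2.1 p hp).1 hnm, (h.2.1 p hp).2⟩, h.2.2⟩

/-- classification of dominoes on a 2-column board -/
lemma domino_cases {n : ℕ} {dom : Finset (ℕ × ℕ)} (h : IsDomino n 2 dom) :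
    (∃ i, i < n ∧ dom = Hd i) ∨ ∃ i j, i + 1 < n ∧ j < 2 ∧ dom = Vd i j := by
  obtain ⟨hcard, hbound, hdist⟩ := h
  obtain ⟨a, b, hab, rfl⟩ := Finset.card_eq_two.mp hcard
  have ha := hbound a (by simp); have hb := hbound b (by simp)
  have hd := hdist a (by simp) b (by simp) hab
  obtain ⟨a1,a2⟩ := a; obtain ⟨b1,b2⟩ := b
  simp only [cellDist_mk] at hd
  simp only at ha hb
  have : (a1 = b1 ∧ a2 = 0 ∧ b2 = 1) ∨ (a1 = b1 ∧ a2 = 1 ∧ b2 = 0) ∨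
      (a2 = b2 ∧ b1 = a1 + 1) ∨ (a2 = b2 ∧ a1 = b1 + 1) := by omega
  rcases this with ⟨rfl, rfl, rfl⟩ | ⟨rfl, rfl, rfl⟩ | ⟨rfl, rfl⟩ | ⟨rfl, rfl⟩
  · exact Or.inl ⟨a1, ha.1, rfl⟩
  · exact Or.inl ⟨a1, ha.1, by rw [Finset.pair_comm]; rfl⟩
  · exact Or.inr ⟨a1, a2, hb.1, ha.2, rfl⟩
  · exact Or.inr ⟨b1, a2, ha.1, ha.2, by rw [Finset.pair_comm]; rfl⟩

open scoped Classical in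
/-- configurations of d pairwise non-bonding dominoes on n×2 board, as a Finset -/
noncomputable def Pc (n d : ℕ) : Finset (Finset (Finset (ℕ × ℕ))) :=
  ((Finset.range n ×ˢ Finset.range 2).powerset.powerset).filter
    (fun S => S.card = d ∧ (∀ x ∈ S, IsDomino n 2 x) ∧
      ∀ x ∈ S, ∀ y ∈ S, x ≠ y → NonBonding x y)

lemma mem_Pc {n d : ℕ} {S : Finset (Finset (ℕ × ℕ))} :
    S ∈ Pc n d ↔ S.card = d ∧ (∀ x ∈ S, IsDomino n 2 x) ∧
      ∀ x ∈ S, ∀ y ∈ S, x ≠ y → NonBonding x y := by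
  classical
  simp only [Pc, Finset.mem_filter, Finset.mem_powerset, and_iff_right_iff_imp]
  intro h
  intro x hx
  simp only [Finset.mem_powerset]
  intro p hp
  have := (h.2.1 x hx).2.1 p hp
  simp [Finset.mem_product, this.1, this.2]

lemma nbD_eq (n d : ℕ) : nbD n 2 d = (Pc n d).card := by
  have : {S : Finset (Finset (ℕ × ℕ)) | S.card = d ∧ (∀ x ∈ S, IsDomino n 2 x) ∧
      ∀ x ∈ S, ∀ y ∈ S, x ≠ y → NonBonding x y} = ↑(Pc n d) := by
    ext S; simp [mem_Pc]
  rw [nbD, this, Set.ncard_coe_finset]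

end NBD

namespace NBD
open Finset

lemma cellDist_comm (p q : ℕ × ℕ) : cellDist p q = cellDist q p := by
  unfold cellDist; omega

lemma nb_symm {x y : Finset (ℕ × ℕ)} (h : NonBonding x y) : NonBonding y x :=
  fun p hp q hq => (cellDist_comm p q) ▸ h q hq p hp

lemma row_lt {n d : ℕ} {S : Finset (Finset (ℕ × ℕ))} {x : Finset (ℕ × ℕ)} {p : ℕ × ℕ}
    (hS : S ∈ Pc n d) (hx : x ∈ S) (hp : p ∈ x) : p.1 < n ∧ p.2 < 2 :=
  ((mem_Pc.mp hS).2.1 x hx).2.1 p hp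

lemma Hd_notMem {n d : ℕ} {T : Finset (Finset (ℕ × ℕ))} (hT : T ∈ Pc n d)
    {i : ℕ} (hi : n ≤ i) : Hd i ∉ T := by
  intro h
  have := (row_lt hT h (show ((i:ℕ),(0:ℕ)) ∈ Hd i by simp [Hd])).1
  omega

lemma Vd_notMem {n d : ℕ} {T : Finset (Finset (ℕ × ℕ))} (hT : T ∈ Pc n d)
    {i j : ℕ} (hi : n ≤ i + 1) : Vd i j ∉ T := by
  intro h
  have := (row_lt hT h (show ((i+1:ℕ),j) ∈ Vd i j by simp [Vd])).1
  omega

lemma Pc_mono {n m d : ℕ} (h : n ≤ m) : Pc n d ⊆ Pc m d := by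
  intro S hS
  obtain ⟨h1, h2, h3⟩ := mem_Pc.mp hS
  exact mem_Pc.mpr ⟨h1, fun x hx => isDomino_mono (h2 x hx) h, h3⟩

/-- a domino touching the top row `n+1` of an `(n+2)`-row board is one of three. -/
lemma top_row {n d : ℕ} {S : Finset (Finset (ℕ × ℕ))} {x : Finset (ℕ × ℕ)} {p : ℕ × ℕ}
    (hS : S ∈ Pc (n+2) d) (hx : x ∈ S) (hp : p ∈ x) (hrow : p.1 = n+1) :
    x = Hd (n+1) ∨ x = Vd n 0 ∨ x = Vd n 1 := by
  rcases domino_cases ((mem_Pc.mp hS).2.1 x hx) with ⟨i, hi, rfl⟩ | ⟨i, j, hi, hj, rfl⟩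
  · rcases mem_Hd.mp hp with rfl | rfl <;> simp_all
  · rcases mem_Vd.mp hp with rfl | rfl <;> simp only at hrow
    · omega
    · have : i = n := by omega
      subst this
      interval_cases j
      · exact Or.inr (Or.inl rfl)
      · exact Or.inr (Or.inr rfl)

lemma insert_injOn {A : Finset (ℕ × ℕ)} {𝒯 : Finset (Finset (Finset (ℕ × ℕ)))}
    (h : ∀ T ∈ 𝒯, A ∉ T) : Set.InjOn (insert A) (𝒯 : Set (Finset (Finset (ℕ × ℕ)))) := by
  intro a ha b hb hab
  rw [← Finset.erase_insert (h a ha), hab, Finset.erase_insert (h b hb)]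

open scoped Classical in
/-- configurations on an `(n+2)`-row board containing the top vertical domino in column j -/
noncomputable def Bc (n d j : ℕ) : Finset (Finset (Finset (ℕ × ℕ))) :=
  (Pc (n+2) d).filter (fun S => Vd n j ∈ S)

lemma Hd_ne_Vd {i i' j : ℕ} (h : i' < i) : Hd i ≠ Vd i' j := by
  intro h'
  have : ((i':ℕ), j) ∈ Hd i := h' ▸ (by simp [Vd])
  rcases mem_Hd.mp this with h'' | h'' <;> simp_all

lemma Vd_ne_Vd {i : ℕ} : Vd i 0 ≠ Vd i 1 := by
  intro h'
  have : ((i:ℕ), (0:ℕ)) ∈ Vd i 1 := h' ▸ (by simp [Vd])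
  rcases mem_Vd.mp this with h'' | h'' <;> simp_all

end NBD

namespace NBD
open Finset

open scoped Classical in
lemma Hset_eq (n d : ℕ) :
    (Pc (n+2) (d+1)).filter (fun S => Hd (n+1) ∈ S) = (Pc n d).image (insert (Hd (n+1))) := by
  ext S
  simp only [Finset.mem_filter, Finset.mem_image]
  constructor
  · rintro ⟨hS, hH⟩
    obtain ⟨hcard, hdom, hnb⟩ := mem_Pc.mp hS
    refine ⟨S.erase (Hd (n+1)), mem_Pc.mpr ⟨?_, ?_, ?_⟩, Finset.insert_erase hH⟩
    · simp [Finset.card_erase_of_mem hH, hcard]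
    · intro x hx
      have hxS := Finset.mem_of_mem_erase hx
      have hne := Finset.ne_of_mem_erase hx
      obtain ⟨c2, cb, cd⟩ := hdom x hxS
      refine ⟨c2, ?_, cd⟩
      intro p hp
      obtain ⟨p1, p2⟩ := p
      have hb := cb (p1, p2) hp
      simp only at hb
      have nb := hnb x hxS (Hd (n+1)) hH hne
      have d0 := nb (p1, p2) hp (n+1, 0) (by simp [Hd])
      have d1 := nb (p1, p2) hp (n+1, 1) (by simp [Hd])
      rw [cellDist_mk] at d0 d1
      constructor <;> simp only <;> omega
    · intro x hx y hy hxy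
      exact hnb x (Finset.mem_of_mem_erase hx) y (Finset.mem_of_mem_erase hy) hxy
  · rintro ⟨T, hT, rfl⟩
    obtain ⟨hcard, hdom, hnb⟩ := mem_Pc.mp hT
    have hHT : Hd (n+1) ∉ T := Hd_notMem hT (by omega)
    have hnbH : ∀ x ∈ T, NonBonding (Hd (n+1)) x := by
      intro x hx p hp q hq
      obtain ⟨q1, q2⟩ := q
      have hb := (hdom x hx).2.1 (q1, q2) hq
      simp only at hb
      rcases mem_Hd.mp hp with rfl | rfl <;> rw [cellDist_mk] <;> omega
    refine ⟨mem_Pc.mpr ⟨?_, ?_, ?_⟩, Finset.mem_insert_self _ _⟩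
    · rw [Finset.card_insert_of_notMem hHT, hcard]
    · intro x hx
      rcases Finset.mem_insert.mp hx with rfl | hx
      · exact isDomino_Hd (by omega)
      · exact isDomino_mono (hdom x hx) (by omega)
    · intro x hx y hy hxy
      rcases Finset.mem_insert.mp hx with rfl | hx <;>
        rcases Finset.mem_insert.mp hy with rfl | hy
      · exact absurd rfl hxy
      · exact hnbH y hy
      · exact nb_symm (hnbH x hx)
      · exact hnb x hx y hy hxy

end NBD

namespace NBD
open Finset

open scoped Classical in
lemma Bc_eq (n d j : ℕ) (hj : j < 2) :
    Bc (n+2) (d+1) j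
      = ((Pc (n+2) d).filter (fun S => ∀ x ∈ S, ((n+1:ℕ),j) ∉ x)).image
          (insert (Vd (n+2) j)) := by
  ext S
  simp only [Bc, Finset.mem_filter, Finset.mem_image]
  constructor
  · rintro ⟨hS, hV⟩
    obtain ⟨hcard, hdom, hnb⟩ := mem_Pc.mp hS
    refine ⟨S.erase (Vd (n+2) j), ⟨mem_Pc.mpr ⟨?_, ?_, ?_⟩, ?_⟩,
      Finset.insert_erase hV⟩
    · simp [Finset.card_erase_of_mem hV, hcard]
    · intro x hx
      have hxS := Finset.mem_of_mem_erase hx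
      have hne := Finset.ne_of_mem_erase hx
      obtain ⟨c2, cb, cd⟩ := hdom x hxS
      refine ⟨c2, ?_, cd⟩
      intro p hp
      obtain ⟨p1, p2⟩ := p
      have hb := cb (p1, p2) hp
      simp only at hb
      have nb := hnb x hxS (Vd (n+2) j) hV hne
      have d0 := nb (p1, p2) hp (n+2, j) (by simp [Vd])
      have d1 := nb (p1, p2) hp (n+3, j) (by simp [Vd])
      rw [cellDist_mk] at d0 d1
      constructor <;> simp only <;> omega
    · intro x hx y hy hxy
      exact hnb x (Finset.mem_of_mem_erase hx) y (Finset.mem_of_mem_erase hy) hxy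
    · intro x hx hmem
      have hxS := Finset.mem_of_mem_erase hx
      have hne := Finset.ne_of_mem_erase hx
      have nb := hnb x hxS (Vd (n+2) j) hV hne
      have d0 := nb (n+1, j) hmem (n+2, j) (by simp [Vd])
      rw [cellDist_mk] at d0
      omega
  · rintro ⟨T, hT', rfl⟩
    obtain ⟨hT, havoid⟩ := hT'
    obtain ⟨hcard, hdom, hnb⟩ := mem_Pc.mp hT
    have hVT : Vd (n+2) j ∉ T := Vd_notMem hT (by omega)
    have hnbV : ∀ x ∈ T, NonBonding (Vd (n+2) j) x := by
      intro x hx p hp q hq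
      obtain ⟨q1, q2⟩ := q
      have hb := (hdom x hx).2.1 (q1, q2) hq
      simp only at hb
      have hne : ¬(q1 = n+1 ∧ q2 = j) := by
        intro ⟨h1, h2⟩
        exact havoid x hx (h1 ▸ h2 ▸ hq)
      rcases mem_Vd.mp hp with rfl | rfl <;> rw [cellDist_mk] <;> omega
    refine ⟨mem_Pc.mpr ⟨?_, ?_, ?_⟩, Finset.mem_insert_self _ _⟩
    · rw [Finset.card_insert_of_notMem hVT, hcard]
    · intro x hx
      rcases Finset.mem_insert.mp hx with rfl | hx
      · exact isDomino_Vd (by omega) hj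
      · exact isDomino_mono (hdom x hx) (by omega)
    · intro x hx y hy hxy
      rcases Finset.mem_insert.mp hx with rfl | hx <;>
        rcases Finset.mem_insert.mp hy with rfl | hy
      · exact absurd rfl hxy
      · exact hnbV y hy
      · exact nb_symm (hnbV x hx)
      · exact hnb x hx y hy hxy

end NBD

namespace NBD
open Finset

lemma mem_Pc_pred {n d : ℕ} {S : Finset (Finset (ℕ × ℕ))} (hS : S ∈ Pc (n+2) d)
    (h : ∀ x ∈ S, ∀ p ∈ x, p.1 ≠ n+1) : S ∈ Pc (n+1) d := by
  obtain ⟨hcard, hdom, hnb⟩ := mem_Pc.mp hS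
  refine mem_Pc.mpr ⟨hcard, ?_, hnb⟩
  intro x hx
  obtain ⟨c2, cb, cd⟩ := hdom x hx
  refine ⟨c2, ?_, cd⟩
  intro p hp
  have h1 := cb p hp
  have h2 := h x hx p hp
  exact ⟨by omega, h1.2⟩

open scoped Classical in
lemma C_eq (n d j k : ℕ) (hj : j < 2) (hk : k < 2) (hjk : j ≠ k) :
    (Pc (n+2) d).filter (fun S => ∀ x ∈ S, ((n+1:ℕ),j) ∉ x) = Pc (n+1) d ∪ Bc n d k := by
  ext S
  simp only [Finset.mem_filter, Finset.mem_union, Bc]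
  constructor
  · rintro ⟨hS, havoid⟩
    by_cases htop : ∃ x ∈ S, ∃ p ∈ x, p.1 = n+1
    · obtain ⟨x, hx, p, hp, hrow⟩ := htop
      right
      refine ⟨hS, ?_⟩
      rcases top_row hS hx hp hrow with rfl | rfl | rfl
      · exact absurd (show ((n+1:ℕ),j) ∈ Hd (n+1) by interval_cases j <;> simp [Hd])
          (havoid _ hx)
      · have : k = 0 := by
          rcases (by omega : j = 0 ∨ j = 1) with rfl | rfl
          · exact absurd (show ((n+1:ℕ),0) ∈ Vd n 0 by simp [Vd]) (havoid _ hx)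
          · omega
        subst this; exact hx
      · have : k = 1 := by
          rcases (by omega : j = 0 ∨ j = 1) with rfl | rfl
          · omega
          · exact absurd (show ((n+1:ℕ),1) ∈ Vd n 1 by simp [Vd]) (havoid _ hx)
        subst this; exact hx
    · push_neg at htop
      exact Or.inl (mem_Pc_pred hS htop)
  · rintro (hS | ⟨hS2, hV⟩)
    · refine ⟨Pc_mono (by omega) hS, ?_⟩
      intro x hx hmem
      have := (row_lt hS hx hmem).1
      simp only at this
      omega
    · refine ⟨hS2, ?_⟩
      intro x hx hmem
      by_cases hxV : x = Vd n k
      · subst hxV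
        rcases mem_Vd.mp hmem with h' | h' <;> rw [Prod.mk.injEq] at h' <;> omega
      · have nb := (mem_Pc.mp hS2).2.2 x hx (Vd n k) hV hxV
        have := nb (n+1,j) hmem (n+1,k) (by simp [Vd])
        rw [cellDist_mk] at this
        omega

end NBD

namespace NBD
open Finset

open scoped Classical in
lemma disj_P_B (n d k : ℕ) : Disjoint (Pc (n+1) d) (Bc n d k) := by
  rw [Finset.disjoint_left]
  intro S hS hS'
  have hV : Vd n k ∈ S := (Finset.mem_filter.mp hS').2
  have := (row_lt hS hV (show ((n+1:ℕ),k) ∈ Vd n k by simp [Vd])).1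
  omega

open scoped Classical in
lemma disj_H_B (n d j : ℕ) (hj : j < 2) :
    Disjoint ((Pc (n+2) d).filter (fun S => Hd (n+1) ∈ S)) (Bc n d j) := by
  rw [Finset.disjoint_left]
  intro S hS hS'
  have hH := (Finset.mem_filter.mp hS).2
  have hV := (Finset.mem_filter.mp hS').2
  have hPc := (Finset.mem_filter.mp hS).1
  have hne : Hd (n+1) ≠ Vd n j := Hd_ne_Vd (by omega)
  have nb := (mem_Pc.mp hPc).2.2 _ hH _ hV hne
  have := nb (n+1, j) (by rcases (by omega : j = 0 ∨ j = 1) with rfl | rfl <;> simp [Hd])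
    (n+1, j) (by simp [Vd])
  rw [cellDist_mk] at this
  omega

open scoped Classical in
lemma disj_B_B (n d : ℕ) : Disjoint (Bc n d 0) (Bc n d 1) := by
  rw [Finset.disjoint_left]
  intro S hS hS'
  have hV0 := (Finset.mem_filter.mp hS).2
  have hV1 := (Finset.mem_filter.mp hS').2
  have hPc := (Finset.mem_filter.mp hS).1
  have nb := (mem_Pc.mp hPc).2.2 _ hV0 _ hV1 Vd_ne_Vd
  have := nb (n+1, 0) (by simp [Vd]) (n+1, 1) (by simp [Vd])
  rw [cellDist_mk] at this
  omega

open scoped Classical in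
lemma L1 (n d : ℕ) :
    (Pc (n+2) (d+1)).card = (Pc (n+1) (d+1)).card + (Pc n d).card
      + (Bc n (d+1) 0).card + (Bc n (d+1) 1).card := by
  classical
  set Hs := (Pc (n+2) (d+1)).filter (fun S => Hd (n+1) ∈ S) with hHs
  have hcover : Pc (n+2) (d+1)
      = Pc (n+1) (d+1) ∪ (Hs ∪ (Bc n (d+1) 0 ∪ Bc n (d+1) 1)) := by
    ext S
    constructor
    · intro hS
      by_cases htop : ∃ x ∈ S, ∃ p ∈ x, p.1 = n+1
      · obtain ⟨x, hx, p, hp, hrow⟩ := htop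
        rcases top_row hS hx hp hrow with rfl | rfl | rfl
        · exact Finset.mem_union_right _ (Finset.mem_union_left _
            (Finset.mem_filter.mpr ⟨hS, hx⟩))
        · exact Finset.mem_union_right _ (Finset.mem_union_right _
            (Finset.mem_union_left _ (Finset.mem_filter.mpr ⟨hS, hx⟩)))
        · exact Finset.mem_union_right _ (Finset.mem_union_right _
            (Finset.mem_union_right _ (Finset.mem_filter.mpr ⟨hS, hx⟩)))
      · push_neg at htop
        exact Finset.mem_union_left _ (mem_Pc_pred hS htop)
    · intro hS
      rcases Finset.mem_union.mp hS with h | h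
      · exact Pc_mono (by omega) h
      · rcases Finset.mem_union.mp h with h | h
        · exact (Finset.mem_filter.mp h).1
        · rcases Finset.mem_union.mp h with h | h <;>
            exact (Finset.mem_filter.mp h).1
  have d3 : Disjoint (Bc n (d+1) 0) (Bc n (d+1) 1) := disj_B_B n (d+1)
  have d2 : Disjoint Hs (Bc n (d+1) 0 ∪ Bc n (d+1) 1) :=
    Finset.disjoint_union_right.mpr ⟨disj_H_B n (d+1) 0 (by omega),
      disj_H_B n (d+1) 1 (by omega)⟩
  have d1 : Disjoint (Pc (n+1) (d+1)) (Hs ∪ (Bc n (d+1) 0 ∪ Bc n (d+1) 1)) := by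
    refine Finset.disjoint_union_right.mpr ⟨?_, Finset.disjoint_union_right.mpr
      ⟨disj_P_B n (d+1) 0, disj_P_B n (d+1) 1⟩⟩
    rw [Finset.disjoint_left]
    intro S hS hS'
    exact Hd_notMem hS (le_refl (n+1)) (Finset.mem_filter.mp hS').2
  have hHcard : Hs.card = (Pc n d).card := by
    rw [hHs, Hset_eq n d]
    exact Finset.card_image_of_injOn (insert_injOn (fun T hT => Hd_notMem hT (by omega)))
  rw [hcover, Finset.card_union_of_disjoint d1, Finset.card_union_of_disjoint d2,
    Finset.card_union_of_disjoint d3, hHcard]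
  omega

open scoped Classical in
lemma L2 (n d j k : ℕ) (hj : j < 2) (hk : k < 2) (hjk : j ≠ k) :
    (Bc (n+2) (d+1) j).card = (Pc (n+1) d).card + (Bc n d k).card := by
  rw [Bc_eq n d j hj,
    Finset.card_image_of_injOn (insert_injOn (fun T hT => Vd_notMem
      (Finset.mem_filter.mp hT).1 (by omega))),
    C_eq n d j k hj hk hjk,
    Finset.card_union_of_disjoint (disj_P_B n d k)]

end NBD

theorem nbD_col2_rec (r d : ℕ) (hr : 4 ≤ r) (hd : 2 ≤ d) :
    (nbD r 2 d : ℤ) = nbD (r - 1) 2 d + 2 * nbD (r - 2) 2 (d - 1)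
      + nbD (r - 3) 2 (d - 1) - nbD (r - 4) 2 (d - 2) := by
  obtain ⟨n, rfl⟩ : ∃ n, r = n + 4 := ⟨r - 4, by omega⟩
  obtain ⟨e, rfl⟩ : ∃ e, d = e + 2 := ⟨d - 2, by omega⟩
  have e1 : n + 4 - 1 = n + 3 := by omega
  have e2 : n + 4 - 2 = n + 2 := by omega
  have e3 : n + 4 - 3 = n + 1 := by omega
  have e4 : n + 4 - 4 = n := by omega
  have f1 : e + 2 - 1 = e + 1 := by omega
  have f2 : e + 2 - 2 = e := by omega
  rw [e1, e2, e3, e4, f1, f2]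
  have key : (NBD.Pc (n+4) (e+2)).card + (NBD.Pc n e).card
      = (NBD.Pc (n+3) (e+2)).card + 2 * (NBD.Pc (n+2) (e+1)).card
        + (NBD.Pc (n+1) (e+1)).card := by
    have h1 : (NBD.Pc (n+4) (e+2)).card = (NBD.Pc (n+3) (e+2)).card
        + (NBD.Pc (n+2) (e+1)).card + (NBD.Bc (n+2) (e+2) 0).card
        + (NBD.Bc (n+2) (e+2) 1).card := NBD.L1 (n+2) (e+1)
    have h2 : (NBD.Bc (n+2) (e+2) 0).card
        = (NBD.Pc (n+1) (e+1)).card + (NBD.Bc n (e+1) 1).card :=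
      NBD.L2 n (e+1) 0 1 (by omega) (by omega) (by omega)
    have h3 : (NBD.Bc (n+2) (e+2) 1).card
        = (NBD.Pc (n+1) (e+1)).card + (NBD.Bc n (e+1) 0).card :=
      NBD.L2 n (e+1) 1 0 (by omega) (by omega) (by omega)
    have h4 := NBD.L1 n e
    omega
  have g0 := NBD.nbD_eq (n+4) (e+2)
  have g1 := NBD.nbD_eq (n+3) (e+2)
  have g2 := NBD.nbD_eq (n+2) (e+1)
  have g3 := NBD.nbD_eq (n+1) (e+1)
  have g4 := NBD.nbD_eq n e
  rw [g0, g1, g2, g3, g4]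
  omega
end

section
/- Let A(r) = Σ_d D(r,2,d) be the total number of arrangements of pairwise non-bonding dominoes (of any number) on the r×2 board. Then for all r ≥ 4, A(r) = A(r−1) + 2·A(r−2) + A(r−3) − A(r−4). (Equivalently, Σ_r A(r) x^r = (1+x+x²−x³)/(1−x−2x²−x³+x⁴).) -/
/-- `A r` is the total number of arrangements of pairwise non-bonding
dominoes (of any number) on the `r × 2` board; the sum has finite support. -/
noncomputable def totalCol2 (r : ℕ) : ℕ := ∑ᶠ d : ℕ, nbD r 2 d

open Finset
namespace Col2

lemma cellDist_comm (p q : ℕ × ℕ) : cellDist p q = cellDist q p := by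
  simp only [cellDist]; omega

noncomputable section

def grid (r : ℕ) : Finset (ℕ × ℕ) := Finset.range r ×ˢ Finset.range 2

lemma mem_grid {r : ℕ} {p : ℕ × ℕ} : p ∈ grid r ↔ p.1 < r ∧ p.2 < 2 := by
  simp [grid]

def arr (g : Finset (ℕ × ℕ)) : Finset (Finset (Finset (ℕ × ℕ))) :=
  g.powerset.powerset.filter (fun S =>
    (∀ x ∈ S, x.card = 2 ∧ ∀ p ∈ x, ∀ q ∈ x, p ≠ q → cellDist p q = 1) ∧
    ∀ x ∈ S, ∀ y ∈ S, x ≠ y → ∀ p ∈ x, ∀ q ∈ y, 2 ≤ cellDist p q)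

lemma mem_arr {g : Finset (ℕ × ℕ)} {S : Finset (Finset (ℕ × ℕ))} :
    S ∈ arr g ↔ (∀ x ∈ S, x ⊆ g) ∧
      (∀ x ∈ S, x.card = 2 ∧ ∀ p ∈ x, ∀ q ∈ x, p ≠ q → cellDist p q = 1) ∧
      ∀ x ∈ S, ∀ y ∈ S, x ≠ y → ∀ p ∈ x, ∀ q ∈ y, 2 ≤ cellDist p q := by
  constructor
  · intro h
    obtain ⟨hp, h1, h2⟩ := Finset.mem_filter.mp h
    exact ⟨fun x hx => Finset.mem_powerset.mp (Finset.mem_powerset.mp hp hx), h1, h2⟩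
  · rintro ⟨h0, h1, h2⟩
    exact Finset.mem_filter.mpr
      ⟨Finset.mem_powerset.mpr (fun x hx => Finset.mem_powerset.mpr (h0 x hx)), h1, h2⟩

lemma arr_filter_subset {g g' : Finset (ℕ × ℕ)} (h : g' ⊆ g) :
    (arr g).filter (fun S => ∀ x ∈ S, x ⊆ g') = arr g' := by
  ext S
  simp only [Finset.mem_filter, mem_arr]
  constructor
  · rintro ⟨⟨h1, h2, h3⟩, h4⟩
    exact ⟨h4, h2, h3⟩
  · rintro ⟨h1, h2, h3⟩
    exact ⟨⟨fun x hx => (h1 x hx).trans h, h2, h3⟩, h1⟩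

lemma card_arr_filter_mem {g D : Finset (ℕ × ℕ)} (hDg : D ⊆ g) (hc : D.card = 2)
    (hd : ∀ p ∈ D, ∀ q ∈ D, p ≠ q → cellDist p q = 1) :
    ((arr g).filter (fun S => D ∈ S)).card
      = (arr (g.filter (fun p => ∀ q ∈ D, 2 ≤ cellDist p q))).card := by
  set g' := g.filter (fun p => ∀ q ∈ D, 2 ≤ cellDist p q) with hg'
  have hDnot : ¬ D ⊆ g' := by
    intro hx
    have hne : D.Nonempty := by rw [← Finset.card_pos, hc]; norm_num
    obtain ⟨p, hp⟩ := hne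
    have := (Finset.mem_filter.mp (hx hp)).2 p hp
    simp [cellDist] at this
  apply Finset.card_bij' (fun S _ => S.erase D) (fun S _ => insert D S)
  · intro S hS
    exact Finset.insert_erase (Finset.mem_filter.mp hS).2
  · intro S hS
    apply Finset.erase_insert
    intro hDS
    exact hDnot ((mem_arr.mp hS).1 D hDS)

  · intro S hS
    obtain ⟨hS, hD⟩ := Finset.mem_filter.mp hS
    obtain ⟨h1, h2, h3⟩ := mem_arr.mp hS
    refine mem_arr.mpr ⟨?_, ?_, ?_⟩
    · intro x hx p hp
      obtain ⟨hxD, hxS⟩ := Finset.mem_erase.mp hx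
      exact Finset.mem_filter.mpr ⟨h1 x hxS hp, fun q hq => h3 x hxS D hD hxD p hp q hq⟩
    · intro x hx; exact h2 x (Finset.mem_erase.mp hx).2
    · intro x hx y hy
      exact h3 x (Finset.mem_erase.mp hx).2 y (Finset.mem_erase.mp hy).2
  · intro S hS
    obtain ⟨h1, h2, h3⟩ := mem_arr.mp hS
    refine Finset.mem_filter.mpr ⟨mem_arr.mpr ⟨?_, ?_, ?_⟩, Finset.mem_insert_self _ _⟩
    · intro x hx
      rcases Finset.mem_insert.mp hx with rfl | hx
      · exact hDg
      · exact (h1 x hx).trans (Finset.filter_subset _ _)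
    · intro x hx
      rcases Finset.mem_insert.mp hx with rfl | hx
      · exact ⟨hc, hd⟩
      · exact h2 x hx
    · intro x hx y hy hxy p hp q hq
      rcases Finset.mem_insert.mp hx with hxd | hx <;>
        rcases Finset.mem_insert.mp hy with hyd | hy
      · exact absurd (hxd.trans hyd.symm) hxy
      · rw [hxd] at hp
        rw [cellDist_comm]
        exact (Finset.mem_filter.mp (h1 y hy hq)).2 p hp
      · rw [hyd] at hq
        exact (Finset.mem_filter.mp (h1 x hx hp)).2 q hq
      · exact h3 x hx y hy hxy p hp q hq

def Hdom (n : ℕ) : Finset (ℕ × ℕ) := {(n+1, 0), (n+1, 1)}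
def V0dom (n : ℕ) : Finset (ℕ × ℕ) := {(n, 0), (n+1, 0)}
def V1dom (n : ℕ) : Finset (ℕ × ℕ) := {(n, 1), (n+1, 1)}

def Bset (n : ℕ) : Finset (ℕ × ℕ) := (grid n).erase (n-1, 0)
def Cset (n : ℕ) : Finset (ℕ × ℕ) := (grid n).erase (n-1, 1)

lemma mem_Bset {n : ℕ} {p : ℕ × ℕ} :
    p ∈ Bset n ↔ (p.1 < n ∧ p.2 < 2) ∧ ¬(p.1 = n-1 ∧ p.2 = 0) := by
  obtain ⟨i, j⟩ := p
  simp only [Bset, Finset.mem_erase, mem_grid, ne_eq, Prod.mk.injEq]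
  tauto

lemma mem_Cset {n : ℕ} {p : ℕ × ℕ} :
    p ∈ Cset n ↔ (p.1 < n ∧ p.2 < 2) ∧ ¬(p.1 = n-1 ∧ p.2 = 1) := by
  obtain ⟨i, j⟩ := p
  simp only [Cset, Finset.mem_erase, mem_grid, ne_eq, Prod.mk.injEq]
  tauto

lemma pair_domino {a b : ℕ × ℕ} (hab : a ≠ b) (h1 : cellDist a b = 1) :
    (({a, b} : Finset (ℕ × ℕ)).card = 2 ∧
      ∀ p ∈ ({a, b} : Finset (ℕ × ℕ)), ∀ q ∈ ({a, b} : Finset (ℕ × ℕ)),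
        p ≠ q → cellDist p q = 1) := by
  refine ⟨Finset.card_pair hab, ?_⟩
  intro p hp q hq hpq
  simp only [Finset.mem_insert, Finset.mem_singleton] at hp hq
  rcases hp with rfl | rfl <;> rcases hq with rfl | rfl
  · exact absurd rfl hpq
  · exact h1
  · rw [cellDist_comm]; exact h1
  · exact absurd rfl hpq

lemma Hdom_prop (n : ℕ) : ((Hdom n).card = 2 ∧
    ∀ p ∈ Hdom n, ∀ q ∈ Hdom n, p ≠ q → cellDist p q = 1) :=
  pair_domino (by simp) (by simp [cellDist])

lemma V0dom_prop (n : ℕ) : ((V0dom n).card = 2 ∧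
    ∀ p ∈ V0dom n, ∀ q ∈ V0dom n, p ≠ q → cellDist p q = 1) :=
  pair_domino (by simp) (by simp [cellDist])

lemma V1dom_prop (n : ℕ) : ((V1dom n).card = 2 ∧
    ∀ p ∈ V1dom n, ∀ q ∈ V1dom n, p ≠ q → cellDist p q = 1) :=
  pair_domino (by simp) (by simp [cellDist])

lemma farH (n : ℕ) :
    (grid (n+2)).filter (fun p => ∀ q ∈ Hdom n, 2 ≤ cellDist p q) = grid n := by
  ext ⟨i, j⟩
  simp only [Finset.mem_filter, mem_grid, Hdom, Finset.mem_insert, Finset.mem_singleton,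
    forall_eq_or_imp, forall_eq, cellDist]
  omega

lemma farV0 (n : ℕ) :
    (grid (n+2)).filter (fun p => ∀ q ∈ V0dom n, 2 ≤ cellDist p q) = Bset n := by
  ext ⟨i, j⟩
  simp only [Finset.mem_filter, mem_grid, mem_Bset, V0dom, Finset.mem_insert,
    Finset.mem_singleton, forall_eq_or_imp, forall_eq, cellDist]
  omega

lemma farV1 (n : ℕ) :
    (grid (n+2)).filter (fun p => ∀ q ∈ V1dom n, 2 ≤ cellDist p q) = Cset n := by
  ext ⟨i, j⟩
  simp only [Finset.mem_filter, mem_grid, mem_Cset, V1dom, Finset.mem_insert,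
    Finset.mem_singleton, forall_eq_or_imp, forall_eq, cellDist]
  omega

lemma farV1B (n : ℕ) :
    (Bset (n+2)).filter (fun p => ∀ q ∈ V1dom n, 2 ≤ cellDist p q) = Cset n := by
  ext ⟨i, j⟩
  simp only [Finset.mem_filter, mem_Bset, mem_Cset, V1dom, Finset.mem_insert,
    Finset.mem_singleton, forall_eq_or_imp, forall_eq, cellDist]
  omega

lemma farV0C (n : ℕ) :
    (Cset (n+2)).filter (fun p => ∀ q ∈ V0dom n, 2 ≤ cellDist p q) = Bset n := by
  ext ⟨i, j⟩
  simp only [Finset.mem_filter, mem_Bset, mem_Cset, V0dom, Finset.mem_insert,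
    Finset.mem_singleton, forall_eq_or_imp, forall_eq, cellDist]
  omega

lemma pair_shape {n a1 a2 b1 b2 : ℕ} (ha1 : a1 < n+2) (ha2 : a2 < 2)
    (hb1 : b1 < n+2) (hb2 : b2 < 2) (htop : a1 = n+1 ∨ b1 = n+1)
    (hdist : (a1 - b1) + (b1 - a1) + ((a2 - b2) + (b2 - a2)) = 1) :
    ({(a1, a2), (b1, b2)} : Finset (ℕ × ℕ)) = Hdom n ∨
      ({(a1, a2), (b1, b2)} : Finset (ℕ × ℕ)) = V0dom n ∨
      ({(a1, a2), (b1, b2)} : Finset (ℕ × ℕ)) = V1dom n := by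
  have hsplit : (a1 = b1 ∧ (b2 = a2 + 1 ∨ a2 = b2 + 1)) ∨
      (a2 = b2 ∧ (b1 = a1 + 1 ∨ a1 = b1 + 1)) := by omega
  rcases hsplit with ⟨h, h' | h'⟩ | ⟨h, h' | h'⟩
  · have e1 : a1 = n + 1 := by omega
    have e2 : a2 = 0 := by omega
    have e3 : b1 = n + 1 := by omega
    have e4 : b2 = 1 := by omega
    subst e1; subst e2; subst e3; subst e4
    exact Or.inl rfl
  · have e1 : a1 = n + 1 := by omega
    have e2 : a2 = 1 := by omega
    have e3 : b1 = n + 1 := by omega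
    have e4 : b2 = 0 := by omega
    subst e1; subst e2; subst e3; subst e4
    exact Or.inl (Finset.pair_comm _ _)
  · have e1 : a1 = n := by omega
    have e3 : b1 = n + 1 := by omega
    subst e1; subst e3
    have h2 : a2 = 0 ∨ a2 = 1 := by omega
    rcases h2 with rfl | rfl
    · rw [← h]; exact Or.inr (Or.inl rfl)
    · rw [← h]; exact Or.inr (Or.inr rfl)
  · have e1 : a1 = n + 1 := by omega
    have e3 : b1 = n := by omega
    subst e1; subst e3
    have h2 : a2 = 0 ∨ a2 = 1 := by omega
    rcases h2 with rfl | rfl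
    · rw [← h]; exact Or.inr (Or.inl (Finset.pair_comm _ _))
    · rw [← h]; exact Or.inr (Or.inr (Finset.pair_comm _ _))

lemma top_shape (n : ℕ) {x : Finset (ℕ × ℕ)} (hx : x ⊆ grid (n+2)) (hc : x.card = 2)
    (hd : ∀ p ∈ x, ∀ q ∈ x, p ≠ q → cellDist p q = 1) (ht : ¬ x ⊆ grid (n+1)) :
    x = Hdom n ∨ x = V0dom n ∨ x = V1dom n := by
  obtain ⟨a, b, hab, rfl⟩ := Finset.card_eq_two.mp hc
  have ha := mem_grid.mp (hx (Finset.mem_insert_self a _))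
  have hb := mem_grid.mp (hx (Finset.mem_insert_of_mem (Finset.mem_singleton_self b)))
  have hdist : cellDist a b = 1 :=
    hd a (Finset.mem_insert_self a _) b
      (Finset.mem_insert_of_mem (Finset.mem_singleton_self b)) hab
  have htop : a.1 = n+1 ∨ b.1 = n+1 := by
    by_contra hcon
    push_neg at hcon
    apply ht
    intro p hp
    simp only [Finset.mem_insert, Finset.mem_singleton] at hp
    rcases hp with rfl | rfl <;> exact mem_grid.mpr ⟨by omega, by omega⟩
  obtain ⟨a1, a2⟩ := a
  obtain ⟨b1, b2⟩ := b
  simp only [cellDist] at hdist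
  simp only at ha hb htop
  exact pair_shape ha.1 ha.2 hb.1 hb.2 htop hdist

lemma Bset_subset_grid (n : ℕ) : Bset n ⊆ grid n := Finset.erase_subset _ _
lemma Cset_subset_grid (n : ℕ) : Cset n ⊆ grid n := Finset.erase_subset _ _

lemma top_shape_B (n : ℕ) {x : Finset (ℕ × ℕ)} (hx : x ⊆ Bset (n+2)) (hc : x.card = 2)
    (hd : ∀ p ∈ x, ∀ q ∈ x, p ≠ q → cellDist p q = 1) (ht : ¬ x ⊆ grid (n+1)) :
    x = V1dom n := by
  rcases top_shape n (hx.trans (Bset_subset_grid _)) hc hd ht with h | h | h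
  · exfalso
    have : ((n+1 : ℕ), (0 : ℕ)) ∈ Bset (n+2) := hx (by rw [h]; simp [Hdom])
    rw [mem_Bset] at this
    omega
  · exfalso
    have : ((n+1 : ℕ), (0 : ℕ)) ∈ Bset (n+2) := hx (by rw [h]; simp [V0dom])
    rw [mem_Bset] at this
    omega
  · exact h

lemma top_shape_C (n : ℕ) {x : Finset (ℕ × ℕ)} (hx : x ⊆ Cset (n+2)) (hc : x.card = 2)
    (hd : ∀ p ∈ x, ∀ q ∈ x, p ≠ q → cellDist p q = 1) (ht : ¬ x ⊆ grid (n+1)) :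
    x = V0dom n := by
  rcases top_shape n (hx.trans (Cset_subset_grid _)) hc hd ht with h | h | h
  · exfalso
    have : ((n+1 : ℕ), (1 : ℕ)) ∈ Cset (n+2) := hx (by rw [h]; simp [Hdom])
    rw [mem_Cset] at this
    omega
  · exact h
  · exfalso
    have : ((n+1 : ℕ), (1 : ℕ)) ∈ Cset (n+2) := hx (by rw [h]; simp [V1dom])
    rw [mem_Cset] at this
    omega

lemma grid_mono {m n : ℕ} (h : m ≤ n) : grid m ⊆ grid n := by
  intro p hp
  rw [mem_grid] at hp ⊢
  omega

lemma distinct_mem_absurd {g : Finset (ℕ × ℕ)} {S : Finset (Finset (ℕ × ℕ))}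
    (hS : S ∈ arr g) {D E : Finset (ℕ × ℕ)} (hD : D ∈ S) (hE : E ∈ S) (hne : D ≠ E)
    {p q : ℕ × ℕ} (hp : p ∈ D) (hq : q ∈ E) (hlt : cellDist p q < 2) : False := by
  have := (mem_arr.mp hS).2.2 D hD E hE hne p hp q hq
  omega

lemma Hdom_ne_V0dom (n : ℕ) : Hdom n ≠ V0dom n := by
  intro h
  have : ((n+1 : ℕ), (1 : ℕ)) ∈ V0dom n := h ▸ (by simp [Hdom])
  simp [V0dom, Prod.ext_iff] at this

lemma Hdom_ne_V1dom (n : ℕ) : Hdom n ≠ V1dom n := by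
  intro h
  have : ((n+1 : ℕ), (0 : ℕ)) ∈ V1dom n := h ▸ (by simp [Hdom])
  simp [V1dom, Prod.ext_iff] at this

lemma V0dom_ne_V1dom (n : ℕ) : V0dom n ≠ V1dom n := by
  intro h
  have : ((n : ℕ), (0 : ℕ)) ∈ V1dom n := h ▸ (by simp [V0dom])
  simp [V1dom, Prod.ext_iff] at this

lemma card_arr_grid (n : ℕ) :
    (arr (grid (n+2))).card = (arr (grid (n+1))).card + (arr (grid n)).card
      + (arr (Bset n)).card + (arr (Cset n)).card := by
  set T0 := (arr (grid (n+2))).filter (fun S => ∀ x ∈ S, x ⊆ grid (n+1)) with hT0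
  set TH := (arr (grid (n+2))).filter (fun S => Hdom n ∈ S) with hTH
  set TV0 := (arr (grid (n+2))).filter (fun S => V0dom n ∈ S) with hTV0
  set TV1 := (arr (grid (n+2))).filter (fun S => V1dom n ∈ S) with hTV1
  have cover : ∀ S ∈ arr (grid (n+2)),
      (∀ x ∈ S, x ⊆ grid (n+1)) ∨ Hdom n ∈ S ∨ V0dom n ∈ S ∨ V1dom n ∈ S := by
    intro S hS
    by_cases h0 : ∀ x ∈ S, x ⊆ grid (n+1)
    · exact Or.inl h0
    · push_neg at h0
      obtain ⟨x, hxS, hxns⟩ := h0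
      obtain ⟨h1, h2, h3⟩ := mem_arr.mp hS
      rcases top_shape n (h1 x hxS) (h2 x hxS).1 (h2 x hxS).2 hxns with h | h | h
      · exact Or.inr (Or.inl (h ▸ hxS))
      · exact Or.inr (Or.inr (Or.inl (h ▸ hxS)))
      · exact Or.inr (Or.inr (Or.inr (h ▸ hxS)))
  have hunion : arr (grid (n+2)) = (T0 ∪ TH) ∪ (TV0 ∪ TV1) := by
    ext S
    simp only [hT0, hTH, hTV0, hTV1, Finset.mem_union, Finset.mem_filter]
    constructor
    · intro hS
      rcases cover S hS with h | h | h | h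
      · exact Or.inl (Or.inl ⟨hS, h⟩)
      · exact Or.inl (Or.inr ⟨hS, h⟩)
      · exact Or.inr (Or.inl ⟨hS, h⟩)
      · exact Or.inr (Or.inr ⟨hS, h⟩)
    · rintro ((⟨h, _⟩ | ⟨h, _⟩) | (⟨h, _⟩ | ⟨h, _⟩)) <;> exact h
  have d0H : Disjoint T0 TH := by
    rw [Finset.disjoint_left]
    intro S hS1 hS2
    simp only [hT0, hTH, Finset.mem_filter] at hS1 hS2
    have hsub : Hdom n ⊆ grid (n+1) := hS1.2 (Hdom n) hS2.2
    have : ((n+1 : ℕ), (0 : ℕ)) ∈ grid (n+1) := hsub (by simp [Hdom])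
    rw [mem_grid] at this
    omega
  have d0V0 : Disjoint T0 TV0 := by
    rw [Finset.disjoint_left]
    intro S hS1 hS2
    simp only [hT0, hTV0, Finset.mem_filter] at hS1 hS2
    have hsub : V0dom n ⊆ grid (n+1) := hS1.2 (V0dom n) hS2.2
    have : ((n+1 : ℕ), (0 : ℕ)) ∈ grid (n+1) := hsub (by simp [V0dom])
    rw [mem_grid] at this
    omega
  have d0V1 : Disjoint T0 TV1 := by
    rw [Finset.disjoint_left]
    intro S hS1 hS2
    simp only [hT0, hTV1, Finset.mem_filter] at hS1 hS2
    have hsub : V1dom n ⊆ grid (n+1) := hS1.2 (V1dom n) hS2.2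
    have : ((n+1 : ℕ), (1 : ℕ)) ∈ grid (n+1) := hsub (by simp [V1dom])
    rw [mem_grid] at this
    omega
  have dHV0 : Disjoint TH TV0 := by
    rw [Finset.disjoint_left]
    intro S hS1 hS2
    simp only [hTH, hTV0, Finset.mem_filter] at hS1 hS2
    exact distinct_mem_absurd hS1.1 hS1.2 hS2.2 (Hdom_ne_V0dom n)
      (p := ((n+1 : ℕ), (0 : ℕ))) (q := ((n+1 : ℕ), (0 : ℕ)))
      (by simp [Hdom]) (by simp [V0dom]) (by simp [cellDist])
  have dHV1 : Disjoint TH TV1 := by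
    rw [Finset.disjoint_left]
    intro S hS1 hS2
    simp only [hTH, hTV1, Finset.mem_filter] at hS1 hS2
    exact distinct_mem_absurd hS1.1 hS1.2 hS2.2 (Hdom_ne_V1dom n)
      (p := ((n+1 : ℕ), (1 : ℕ))) (q := ((n+1 : ℕ), (1 : ℕ)))
      (by simp [Hdom]) (by simp [V1dom]) (by simp [cellDist])
  have dV0V1 : Disjoint TV0 TV1 := by
    rw [Finset.disjoint_left]
    intro S hS1 hS2
    simp only [hTV0, hTV1, Finset.mem_filter] at hS1 hS2
    exact distinct_mem_absurd hS1.1 hS1.2 hS2.2 (V0dom_ne_V1dom n)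
      (p := ((n+1 : ℕ), (0 : ℕ))) (q := ((n+1 : ℕ), (1 : ℕ)))
      (by simp [V0dom]) (by simp [V1dom]) (by simp [cellDist])
  have hcard : (arr (grid (n+2))).card = T0.card + TH.card + TV0.card + TV1.card := by
    rw [hunion, Finset.card_union_of_disjoint
        (by rw [Finset.disjoint_union_left]
            exact ⟨by rw [Finset.disjoint_union_right]; exact ⟨d0V0, d0V1⟩,
              by rw [Finset.disjoint_union_right]; exact ⟨dHV0, dHV1⟩⟩),
      Finset.card_union_of_disjoint d0H, Finset.card_union_of_disjoint dV0V1]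
    ring
  rw [hcard]
  have e0 : T0 = arr (grid (n+1)) := by
    rw [hT0]
    exact arr_filter_subset (grid_mono (Nat.le_succ (n+1)))
  have eH : TH.card = (arr (grid n)).card := by
    rw [hTH, card_arr_filter_mem (D := Hdom n) ?_ (Hdom_prop n).1 (Hdom_prop n).2, farH]
    intro p hp
    simp only [Hdom, Finset.mem_insert, Finset.mem_singleton] at hp
    rcases hp with rfl | rfl <;> exact mem_grid.mpr ⟨by omega, by omega⟩
  have eV0 : TV0.card = (arr (Bset n)).card := by
    rw [hTV0, card_arr_filter_mem (D := V0dom n) ?_ (V0dom_prop n).1 (V0dom_prop n).2, farV0]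
    intro p hp
    simp only [V0dom, Finset.mem_insert, Finset.mem_singleton] at hp
    rcases hp with rfl | rfl <;> exact mem_grid.mpr ⟨by omega, by omega⟩
  have eV1 : TV1.card = (arr (Cset n)).card := by
    rw [hTV1, card_arr_filter_mem (D := V1dom n) ?_ (V1dom_prop n).1 (V1dom_prop n).2, farV1]
    intro p hp
    simp only [V1dom, Finset.mem_insert, Finset.mem_singleton] at hp
    rcases hp with rfl | rfl <;> exact mem_grid.mpr ⟨by omega, by omega⟩
  rw [e0, eH, eV0, eV1]

lemma grid_subset_Bset (n : ℕ) : grid (n+1) ⊆ Bset (n+2) := by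
  intro p hp
  rw [mem_grid] at hp
  rw [mem_Bset]
  omega

lemma grid_subset_Cset (n : ℕ) : grid (n+1) ⊆ Cset (n+2) := by
  intro p hp
  rw [mem_grid] at hp
  rw [mem_Cset]
  omega

lemma card_arr_Bset (n : ℕ) :
    (arr (Bset (n+2))).card = (arr (grid (n+1))).card + (arr (Cset n)).card := by
  set T0 := (arr (Bset (n+2))).filter (fun S => ∀ x ∈ S, x ⊆ grid (n+1)) with hT0
  set TV1 := (arr (Bset (n+2))).filter (fun S => V1dom n ∈ S) with hTV1
  have cover : ∀ S ∈ arr (Bset (n+2)),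
      (∀ x ∈ S, x ⊆ grid (n+1)) ∨ V1dom n ∈ S := by
    intro S hS
    by_cases h0 : ∀ x ∈ S, x ⊆ grid (n+1)
    · exact Or.inl h0
    · push_neg at h0
      obtain ⟨x, hxS, hxns⟩ := h0
      obtain ⟨h1, h2, h3⟩ := mem_arr.mp hS
      exact Or.inr (top_shape_B n (h1 x hxS) (h2 x hxS).1 (h2 x hxS).2 hxns ▸ hxS)
  have hunion : arr (Bset (n+2)) = T0 ∪ TV1 := by
    ext S
    simp only [hT0, hTV1, Finset.mem_union, Finset.mem_filter]
    constructor
    · intro hS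
      rcases cover S hS with h | h
      · exact Or.inl ⟨hS, h⟩
      · exact Or.inr ⟨hS, h⟩
    · rintro (⟨h, _⟩ | ⟨h, _⟩) <;> exact h
  have hdisj : Disjoint T0 TV1 := by
    rw [Finset.disjoint_left]
    intro S hS1 hS2
    simp only [hT0, hTV1, Finset.mem_filter] at hS1 hS2
    have hsub : V1dom n ⊆ grid (n+1) := hS1.2 (V1dom n) hS2.2
    have : ((n+1 : ℕ), (1 : ℕ)) ∈ grid (n+1) := hsub (by simp [V1dom])
    rw [mem_grid] at this
    omega
  rw [hunion, Finset.card_union_of_disjoint hdisj]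
  have e0 : T0 = arr (grid (n+1)) := by
    rw [hT0]
    exact arr_filter_subset (grid_subset_Bset n)
  have eV1 : TV1.card = (arr (Cset n)).card := by
    rw [hTV1, card_arr_filter_mem (D := V1dom n) ?_ (V1dom_prop n).1 (V1dom_prop n).2, farV1B]
    intro p hp
    simp only [V1dom, Finset.mem_insert, Finset.mem_singleton] at hp
    rcases hp with rfl | rfl <;> (rw [mem_Bset]; constructor <;> omega)
  rw [e0, eV1]

lemma card_arr_Cset (n : ℕ) :
    (arr (Cset (n+2))).card = (arr (grid (n+1))).card + (arr (Bset n)).card := by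
  set T0 := (arr (Cset (n+2))).filter (fun S => ∀ x ∈ S, x ⊆ grid (n+1)) with hT0
  set TV0 := (arr (Cset (n+2))).filter (fun S => V0dom n ∈ S) with hTV0
  have cover : ∀ S ∈ arr (Cset (n+2)),
      (∀ x ∈ S, x ⊆ grid (n+1)) ∨ V0dom n ∈ S := by
    intro S hS
    by_cases h0 : ∀ x ∈ S, x ⊆ grid (n+1)
    · exact Or.inl h0
    · push_neg at h0
      obtain ⟨x, hxS, hxns⟩ := h0
      obtain ⟨h1, h2, h3⟩ := mem_arr.mp hS
      exact Or.inr (top_shape_C n (h1 x hxS) (h2 x hxS).1 (h2 x hxS).2 hxns ▸ hxS)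
  have hunion : arr (Cset (n+2)) = T0 ∪ TV0 := by
    ext S
    simp only [hT0, hTV0, Finset.mem_union, Finset.mem_filter]
    constructor
    · intro hS
      rcases cover S hS with h | h
      · exact Or.inl ⟨hS, h⟩
      · exact Or.inr ⟨hS, h⟩
    · rintro (⟨h, _⟩ | ⟨h, _⟩) <;> exact h
  have hdisj : Disjoint T0 TV0 := by
    rw [Finset.disjoint_left]
    intro S hS1 hS2
    simp only [hT0, hTV0, Finset.mem_filter] at hS1 hS2
    have hsub : V0dom n ⊆ grid (n+1) := hS1.2 (V0dom n) hS2.2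
    have : ((n+1 : ℕ), (0 : ℕ)) ∈ grid (n+1) := hsub (by simp [V0dom])
    rw [mem_grid] at this
    omega
  rw [hunion, Finset.card_union_of_disjoint hdisj]
  have e0 : T0 = arr (grid (n+1)) := by
    rw [hT0]
    exact arr_filter_subset (grid_subset_Cset n)
  have eV0 : TV0.card = (arr (Bset n)).card := by
    rw [hTV0, card_arr_filter_mem (D := V0dom n) ?_ (V0dom_prop n).1 (V0dom_prop n).2, farV0C]
    intro p hp
    simp only [V0dom, Finset.mem_insert, Finset.mem_singleton] at hp
    rcases hp with rfl | rfl <;> (rw [mem_Cset]; constructor <;> omega)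
  rw [e0, eV0]

lemma card_rec (m : ℕ) :
    (arr (grid (m+4))).card + (arr (grid m)).card
      = (arr (grid (m+3))).card + 2 * (arr (grid (m+2))).card + (arr (grid (m+1))).card := by
  have h1 := card_arr_grid (m+2)
  simp only [show m+2+2 = m+4 from rfl, show m+2+1 = m+3 from rfl] at h1
  have h2 := card_arr_grid m
  have h3 := card_arr_Bset m
  have h4 := card_arr_Cset m
  omega

lemma nbD_eq (r d : ℕ) :
    nbD r 2 d = ((arr (grid r)).filter (fun S => S.card = d)).card := by
  have hset : {S : Finset (Finset (ℕ × ℕ)) | S.card = d ∧ (∀ x ∈ S, IsDomino r 2 x) ∧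
      ∀ x ∈ S, ∀ y ∈ S, x ≠ y → NonBonding x y}
      = ↑((arr (grid r)).filter (fun S => S.card = d)) := by
    ext S
    simp only [Set.mem_setOf_eq, Finset.coe_filter, mem_arr, IsDomino, NonBonding,
      Set.mem_setOf_eq]
    constructor
    · rintro ⟨hcard, hdom, hnb⟩
      refine ⟨⟨?_, ?_, hnb⟩, hcard⟩
      · intro x hx p hp
        exact mem_grid.mpr ((hdom x hx).2.1 p hp)
      · intro x hx
        exact ⟨(hdom x hx).1, (hdom x hx).2.2⟩
    · rintro ⟨⟨h1, h2, h3⟩, hcard⟩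
      exact ⟨hcard, fun x hx =>
        ⟨(h2 x hx).1, fun p hp => mem_grid.mp (h1 x hx hp), (h2 x hx).2⟩, h3⟩
  rw [nbD, hset, Set.ncard_coe_finset]

lemma totalCol2_eq (r : ℕ) : totalCol2 r = (arr (grid r)).card := by
  rw [totalCol2]
  have hsupp : (Function.support fun d => nbD r 2 d)
      ⊆ ↑((arr (grid r)).image Finset.card) := by
    intro d hd
    rw [Function.mem_support, nbD_eq] at hd
    obtain ⟨S, hS⟩ := Finset.card_pos.mp (Nat.pos_of_ne_zero hd)
    obtain ⟨hS, hc⟩ := Finset.mem_filter.mp hS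
    exact Finset.mem_coe.mpr (Finset.mem_image.mpr ⟨S, hS, hc⟩)
  rw [finsum_eq_sum_of_support_subset _ hsupp]
  simp_rw [nbD_eq]
  exact (Finset.card_eq_sum_card_fiberwise
    (fun S hS => Finset.mem_image_of_mem Finset.card hS)).symm

end
end Col2

theorem totalCol2_rec (r : ℕ) (hr : 4 ≤ r) :
    (totalCol2 r : ℤ) = totalCol2 (r - 1) + 2 * totalCol2 (r - 2)
      + totalCol2 (r - 3) - totalCol2 (r - 4) := by
  obtain ⟨m, rfl⟩ : ∃ m, r = m + 4 := ⟨r - 4, by omega⟩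
  have h := Col2.card_rec m
  rw [show m + 4 - 1 = m + 3 from rfl, show m + 4 - 2 = m + 2 from rfl,
    show m + 4 - 3 = m + 1 from rfl, show m + 4 - 4 = m from rfl]
  simp only [Col2.totalCol2_eq]
  omega
end

section
/- For every natural number r, the number of ways to place 2 pairwise non-bonding dominoes on the r×2 board is D(r,2,2) = C(r−1,2) + 6·C(r−2,2) + 2·C(r−3,2), where C(n,k) denotes the binomial coefficient (taken to be 0 when n < k). In particular D(r,2,2) is a quadratic polynomial in r for r ≥ 3. -/
instance (r c : ℕ) (dom : Finset (ℕ × ℕ)) : Decidable (IsDomino r c dom) := by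
  unfold IsDomino; infer_instance

instance (d₁ d₂ : Finset (ℕ × ℕ)) : Decidable (NonBonding d₁ d₂) := by
  unfold NonBonding; infer_instance

/-- code `3i` ↦ horizontal domino in row `i`; `3i+1+j` ↦ vertical domino in column `j`
starting at row `i`. -/
def dcode (n : ℕ) : Finset (ℕ × ℕ) :=
  if n % 3 = 0 then {(n/3, 0), (n/3, 1)}
  else {(n/3, n % 3 - 1), (n/3 + 1, n % 3 - 1)}

lemma dcode0 (i : ℕ) : dcode (3*i) = {(i,0),(i,1)} := by
  simp [dcode, Nat.mul_mod_right, Nat.mul_div_cancel_left]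

lemma dcode1 (i : ℕ) : dcode (3*i+1) = {(i,0),(i+1,0)} := by
  have h1 : (3*i+1) % 3 = 1 := by omega
  have h2 : (3*i+1) / 3 = i := by omega
  simp [dcode, h1, h2]

lemma dcode2 (i : ℕ) : dcode (3*i+2) = {(i,1),(i+1,1)} := by
  have h1 : (3*i+2) % 3 = 2 := by omega
  have h2 : (3*i+2) / 3 = i := by omega
  simp [dcode, h1, h2]

lemma code_cases (n : ℕ) : (∃ i, n = 3*i) ∨ (∃ i, n = 3*i+1) ∨ (∃ i, n = 3*i+2) := by
  have h := Nat.div_add_mod n 3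
  have h2 : n % 3 < 3 := Nat.mod_lt _ (by norm_num)
  rcases Nat.lt_succ_iff_lt_or_eq.mp h2 with h3 | h3
  · rcases Nat.lt_succ_iff_lt_or_eq.mp h3 with h4 | h4
    · exact Or.inl ⟨n/3, by omega⟩
    · exact Or.inr (Or.inl ⟨n/3, by omega⟩)
  · exact Or.inr (Or.inr ⟨n/3, by omega⟩)

lemma dcode_inj : Function.Injective dcode := by
  intro a b h
  rcases code_cases a with ⟨i, rfl⟩ | ⟨i, rfl⟩ | ⟨i, rfl⟩ <;>
    rcases code_cases b with ⟨k, rfl⟩ | ⟨k, rfl⟩ | ⟨k, rfl⟩ <;>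
    simp only [dcode0, dcode1, dcode2] at h <;>
    rw [Finset.ext_iff] at h <;>
    simp only [Finset.mem_insert, Finset.mem_singleton, Prod.mk.injEq] at h <;>
    (have h1 := h (i,0); have h2 := h (i,1); have h3 := h (i+1,0); have h4 := h (i+1,1);
     have h5 := h (k,0); have h6 := h (k,1); have h7 := h (k+1,0); have h8 := h (k+1,1);
     simp [Prod.ext_iff] at h1 h2 h3 h4 h5 h6 h7 h8 <;>
     omega)

lemma cellDist_comm (p q : ℕ × ℕ) : cellDist p q = cellDist q p := by
  unfold cellDist; omega

lemma nonBonding_comm {d₁ d₂ : Finset (ℕ × ℕ)} (h : NonBonding d₁ d₂) : NonBonding d₂ d₁ :=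
  fun p hp q hq => cellDist_comm q p ▸ h q hq p hp

lemma isDomino0 {r i : ℕ} (hi : i < r) : IsDomino r 2 {(i,0),(i,1)} := by
  refine ⟨Finset.card_pair (by simp), ?_, ?_⟩ <;>
    simp [Prod.ext_iff, cellDist, Prod.forall] <;> omega

lemma isDomino1 {r i : ℕ} (hi : i + 1 < r) : IsDomino r 2 {(i,0),(i+1,0)} := by
  refine ⟨Finset.card_pair (by simp), ?_, ?_⟩ <;>
    simp [Prod.ext_iff, cellDist, Prod.forall] <;> omega

lemma isDomino2 {r i : ℕ} (hi : i + 1 < r) : IsDomino r 2 {(i,1),(i+1,1)} := by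
  refine ⟨Finset.card_pair (by simp), ?_, ?_⟩ <;>
    simp [Prod.ext_iff, cellDist, Prod.forall] <;> omega

lemma exists_code {r : ℕ} {d : Finset (ℕ × ℕ)} (h : IsDomino r 2 d) :
    ∃ n, n < 3*r ∧ dcode n = d := by
  obtain ⟨hcard, hbd, hdist⟩ := h
  obtain ⟨p, q, hpq, rfl⟩ := Finset.card_eq_two.mp hcard
  have hp := hbd p (by simp)
  have hq := hbd q (by simp)
  have hd := hdist p (by simp) q (by simp) hpq
  obtain ⟨p1, p2⟩ := p
  obtain ⟨q1, q2⟩ := q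
  simp only [cellDist] at hd
  simp only at hp hq
  -- case split
  rcases Nat.lt_or_ge p1 q1 with hlt | hge
  · -- vertical, p on top: q1 = p1+1, p2 = q2
    have h1 : q1 = p1 + 1 ∧ p2 = q2 := by omega
    obtain ⟨rfl, rfl⟩ := h1
    rcases Nat.lt_or_ge p2 1 with h2 | h2
    · have : p2 = 0 := by omega
      subst this
      exact ⟨3*p1+1, by omega, by rw [dcode1]⟩
    · have : p2 = 1 := by omega
      subst this
      exact ⟨3*p1+2, by omega, by rw [dcode2]⟩
  · rcases Nat.lt_or_ge q1 p1 with hlt2 | hge2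
    · -- vertical, q on top
      have h1 : p1 = q1 + 1 ∧ p2 = q2 := by omega
      obtain ⟨h1a, rfl⟩ := h1
      rcases Nat.lt_or_ge p2 1 with h2 | h2
      · have : p2 = 0 := by omega
        subst this
        exact ⟨3*q1+1, by omega, by rw [dcode1, h1a, Finset.pair_comm]⟩
      · have : p2 = 1 := by omega
        subst this
        exact ⟨3*q1+2, by omega, by rw [dcode2, h1a, Finset.pair_comm]⟩
    · -- horizontal
      have h1 : p1 = q1 := by omega
      subst h1
      rcases Nat.lt_or_ge p2 q2 with h2 | h2
      · have : p2 = 0 ∧ q2 = 1 := by omega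
        obtain ⟨rfl, rfl⟩ := this
        exact ⟨3*p1, by omega, by rw [dcode0]⟩
      · have : q2 = 0 ∧ p2 = 1 := by
          have : p2 ≠ q2 := fun hh => hpq (by simp [hh])
          omega
        obtain ⟨rfl, rfl⟩ := this
        exact ⟨3*p1, by omega, by rw [dcode0, Finset.pair_comm]⟩

lemma isDomino_dcode0 {r i : ℕ} : IsDomino r 2 (dcode (3*i)) ↔ i < r := by
  rw [dcode0]
  exact ⟨fun h => (h.2.1 (i,0) (by simp)).1, isDomino0⟩

lemma isDomino_dcode1 {r i : ℕ} : IsDomino r 2 (dcode (3*i+1)) ↔ i + 1 < r := by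
  rw [dcode1]
  exact ⟨fun h => (h.2.1 (i+1,0) (by simp)).1, isDomino1⟩

lemma isDomino_dcode2 {r i : ℕ} : IsDomino r 2 (dcode (3*i+2)) ↔ i + 1 < r := by
  rw [dcode2]
  exact ⟨fun h => (h.2.1 (i+1,1) (by simp)).1, isDomino2⟩

lemma nb00 {i k : ℕ} :
    NonBonding {(i,0),(i,1)} {(k,0),(k,1)} ↔ (i+2 ≤ k ∨ k+2 ≤ i) := by
  simp [NonBonding, cellDist, Prod.forall]; omega

lemma nb01 {i k : ℕ} :
    NonBonding {(i,0),(i,1)} {(k,0),(k+1,0)} ↔ (i+2 ≤ k ∨ k+3 ≤ i) := by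
  simp [NonBonding, cellDist, Prod.forall]; omega

lemma nb02 {i k : ℕ} :
    NonBonding {(i,0),(i,1)} {(k,1),(k+1,1)} ↔ (i+2 ≤ k ∨ k+3 ≤ i) := by
  simp [NonBonding, cellDist, Prod.forall]; omega

lemma nb10 {i k : ℕ} :
    NonBonding {(i,0),(i+1,0)} {(k,0),(k,1)} ↔ (i+3 ≤ k ∨ k+2 ≤ i) := by
  simp [NonBonding, cellDist, Prod.forall]; omega

lemma nb20 {i k : ℕ} :
    NonBonding {(i,1),(i+1,1)} {(k,0),(k,1)} ↔ (i+3 ≤ k ∨ k+2 ≤ i) := by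
  simp [NonBonding, cellDist, Prod.forall]; omega

lemma nb11 {i k : ℕ} :
    NonBonding {(i,0),(i+1,0)} {(k,0),(k+1,0)} ↔ (i+3 ≤ k ∨ k+3 ≤ i) := by
  simp [NonBonding, cellDist, Prod.forall]; omega

lemma nb22 {i k : ℕ} :
    NonBonding {(i,1),(i+1,1)} {(k,1),(k+1,1)} ↔ (i+3 ≤ k ∨ k+3 ≤ i) := by
  simp [NonBonding, cellDist, Prod.forall]; omega

lemma nb12 {i k : ℕ} :
    NonBonding {(i,0),(i+1,0)} {(k,1),(k+1,1)} ↔ (i+2 ≤ k ∨ k+2 ≤ i) := by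
  simp [NonBonding, cellDist, Prod.forall]; omega

lemma nb21 {i k : ℕ} :
    NonBonding {(i,1),(i+1,1)} {(k,0),(k+1,0)} ↔ (i+2 ≤ k ∨ k+2 ≤ i) := by
  simp [NonBonding, cellDist, Prod.forall]; omega

/-- the Finset of ordered code pairs representing 2-element sets of
non-bonding dominoes. -/
def TS (r : ℕ) : Finset (ℕ × ℕ) :=
  (Finset.range (3*r) ×ˢ Finset.range (3*r)).filter
    (fun p => p.1 < p.2 ∧ IsDomino r 2 (dcode p.1) ∧ IsDomino r 2 (dcode p.2) ∧
      NonBonding (dcode p.1) (dcode p.2))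

lemma nbD_eq_TS_card (r : ℕ) :
    {S : Finset (Finset (ℕ × ℕ)) | S.card = 2 ∧ (∀ x ∈ S, IsDomino r 2 x) ∧
      ∀ x ∈ S, ∀ y ∈ S, x ≠ y → NonBonding x y}.ncard = (TS r).card := by
  have hset : {S : Finset (Finset (ℕ × ℕ)) | S.card = 2 ∧ (∀ x ∈ S, IsDomino r 2 x) ∧
      ∀ x ∈ S, ∀ y ∈ S, x ≠ y → NonBonding x y}
      = ↑((TS r).image (fun p => ({dcode p.1, dcode p.2} : Finset (Finset (ℕ × ℕ))))) := by
    ext S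
    simp only [Set.mem_setOf_eq, Finset.coe_image, Set.mem_image, Finset.mem_coe]
    constructor
    · rintro ⟨hcard, hdom, hnb⟩
      obtain ⟨x, y, hxy, rfl⟩ := Finset.card_eq_two.mp hcard
      obtain ⟨a, ha, rfl⟩ := exists_code (hdom x (by simp))
      obtain ⟨b, hb, rfl⟩ := exists_code (hdom y (by simp))
      have hab : a ≠ b := fun h => hxy (by rw [h])
      rcases hab.lt_or_gt with hlt | hlt
      · refine ⟨(a, b), Finset.mem_filter.mpr ⟨Finset.mem_product.mpr ⟨by simpa, by simpa⟩,
          hlt, hdom _ (by simp), hdom _ (by simp), hnb _ (by simp) _ (by simp) hxy⟩, rfl⟩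
      · refine ⟨(b, a), Finset.mem_filter.mpr ⟨Finset.mem_product.mpr ⟨by simpa, by simpa⟩,
          hlt, hdom _ (by simp), hdom _ (by simp), hnb _ (by simp) _ (by simp) hxy.symm⟩, ?_⟩
        exact Finset.pair_comm _ _
    · rintro ⟨⟨a, b⟩, hp, rfl⟩
      obtain ⟨-, hlt, hda, hdb, hnb⟩ := Finset.mem_filter.mp hp
      have hne : dcode a ≠ dcode b := fun h => (Nat.ne_of_lt hlt) (dcode_inj h)
      refine ⟨Finset.card_pair hne, ?_, ?_⟩
      · intro x hx
        rcases Finset.mem_insert.mp hx with rfl | hx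
        · exact hda
        · rw [Finset.mem_singleton.mp hx]; exact hdb
      · intro x hx y hy hxy
        rcases Finset.mem_insert.mp hx with rfl | hx <;>
          rcases Finset.mem_insert.mp hy with rfl | hy
        · exact absurd rfl hxy
        · rw [Finset.mem_singleton.mp hy]; exact hnb
        · rw [Finset.mem_singleton.mp hx]; exact nonBonding_comm hnb
        · rw [Finset.mem_singleton.mp hx, Finset.mem_singleton.mp hy] at hxy
          exact absurd rfl hxy
  rw [hset, Set.ncard_coe_finset]
  apply Finset.card_image_of_injOn
  intro p hp q hq h
  obtain ⟨-, hp2, -, -, -⟩ := Finset.mem_filter.mp hp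
  obtain ⟨-, hq2, -, -, -⟩ := Finset.mem_filter.mp hq
  have h' : ({dcode p.1, dcode p.2} : Finset (Finset (ℕ × ℕ))) = {dcode q.1, dcode q.2} := h
  have h1 : dcode p.1 ∈ ({dcode q.1, dcode q.2} : Finset (Finset (ℕ × ℕ))) := by
    rw [← h']; simp
  have h2 : dcode p.2 ∈ ({dcode q.1, dcode q.2} : Finset (Finset (ℕ × ℕ))) := by
    rw [← h']; simp
  have h3 : dcode q.1 ∈ ({dcode p.1, dcode p.2} : Finset (Finset (ℕ × ℕ))) := by
    rw [h']; simp
  simp only [Finset.mem_insert, Finset.mem_singleton] at h1 h2 h3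
  have e1 : p.1 = q.1 ∨ p.1 = q.2 := h1.imp (fun hh => dcode_inj hh) (fun hh => dcode_inj hh)
  have e2 : p.2 = q.1 ∨ p.2 = q.2 := h2.imp (fun hh => dcode_inj hh) (fun hh => dcode_inj hh)
  have e3 : q.1 = p.1 ∨ q.1 = p.2 := h3.imp (fun hh => dcode_inj hh) (fun hh => dcode_inj hh)
  obtain ⟨p1, p2⟩ := p
  obtain ⟨q1, q2⟩ := q
  simp only [Prod.mk.injEq]
  simp only at e1 e2 e3 hp2 hq2
  omega

def cnt (n g : ℕ) : ℕ :=
  ((Finset.range n ×ˢ Finset.range n).filter (fun p => p.1 + g ≤ p.2)).card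

lemma sum_range_id_choose (m : ℕ) : ∑ i ∈ Finset.range m, i = m.choose 2 := by
  induction m with
  | zero => simp
  | succ n ih =>
    rw [Finset.sum_range_succ, ih]
    have h : (n+1).choose 2 = n.choose 1 + n.choose 2 := Nat.choose_succ_succ n 1
    have : n.choose 1 = n := Nat.choose_one_right n
    omega

lemma sum_sub_eq (m : ℕ) : ∑ i ∈ Finset.range m, (m - i) = (m+1).choose 2 := by
  have h := Finset.sum_range_reflect (fun i => m - i) m
  have h2 : ∀ i ∈ Finset.range m, m - (m - 1 - i) = i + 1 := by
    intro i hi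
    rw [Finset.mem_range] at hi
    omega
  rw [← h, Finset.sum_congr rfl h2]
  have : ∑ i ∈ Finset.range m, (i + 1) = (∑ i ∈ Finset.range m, i) + m := by
    rw [Finset.sum_add_distrib]; simp
  rw [this, sum_range_id_choose]
  have h3 : (m+1).choose 2 = m.choose 1 + m.choose 2 := Nat.choose_succ_succ m 1
  have : m.choose 1 = m := Nat.choose_one_right m
  omega

lemma cnt_eq (n g : ℕ) (hg : 1 ≤ g) : cnt n g = (n + 1 - g).choose 2 := by
  unfold cnt
  rw [Finset.card_filter]
  rw [Finset.sum_product]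
  have hinner : ∀ i, (∑ k ∈ Finset.range n, if i + g ≤ k then 1 else 0) = n - (i + g) := by
    intro i
    rw [← Finset.card_filter]
    have : (Finset.range n).filter (fun k => i + g ≤ k) = Finset.Ico (i+g) n := by
      ext k; simp [Finset.mem_Ico]; omega
    rw [this, Nat.card_Ico]
  rw [Finset.sum_congr rfl (fun i _ => hinner i)]
  have hm : ∀ i, n - (i + g) = (n - g) - i := fun i => by omega
  rw [Finset.sum_congr rfl (fun i _ => hm i)]
  have hsub : Finset.range (n - g) ⊆ Finset.range n := by
    apply Finset.range_subset_range.mpr; omega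
  have hzero : ∀ x ∈ Finset.range n, x ∉ Finset.range (n - g) → n - g - x = 0 := by
    intro x _ hx
    simp only [Finset.mem_range, not_lt] at hx
    omega
  rw [← Finset.sum_subset (f := fun i => n - g - i) hsub hzero]
  rw [sum_sub_eq]
  rcases le_or_gt g n with h | h
  · have : n - g + 1 = n + 1 - g := by omega
    rw [this]
  · rw [Nat.choose_eq_zero_of_lt (by omega), Nat.choose_eq_zero_of_lt (by omega)]

lemma fib00 (r : ℕ) :
    ((TS r).filter (fun p => p.1 % 3 = 0 ∧ p.2 % 3 = 0)).card = cnt r 2 := by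
  unfold cnt
  apply Finset.card_nbij' (fun p => (p.1/3, p.2/3)) (fun p => (3*p.1, 3*p.2))
  · intro p hp
    simp only [TS, Finset.mem_filter, Finset.mem_product, Finset.mem_range, Finset.mem_coe] at hp ⊢
    obtain ⟨⟨⟨hr1, hr2⟩, hlt, hda, hdb, hnb⟩, hm1, hm2⟩ := hp
    obtain ⟨i, hi⟩ : ∃ i, p.1 = 3*i := ⟨p.1/3, by omega⟩
    obtain ⟨k, hk⟩ : ∃ k, p.2 = 3*k := ⟨p.2/3, by omega⟩
    rw [hi] at hda hlt
    rw [hk] at hdb hlt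
    rw [hi, hk] at hnb
    rw [isDomino_dcode0] at hda
    rw [isDomino_dcode0] at hdb
    rw [dcode0, dcode0, nb00] at hnb
    omega
  · intro p hp
    simp only [Finset.mem_filter, Finset.mem_product, Finset.mem_range, Finset.mem_coe] at hp
    simp only [TS, Finset.mem_filter, Finset.mem_product, Finset.mem_range, Finset.mem_coe]
    rw [isDomino_dcode0, isDomino_dcode0, dcode0, dcode0, nb00]
    omega
  · intro p hp
    simp only [TS, Finset.mem_filter, Finset.mem_coe] at hp
    have hm1 := hp.2.1
    have hm2 := hp.2.2
    exact Prod.ext (by dsimp only; omega) (by dsimp only; omega)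
  · intro p _
    exact Prod.ext (by dsimp only; omega) (by dsimp only; omega)

lemma fib01 (r : ℕ) :
    ((TS r).filter (fun p => p.1 % 3 = 0 ∧ p.2 % 3 = 1)).card = cnt (r-1) 2 := by
  unfold cnt
  apply Finset.card_nbij' (fun p => (p.1/3, p.2/3)) (fun p => (3*p.1, 3*p.2+1))
  · intro p hp
    simp only [TS, Finset.mem_filter, Finset.mem_product, Finset.mem_range, Finset.mem_coe] at hp ⊢
    obtain ⟨⟨⟨hr1, hr2⟩, hlt, hda, hdb, hnb⟩, hm1, hm2⟩ := hp
    obtain ⟨i, hi⟩ : ∃ i, p.1 = 3*i := ⟨p.1/3, by omega⟩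
    obtain ⟨k, hk⟩ : ∃ k, p.2 = 3*k+1 := ⟨p.2/3, by omega⟩
    rw [hi] at hda hlt
    rw [hk] at hdb hlt
    rw [hi, hk] at hnb
    rw [isDomino_dcode0] at hda
    rw [isDomino_dcode1] at hdb
    rw [dcode0, dcode1, nb01] at hnb
    omega
  · intro p hp
    simp only [Finset.mem_filter, Finset.mem_product, Finset.mem_range, Finset.mem_coe] at hp
    simp only [TS, Finset.mem_filter, Finset.mem_product, Finset.mem_range, Finset.mem_coe]
    rw [isDomino_dcode0, isDomino_dcode1, dcode0, dcode1, nb01]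
    omega
  · intro p hp
    simp only [TS, Finset.mem_filter, Finset.mem_coe] at hp
    have hm1 := hp.2.1
    have hm2 := hp.2.2
    exact Prod.ext (by dsimp only; omega) (by dsimp only; omega)
  · intro p _
    exact Prod.ext (by dsimp only; omega) (by dsimp only; omega)

lemma fib02 (r : ℕ) :
    ((TS r).filter (fun p => p.1 % 3 = 0 ∧ p.2 % 3 = 2)).card = cnt (r-1) 2 := by
  unfold cnt
  apply Finset.card_nbij' (fun p => (p.1/3, p.2/3)) (fun p => (3*p.1, 3*p.2+2))
  · intro p hp
    simp only [TS, Finset.mem_filter, Finset.mem_product, Finset.mem_range, Finset.mem_coe] at hp ⊢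
    obtain ⟨⟨⟨hr1, hr2⟩, hlt, hda, hdb, hnb⟩, hm1, hm2⟩ := hp
    obtain ⟨i, hi⟩ : ∃ i, p.1 = 3*i := ⟨p.1/3, by omega⟩
    obtain ⟨k, hk⟩ : ∃ k, p.2 = 3*k+2 := ⟨p.2/3, by omega⟩
    rw [hi] at hda hlt
    rw [hk] at hdb hlt
    rw [hi, hk] at hnb
    rw [isDomino_dcode0] at hda
    rw [isDomino_dcode2] at hdb
    rw [dcode0, dcode2, nb02] at hnb
    omega
  · intro p hp
    simp only [Finset.mem_filter, Finset.mem_product, Finset.mem_range, Finset.mem_coe] at hp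
    simp only [TS, Finset.mem_filter, Finset.mem_product, Finset.mem_range, Finset.mem_coe]
    rw [isDomino_dcode0, isDomino_dcode2, dcode0, dcode2, nb02]
    omega
  · intro p hp
    simp only [TS, Finset.mem_filter, Finset.mem_coe] at hp
    have hm1 := hp.2.1
    have hm2 := hp.2.2
    exact Prod.ext (by dsimp only; omega) (by dsimp only; omega)
  · intro p _
    exact Prod.ext (by dsimp only; omega) (by dsimp only; omega)

lemma fib10 (r : ℕ) :
    ((TS r).filter (fun p => p.1 % 3 = 1 ∧ p.2 % 3 = 0)).card = cnt r 3 := by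
  unfold cnt
  apply Finset.card_nbij' (fun p => (p.1/3, p.2/3)) (fun p => (3*p.1+1, 3*p.2))
  · intro p hp
    simp only [TS, Finset.mem_filter, Finset.mem_product, Finset.mem_range, Finset.mem_coe] at hp ⊢
    obtain ⟨⟨⟨hr1, hr2⟩, hlt, hda, hdb, hnb⟩, hm1, hm2⟩ := hp
    obtain ⟨i, hi⟩ : ∃ i, p.1 = 3*i+1 := ⟨p.1/3, by omega⟩
    obtain ⟨k, hk⟩ : ∃ k, p.2 = 3*k := ⟨p.2/3, by omega⟩
    rw [hi] at hda hlt
    rw [hk] at hdb hlt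
    rw [hi, hk] at hnb
    rw [isDomino_dcode1] at hda
    rw [isDomino_dcode0] at hdb
    rw [dcode1, dcode0, nb10] at hnb
    omega
  · intro p hp
    simp only [Finset.mem_filter, Finset.mem_product, Finset.mem_range, Finset.mem_coe] at hp
    simp only [TS, Finset.mem_filter, Finset.mem_product, Finset.mem_range, Finset.mem_coe]
    rw [isDomino_dcode1, isDomino_dcode0, dcode1, dcode0, nb10]
    omega
  · intro p hp
    simp only [TS, Finset.mem_filter, Finset.mem_coe] at hp
    have hm1 := hp.2.1
    have hm2 := hp.2.2
    exact Prod.ext (by dsimp only; omega) (by dsimp only; omega)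
  · intro p _
    exact Prod.ext (by dsimp only; omega) (by dsimp only; omega)

lemma fib20 (r : ℕ) :
    ((TS r).filter (fun p => p.1 % 3 = 2 ∧ p.2 % 3 = 0)).card = cnt r 3 := by
  unfold cnt
  apply Finset.card_nbij' (fun p => (p.1/3, p.2/3)) (fun p => (3*p.1+2, 3*p.2))
  · intro p hp
    simp only [TS, Finset.mem_filter, Finset.mem_product, Finset.mem_range, Finset.mem_coe] at hp ⊢
    obtain ⟨⟨⟨hr1, hr2⟩, hlt, hda, hdb, hnb⟩, hm1, hm2⟩ := hp
    obtain ⟨i, hi⟩ : ∃ i, p.1 = 3*i+2 := ⟨p.1/3, by omega⟩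
    obtain ⟨k, hk⟩ : ∃ k, p.2 = 3*k := ⟨p.2/3, by omega⟩
    rw [hi] at hda hlt
    rw [hk] at hdb hlt
    rw [hi, hk] at hnb
    rw [isDomino_dcode2] at hda
    rw [isDomino_dcode0] at hdb
    rw [dcode2, dcode0, nb20] at hnb
    omega
  · intro p hp
    simp only [Finset.mem_filter, Finset.mem_product, Finset.mem_range, Finset.mem_coe] at hp
    simp only [TS, Finset.mem_filter, Finset.mem_product, Finset.mem_range, Finset.mem_coe]
    rw [isDomino_dcode2, isDomino_dcode0, dcode2, dcode0, nb20]
    omega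
  · intro p hp
    simp only [TS, Finset.mem_filter, Finset.mem_coe] at hp
    have hm1 := hp.2.1
    have hm2 := hp.2.2
    exact Prod.ext (by dsimp only; omega) (by dsimp only; omega)
  · intro p _
    exact Prod.ext (by dsimp only; omega) (by dsimp only; omega)

lemma fib11 (r : ℕ) :
    ((TS r).filter (fun p => p.1 % 3 = 1 ∧ p.2 % 3 = 1)).card = cnt (r-1) 3 := by
  unfold cnt
  apply Finset.card_nbij' (fun p => (p.1/3, p.2/3)) (fun p => (3*p.1+1, 3*p.2+1))
  · intro p hp
    simp only [TS, Finset.mem_filter, Finset.mem_product, Finset.mem_range, Finset.mem_coe] at hp ⊢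
    obtain ⟨⟨⟨hr1, hr2⟩, hlt, hda, hdb, hnb⟩, hm1, hm2⟩ := hp
    obtain ⟨i, hi⟩ : ∃ i, p.1 = 3*i+1 := ⟨p.1/3, by omega⟩
    obtain ⟨k, hk⟩ : ∃ k, p.2 = 3*k+1 := ⟨p.2/3, by omega⟩
    rw [hi] at hda hlt
    rw [hk] at hdb hlt
    rw [hi, hk] at hnb
    rw [isDomino_dcode1] at hda
    rw [isDomino_dcode1] at hdb
    rw [dcode1, dcode1, nb11] at hnb
    omega
  · intro p hp
    simp only [Finset.mem_filter, Finset.mem_product, Finset.mem_range, Finset.mem_coe] at hp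
    simp only [TS, Finset.mem_filter, Finset.mem_product, Finset.mem_range, Finset.mem_coe]
    rw [isDomino_dcode1, isDomino_dcode1, dcode1, dcode1, nb11]
    omega
  · intro p hp
    simp only [TS, Finset.mem_filter, Finset.mem_coe] at hp
    have hm1 := hp.2.1
    have hm2 := hp.2.2
    exact Prod.ext (by dsimp only; omega) (by dsimp only; omega)
  · intro p _
    exact Prod.ext (by dsimp only; omega) (by dsimp only; omega)

lemma fib22 (r : ℕ) :
    ((TS r).filter (fun p => p.1 % 3 = 2 ∧ p.2 % 3 = 2)).card = cnt (r-1) 3 := by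
  unfold cnt
  apply Finset.card_nbij' (fun p => (p.1/3, p.2/3)) (fun p => (3*p.1+2, 3*p.2+2))
  · intro p hp
    simp only [TS, Finset.mem_filter, Finset.mem_product, Finset.mem_range, Finset.mem_coe] at hp ⊢
    obtain ⟨⟨⟨hr1, hr2⟩, hlt, hda, hdb, hnb⟩, hm1, hm2⟩ := hp
    obtain ⟨i, hi⟩ : ∃ i, p.1 = 3*i+2 := ⟨p.1/3, by omega⟩
    obtain ⟨k, hk⟩ : ∃ k, p.2 = 3*k+2 := ⟨p.2/3, by omega⟩
    rw [hi] at hda hlt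
    rw [hk] at hdb hlt
    rw [hi, hk] at hnb
    rw [isDomino_dcode2] at hda
    rw [isDomino_dcode2] at hdb
    rw [dcode2, dcode2, nb22] at hnb
    omega
  · intro p hp
    simp only [Finset.mem_filter, Finset.mem_product, Finset.mem_range, Finset.mem_coe] at hp
    simp only [TS, Finset.mem_filter, Finset.mem_product, Finset.mem_range, Finset.mem_coe]
    rw [isDomino_dcode2, isDomino_dcode2, dcode2, dcode2, nb22]
    omega
  · intro p hp
    simp only [TS, Finset.mem_filter, Finset.mem_coe] at hp
    have hm1 := hp.2.1
    have hm2 := hp.2.2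
    exact Prod.ext (by dsimp only; omega) (by dsimp only; omega)
  · intro p _
    exact Prod.ext (by dsimp only; omega) (by dsimp only; omega)

lemma fib12 (r : ℕ) :
    ((TS r).filter (fun p => p.1 % 3 = 1 ∧ p.2 % 3 = 2)).card = cnt (r-1) 2 := by
  unfold cnt
  apply Finset.card_nbij' (fun p => (p.1/3, p.2/3)) (fun p => (3*p.1+1, 3*p.2+2))
  · intro p hp
    simp only [TS, Finset.mem_filter, Finset.mem_product, Finset.mem_range, Finset.mem_coe] at hp ⊢
    obtain ⟨⟨⟨hr1, hr2⟩, hlt, hda, hdb, hnb⟩, hm1, hm2⟩ := hp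
    obtain ⟨i, hi⟩ : ∃ i, p.1 = 3*i+1 := ⟨p.1/3, by omega⟩
    obtain ⟨k, hk⟩ : ∃ k, p.2 = 3*k+2 := ⟨p.2/3, by omega⟩
    rw [hi] at hda hlt
    rw [hk] at hdb hlt
    rw [hi, hk] at hnb
    rw [isDomino_dcode1] at hda
    rw [isDomino_dcode2] at hdb
    rw [dcode1, dcode2, nb12] at hnb
    omega
  · intro p hp
    simp only [Finset.mem_filter, Finset.mem_product, Finset.mem_range, Finset.mem_coe] at hp
    simp only [TS, Finset.mem_filter, Finset.mem_product, Finset.mem_range, Finset.mem_coe]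
    rw [isDomino_dcode1, isDomino_dcode2, dcode1, dcode2, nb12]
    omega
  · intro p hp
    simp only [TS, Finset.mem_filter, Finset.mem_coe] at hp
    have hm1 := hp.2.1
    have hm2 := hp.2.2
    exact Prod.ext (by dsimp only; omega) (by dsimp only; omega)
  · intro p _
    exact Prod.ext (by dsimp only; omega) (by dsimp only; omega)

lemma fib21 (r : ℕ) :
    ((TS r).filter (fun p => p.1 % 3 = 2 ∧ p.2 % 3 = 1)).card = cnt (r-1) 2 := by
  unfold cnt
  apply Finset.card_nbij' (fun p => (p.1/3, p.2/3)) (fun p => (3*p.1+2, 3*p.2+1))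
  · intro p hp
    simp only [TS, Finset.mem_filter, Finset.mem_product, Finset.mem_range, Finset.mem_coe] at hp ⊢
    obtain ⟨⟨⟨hr1, hr2⟩, hlt, hda, hdb, hnb⟩, hm1, hm2⟩ := hp
    obtain ⟨i, hi⟩ : ∃ i, p.1 = 3*i+2 := ⟨p.1/3, by omega⟩
    obtain ⟨k, hk⟩ : ∃ k, p.2 = 3*k+1 := ⟨p.2/3, by omega⟩
    rw [hi] at hda hlt
    rw [hk] at hdb hlt
    rw [hi, hk] at hnb
    rw [isDomino_dcode2] at hda
    rw [isDomino_dcode1] at hdb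
    rw [dcode2, dcode1, nb21] at hnb
    omega
  · intro p hp
    simp only [Finset.mem_filter, Finset.mem_product, Finset.mem_range, Finset.mem_coe] at hp
    simp only [TS, Finset.mem_filter, Finset.mem_product, Finset.mem_range, Finset.mem_coe]
    rw [isDomino_dcode2, isDomino_dcode1, dcode2, dcode1, nb21]
    omega
  · intro p hp
    simp only [TS, Finset.mem_filter, Finset.mem_coe] at hp
    have hm1 := hp.2.1
    have hm2 := hp.2.2
    exact Prod.ext (by dsimp only; omega) (by dsimp only; omega)
  · intro p _
    exact Prod.ext (by dsimp only; omega) (by dsimp only; omega)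

lemma TS_card (r : ℕ) : (TS r).card = Nat.choose (r - 1) 2 + 6 * Nat.choose (r - 2) 2
      + 2 * Nat.choose (r - 3) 2 := by
  have H : ∀ p ∈ TS r, (p.1 % 3, p.2 % 3) ∈ Finset.range 3 ×ˢ Finset.range 3 := by
    intro p _
    simp only [Finset.mem_product, Finset.mem_range]
    omega
  rw [Finset.card_eq_sum_card_fiberwise H, Finset.sum_product]
  have hconv : ∀ s t : ℕ, ((TS r).filter (fun a => (a.1 % 3, a.2 % 3) = (s, t)))
      = (TS r).filter (fun p => p.1 % 3 = s ∧ p.2 % 3 = t) := by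
    intro s t
    apply Finset.filter_congr
    intro x _
    simp [Prod.ext_iff]
  simp only [Finset.sum_range_succ, Finset.sum_range_zero, zero_add, hconv]
  rw [fib00, fib01, fib02, fib10, fib11, fib12, fib20, fib21, fib22]
  rw [cnt_eq r 2 (by norm_num), cnt_eq (r-1) 2 (by norm_num),
    cnt_eq r 3 (by norm_num), cnt_eq (r-1) 3 (by norm_num)]
  have e1 : r + 1 - 2 = r - 1 := by omega
  have e2 : r - 1 + 1 - 2 = r - 2 := by omega
  have e3 : r + 1 - 3 = r - 2 := by omega
  have e4 : r - 1 + 1 - 3 = r - 3 := by omega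
  rw [e1, e2, e3, e4]
  ring

theorem nbD_col2_two (r : ℕ) :
    nbD r 2 2 = Nat.choose (r - 1) 2 + 6 * Nat.choose (r - 2) 2
      + 2 * Nat.choose (r - 3) 2 := by
  unfold nbD
  rw [nbD_eq_TS_card r, TS_card]
end

section
/- For every natural number r, the number of ways to place 3 pairwise non-bonding dominoes on the r×2 board is D(r,2,3) = C(r−2,3) + 12·C(r−3,3) + 12·C(r−4,3) + 2·C(r−5,3), where C(n,k) denotes the binomial coefficient (taken to be 0 when n < k). -/
-- ### scaffolding
def cellsF (a b : ℕ) : Finset (ℕ × ℕ) :=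
  (Finset.range a ×ˢ {0}) ∪ (Finset.range b ×ˢ {1})

lemma mem_cellsF {a b : ℕ} {p : ℕ × ℕ} :
    p ∈ cellsF a b ↔ (p.2 = 0 ∧ p.1 < a) ∨ (p.2 = 1 ∧ p.1 < b) := by
  obtain ⟨x, y⟩ := p
  simp only [cellsF, Finset.mem_union, Finset.mem_product, Finset.mem_range,
    Finset.mem_singleton]
  tauto

def adjOK (d : Finset (ℕ × ℕ)) : Prop :=
  ∀ p ∈ d, ∀ q ∈ d, p ≠ q → cellDist p q = 1

instance : DecidablePred adjOK := fun d => by unfold adjOK; infer_instance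

def domF (a b : ℕ) : Finset (Finset (ℕ × ℕ)) :=
  ((cellsF a b).powersetCard 2).filter adjOK

def nbOK (S : Finset (Finset (ℕ × ℕ))) : Prop :=
  ∀ x ∈ S, ∀ y ∈ S, x ≠ y → NonBonding x y

instance : DecidablePred nbOK := fun S => by unfold nbOK; infer_instance

def configF (k a b : ℕ) : Finset (Finset (Finset (ℕ × ℕ))) :=
  ((domF a b).powersetCard k).filter nbOK

def Ncfg (k a b : ℕ) : ℕ := (configF k a b).card

lemma mem_domF {a b : ℕ} {d : Finset (ℕ × ℕ)} :
    d ∈ domF a b ↔ d ⊆ cellsF a b ∧ d.card = 2 ∧ adjOK d := by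
  simp [domF, Finset.mem_powersetCard]; tauto

lemma mem_configF {k a b : ℕ} {S : Finset (Finset (ℕ × ℕ))} :
    S ∈ configF k a b ↔ S ⊆ domF a b ∧ S.card = k ∧ nbOK S := by
  simp [configF, Finset.mem_powersetCard]; tauto

lemma isDomino_iff {r : ℕ} {d : Finset (ℕ × ℕ)} :
    IsDomino r 2 d ↔ d ∈ domF r r := by
  rw [mem_domF]
  constructor
  · rintro ⟨h1, h2, h3⟩
    refine ⟨?_, h1, h3⟩
    intro p hp
    rw [mem_cellsF]
    have := h2 p hp
    omega
  · rintro ⟨h1, h2, h3⟩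
    refine ⟨h2, ?_, h3⟩
    intro p hp
    have := h1 hp
    rw [mem_cellsF] at this
    omega

lemma nbD_eq_Ncfg (r : ℕ) : nbD r 2 3 = Ncfg 3 r r := by
  unfold nbD Ncfg
  rw [← Set.ncard_coe_finset]
  congr 1
  ext S
  simp only [Set.mem_setOf_eq, Finset.coe_sort_coe, Finset.mem_coe, mem_configF]
  constructor
  · rintro ⟨h1, h2, h3⟩
    exact ⟨fun x hx => isDomino_iff.mp (h2 x hx), h1, h3⟩
  · rintro ⟨h1, h2, h3⟩
    exact ⟨h2, fun x hx => isDomino_iff.mpr (h1 hx), h3⟩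

lemma cellsF_mono {a b a' b' : ℕ} (ha : a' ≤ a) (hb : b' ≤ b) :
    cellsF a' b' ⊆ cellsF a b := by
  intro p hp; rw [mem_cellsF] at *; omega

lemma domF_mono {a b a' b' : ℕ} (ha : a' ≤ a) (hb : b' ≤ b) :
    domF a' b' ⊆ domF a b := by
  intro d hd
  rw [mem_domF] at *
  exact ⟨hd.1.trans (cellsF_mono ha hb), hd.2⟩

lemma configF_filter_sub {k a b a' b' : ℕ} (ha : a' ≤ a) (hb : b' ≤ b) :
    (configF k a b).filter (fun S => ∀ x ∈ S, x ⊆ cellsF a' b') = configF k a' b' := by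
  ext S
  simp only [Finset.mem_filter, mem_configF]
  constructor
  · rintro ⟨⟨hsub, hcard, hnb⟩, h2⟩
    refine ⟨fun x hx => ?_, hcard, hnb⟩
    have := mem_domF.mp (hsub hx)
    exact mem_domF.mpr ⟨h2 x hx, this.2⟩
  · rintro ⟨hsub, hcard, hnb⟩
    have hs : ∀ x ∈ S, x ⊆ cellsF a' b' := fun x hx => (mem_domF.mp (hsub hx)).1
    refine ⟨⟨fun x hx => ?_, hcard, hnb⟩, hs⟩
    have := mem_domF.mp (hsub hx)
    exact mem_domF.mpr ⟨(this.1).trans (cellsF_mono ha hb), this.2⟩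

lemma card_contains {k a b a' b' : ℕ} (ha : a' ≤ a) (hb : b' ≤ b)
    {d₀ : Finset (ℕ × ℕ)} (hd₀ : d₀ ∈ domF a b)
    (hcompat : ∀ x ∈ domF a b, (NonBonding x d₀ ↔ x ⊆ cellsF a' b')) :
    ((configF (k+1) a b).filter (fun S => d₀ ∈ S)).card = Ncfg k a' b' := by
  have hne : d₀.Nonempty := by
    have := (mem_domF.mp hd₀).2.1
    exact Finset.card_pos.mp (by omega)
  have hd₀n : ¬ d₀ ⊆ cellsF a' b' := by
    intro hsub
    obtain ⟨p, hp⟩ := hne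
    have h2 := (hcompat d₀ hd₀).mpr hsub p hp p hp
    unfold cellDist at h2; omega
  rw [Ncfg]
  apply Finset.card_bij' (fun S _ => S.erase d₀) (fun T _ => insert d₀ T)
  · intro S hS
    rw [Finset.mem_filter] at hS
    exact Finset.insert_erase hS.2
  · intro T hT
    rw [mem_configF] at hT
    have hd₀T : d₀ ∉ T := fun h => hd₀n (mem_domF.mp (hT.1 h)).1
    exact Finset.erase_insert hd₀T

  · -- hi : erase lands in configF k a' b'
    intro S hS
    rw [Finset.mem_filter, mem_configF] at hS
    obtain ⟨⟨hsub, hcard, hnb⟩, hmem⟩ := hS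
    rw [mem_configF]
    refine ⟨?_, ?_, ?_⟩
    · intro x hx
      have hxd : x ≠ d₀ := Finset.ne_of_mem_erase hx
      have hxS : x ∈ S := Finset.mem_of_mem_erase hx
      have hxdom := hsub hxS
      have hnbx : NonBonding x d₀ := hnb x hxS d₀ hmem hxd
      have := mem_domF.mp hxdom
      exact mem_domF.mpr ⟨(hcompat x hxdom).mp hnbx, this.2⟩
    · rw [Finset.card_erase_of_mem hmem, hcard]
      omega
    · intro x hx y hy hxy
      exact hnb x (Finset.mem_of_mem_erase hx) y (Finset.mem_of_mem_erase hy) hxy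
  · -- hj : insert lands in filter
    intro T hT
    rw [mem_configF] at hT
    obtain ⟨hsub, hcard, hnb⟩ := hT
    have hd₀T : d₀ ∉ T := by
      intro h
      exact hd₀n (mem_domF.mp (hsub h)).1
    rw [Finset.mem_filter, mem_configF]
    refine ⟨⟨?_, ?_, ?_⟩, Finset.mem_insert_self _ _⟩
    · intro x hx
      rcases Finset.mem_insert.mp hx with h | h
      · exact h ▸ hd₀
      · exact domF_mono ha hb (hsub h)
    · rw [Finset.card_insert_of_notMem hd₀T, hcard]
    · intro x hx y hy hxy
      rcases Finset.mem_insert.mp hx with h | h <;>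
        rcases Finset.mem_insert.mp hy with h' | h'
      · exact absurd (h.trans h'.symm) hxy
      · rw [h]
        have hy' := hsub h'
        have : NonBonding y d₀ :=
          (hcompat y (domF_mono ha hb hy')).mpr (mem_domF.mp hy').1
        exact nonBonding_comm this
      · rw [h']
        have hx' := hsub h
        exact (hcompat x (domF_mono ha hb hx')).mpr (mem_domF.mp hx').1
      · exact hnb x h y h' hxy
def Hd (i : ℕ) : Finset (ℕ × ℕ) := {(i,0),(i,1)}
def Vd (i j : ℕ) : Finset (ℕ × ℕ) := {(i,j),(i+1,j)}

lemma Hd_dom {a b i : ℕ} (h1 : i < a) (h2 : i < b) : Hd i ∈ domF a b := by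
  rw [mem_domF]
  refine ⟨?_, ?_, ?_⟩
  · intro p hp
    simp only [Hd, Finset.mem_insert, Finset.mem_singleton] at hp
    rcases hp with rfl | rfl <;> rw [mem_cellsF] <;> simp <;> omega
  · rw [Hd, Finset.card_insert_of_notMem (by simp), Finset.card_singleton]
  · intro p hp q hq hne
    simp only [Hd, Finset.mem_insert, Finset.mem_singleton] at hp hq
    rcases hp with rfl | rfl <;> rcases hq with rfl | rfl <;>
      first
        | exact absurd rfl hne
        | (simp [cellDist])
lemma Vd_dom0 {a b i : ℕ} (h1 : i + 1 < a) : Vd i 0 ∈ domF a b := by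
  rw [mem_domF]
  refine ⟨?_, ?_, ?_⟩
  · intro p hp
    simp only [Vd, Finset.mem_insert, Finset.mem_singleton] at hp
    rcases hp with rfl | rfl <;> rw [mem_cellsF] <;> simp <;> omega
  · rw [Vd, Finset.card_insert_of_notMem (by simp), Finset.card_singleton]
  · intro p hp q hq hne
    simp only [Vd, Finset.mem_insert, Finset.mem_singleton] at hp hq
    rcases hp with rfl | rfl <;> rcases hq with rfl | rfl <;>
      first
        | exact absurd rfl hne
        | (simp [cellDist])
lemma Vd_dom1 {a b i : ℕ} (h1 : i + 1 < b) : Vd i 1 ∈ domF a b := by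
  rw [mem_domF]
  refine ⟨?_, ?_, ?_⟩
  · intro p hp
    simp only [Vd, Finset.mem_insert, Finset.mem_singleton] at hp
    rcases hp with rfl | rfl <;> rw [mem_cellsF] <;> simp <;> omega
  · rw [Vd, Finset.card_insert_of_notMem (by simp), Finset.card_singleton]
  · intro p hp q hq hne
    simp only [Vd, Finset.mem_insert, Finset.mem_singleton] at hp hq
    rcases hp with rfl | rfl <;> rcases hq with rfl | rfl <;>
      first
        | exact absurd rfl hne
        | (simp [cellDist])

lemma nonBonding_pair {x : Finset (ℕ × ℕ)} {q1 q2 : ℕ × ℕ} :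
    NonBonding x {q1, q2} ↔ ∀ p ∈ x, 2 ≤ cellDist p q1 ∧ 2 ≤ cellDist p q2 := by
  unfold NonBonding
  constructor
  · intro h p hp
    exact ⟨h p hp q1 (by simp), h p hp q2 (by simp)⟩
  · intro h p hp q hq
    rcases Finset.mem_insert.mp hq with rfl | hq'
    · exact (h p hp).1
    · rw [Finset.mem_singleton.mp hq']
      exact (h p hp).2

lemma not_both {k a b : ℕ} {S : Finset (Finset (ℕ × ℕ))} (hS : S ∈ configF k a b)
    {d₁ d₂ : Finset (ℕ × ℕ)} (h1 : d₁ ∈ S) (h2 : d₂ ∈ S) (hne : d₁ ≠ d₂)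
    {p : ℕ × ℕ} (hp1 : p ∈ d₁) (hp2 : p ∈ d₂) : False := by
  have := (mem_configF.mp hS).2.2 d₁ h1 d₂ h2 hne p hp1 p hp2
  unfold cellDist at this; omega

lemma compat_H {m : ℕ} (hm : 2 ≤ m) {x : Finset (ℕ × ℕ)} (hx : x ∈ domF m m) :
    NonBonding x (Hd (m-1)) ↔ x ⊆ cellsF (m-2) (m-2) := by
  have hsub := (mem_domF.mp hx).1
  rw [Hd, nonBonding_pair, Finset.subset_iff]
  constructor
  · intro h p hp
    have hc := mem_cellsF.mp (hsub hp)
    have hh := h p hp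
    obtain ⟨i, j⟩ := p
    rw [mem_cellsF]
    simp [cellDist] at hh hc ⊢
    omega
  · intro h p hp
    have hc := mem_cellsF.mp (hsub hp)
    have hh := mem_cellsF.mp (h hp)
    obtain ⟨i, j⟩ := p
    simp [cellDist] at hc hh ⊢
    omega

lemma compat_V0 {m : ℕ} (hm : 2 ≤ m) {x : Finset (ℕ × ℕ)} (hx : x ∈ domF m m) :
    NonBonding x (Vd (m-2) 0) ↔ x ⊆ cellsF (m-3) (m-2) := by
  have hsub := (mem_domF.mp hx).1
  rw [Vd, nonBonding_pair, Finset.subset_iff]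
  constructor
  · intro h p hp
    have hc := mem_cellsF.mp (hsub hp)
    have hh := h p hp
    obtain ⟨i, j⟩ := p
    rw [mem_cellsF]
    simp [cellDist] at hh hc ⊢
    omega
  · intro h p hp
    have hc := mem_cellsF.mp (hsub hp)
    have hh := mem_cellsF.mp (h hp)
    obtain ⟨i, j⟩ := p
    simp [cellDist] at hc hh ⊢
    omega

lemma compat_V1 {m : ℕ} (hm : 2 ≤ m) {x : Finset (ℕ × ℕ)} (hx : x ∈ domF m m) :
    NonBonding x (Vd (m-2) 1) ↔ x ⊆ cellsF (m-2) (m-3) := by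
  have hsub := (mem_domF.mp hx).1
  rw [Vd, nonBonding_pair, Finset.subset_iff]
  constructor
  · intro h p hp
    have hc := mem_cellsF.mp (hsub hp)
    have hh := h p hp
    obtain ⟨i, j⟩ := p
    rw [mem_cellsF]
    simp [cellDist] at hh hc ⊢
    omega
  · intro h p hp
    have hc := mem_cellsF.mp (hsub hp)
    have hh := mem_cellsF.mp (h hp)
    obtain ⟨i, j⟩ := p
    simp [cellDist] at hc hh ⊢
    omega

lemma compat_V1' {a : ℕ} (hm : 1 ≤ a) {x : Finset (ℕ × ℕ)} (hx : x ∈ domF a (a+1)) :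
    NonBonding x (Vd (a-1) 1) ↔ x ⊆ cellsF (a-1) (a-2) := by
  have hsub := (mem_domF.mp hx).1
  rw [Vd, nonBonding_pair, Finset.subset_iff]
  constructor
  · intro h p hp
    have hc := mem_cellsF.mp (hsub hp)
    have hh := h p hp
    obtain ⟨i, j⟩ := p
    rw [mem_cellsF]
    simp [cellDist] at hh hc ⊢
    omega
  · intro h p hp
    have hc := mem_cellsF.mp (hsub hp)
    have hh := mem_cellsF.mp (h hp)
    obtain ⟨i, j⟩ := p
    simp [cellDist] at hc hh ⊢
    omega

lemma compat_V0' {a : ℕ} (hm : 1 ≤ a) {x : Finset (ℕ × ℕ)} (hx : x ∈ domF (a+1) a) :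
    NonBonding x (Vd (a-1) 0) ↔ x ⊆ cellsF (a-2) (a-1) := by
  have hsub := (mem_domF.mp hx).1
  rw [Vd, nonBonding_pair, Finset.subset_iff]
  constructor
  · intro h p hp
    have hc := mem_cellsF.mp (hsub hp)
    have hh := h p hp
    obtain ⟨i, j⟩ := p
    rw [mem_cellsF]
    simp [cellDist] at hh hc ⊢
    omega
  · intro h p hp
    have hc := mem_cellsF.mp (hsub hp)
    have hh := mem_cellsF.mp (h hp)
    obtain ⟨i, j⟩ := p
    simp [cellDist] at hc hh ⊢
    omega

lemma classify1 {m : ℕ} (hm : 2 ≤ m) {x : Finset (ℕ × ℕ)} (hx : x ∈ domF m m)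
    (hns : ¬ x ⊆ cellsF (m-1) (m-1)) :
    x = Hd (m-1) ∨ x = Vd (m-2) 0 ∨ x = Vd (m-2) 1 := by
  obtain ⟨hsub, hcard, hadj⟩ := mem_domF.mp hx
  obtain ⟨u, v, huv, rfl⟩ := Finset.card_eq_two.mp hcard
  have hu := mem_cellsF.mp (hsub (Finset.mem_insert_self _ _))
  have hv := mem_cellsF.mp (hsub (show v ∈ ({u, v} : Finset (ℕ × ℕ)) by simp))
  have hd : cellDist u v = 1 := hadj u (by simp) v (by simp) huv
  rw [Finset.insert_subset_iff, Finset.singleton_subset_iff, mem_cellsF, mem_cellsF] at hns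
  obtain ⟨ui, uj⟩ := u
  obtain ⟨vi, vj⟩ := v
  clear hx hsub hadj hcard huv
  simp [cellDist] at hd hu hv hns
  have hm1 : m - 2 + 1 = m - 1 := by omega
  have key : (ui = m-1 ∧ uj = 0 ∧ vi = m-1 ∧ vj = 1) ∨ (ui = m-1 ∧ uj = 1 ∧ vi = m-1 ∧ vj = 0)
    ∨ (ui = m-2 ∧ uj = 0 ∧ vi = m-1 ∧ vj = 0) ∨ (ui = m-1 ∧ uj = 0 ∧ vi = m-2 ∧ vj = 0)
    ∨ (ui = m-2 ∧ uj = 1 ∧ vi = m-1 ∧ vj = 1) ∨ (ui = m-1 ∧ uj = 1 ∧ vi = m-2 ∧ vj = 1) := by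
    rcases hu with ⟨rfl, h2⟩ | ⟨rfl, h2⟩ <;> rcases hv with ⟨rfl, h4⟩ | ⟨rfl, h4⟩ <;>
      simp_all <;> omega
  rcases key with ⟨rfl,rfl,rfl,rfl⟩|⟨rfl,rfl,rfl,rfl⟩|⟨rfl,rfl,rfl,rfl⟩|⟨rfl,rfl,rfl,rfl⟩|⟨rfl,rfl,rfl,rfl⟩|⟨rfl,rfl,rfl,rfl⟩
  · left; rw [Hd]
  · left; rw [Hd]; exact Finset.pair_comm _ _
  · right; left; rw [Vd, hm1]
  · right; left; rw [Vd, hm1]; exact Finset.pair_comm _ _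
  · right; right; rw [Vd, hm1]
  · right; right; rw [Vd, hm1]; exact Finset.pair_comm _ _

lemma classify2 {a : ℕ} (ha : 1 ≤ a) {x : Finset (ℕ × ℕ)} (hx : x ∈ domF a (a+1))
    (hns : ¬ x ⊆ cellsF a a) : x = Vd (a-1) 1 := by
  obtain ⟨hsub, hcard, hadj⟩ := mem_domF.mp hx
  obtain ⟨u, v, huv, rfl⟩ := Finset.card_eq_two.mp hcard
  have hu := mem_cellsF.mp (hsub (Finset.mem_insert_self _ _))
  have hv := mem_cellsF.mp (hsub (show v ∈ ({u, v} : Finset (ℕ × ℕ)) by simp))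
  have hd : cellDist u v = 1 := hadj u (by simp) v (by simp) huv
  rw [Finset.insert_subset_iff, Finset.singleton_subset_iff, mem_cellsF, mem_cellsF] at hns
  obtain ⟨ui, uj⟩ := u
  obtain ⟨vi, vj⟩ := v
  clear hx hsub hadj hcard huv
  simp [cellDist] at hd hu hv hns
  have hm1 : a - 1 + 1 = a := by omega
  have key : (ui = a-1 ∧ uj = 1 ∧ vi = a ∧ vj = 1) ∨ (ui = a ∧ uj = 1 ∧ vi = a-1 ∧ vj = 1) := by
    rcases hu with ⟨rfl, h2⟩ | ⟨rfl, h2⟩ <;> rcases hv with ⟨rfl, h4⟩ | ⟨rfl, h4⟩ <;>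
      simp_all <;> omega
  rcases key with ⟨rfl,rfl,rfl,rfl⟩|⟨rfl,rfl,rfl,rfl⟩
  · rw [Vd, hm1]
  · rw [Vd, hm1]; exact Finset.pair_comm _ _

lemma classify2' {a : ℕ} (ha : 1 ≤ a) {x : Finset (ℕ × ℕ)} (hx : x ∈ domF (a+1) a)
    (hns : ¬ x ⊆ cellsF a a) : x = Vd (a-1) 0 := by
  obtain ⟨hsub, hcard, hadj⟩ := mem_domF.mp hx
  obtain ⟨u, v, huv, rfl⟩ := Finset.card_eq_two.mp hcard
  have hu := mem_cellsF.mp (hsub (Finset.mem_insert_self _ _))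
  have hv := mem_cellsF.mp (hsub (show v ∈ ({u, v} : Finset (ℕ × ℕ)) by simp))
  have hd : cellDist u v = 1 := hadj u (by simp) v (by simp) huv
  rw [Finset.insert_subset_iff, Finset.singleton_subset_iff, mem_cellsF, mem_cellsF] at hns
  obtain ⟨ui, uj⟩ := u
  obtain ⟨vi, vj⟩ := v
  clear hx hsub hadj hcard huv
  simp [cellDist] at hd hu hv hns
  have hm1 : a - 1 + 1 = a := by omega
  have key : (ui = a-1 ∧ uj = 0 ∧ vi = a ∧ vj = 0) ∨ (ui = a ∧ uj = 0 ∧ vi = a-1 ∧ vj = 0) := by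
    rcases hu with ⟨rfl, h2⟩ | ⟨rfl, h2⟩ <;> rcases hv with ⟨rfl, h4⟩ | ⟨rfl, h4⟩ <;>
      simp_all <;> omega
  rcases key with ⟨rfl,rfl,rfl,rfl⟩|⟨rfl,rfl,rfl,rfl⟩
  · rw [Vd, hm1]
  · rw [Vd, hm1]; exact Finset.pair_comm _ _

lemma not_both' {k a b : ℕ} {S : Finset (Finset (ℕ × ℕ))} (hS : S ∈ configF k a b)
    {d₁ d₂ : Finset (ℕ × ℕ)} (h1 : d₁ ∈ S) (h2 : d₂ ∈ S) (hne : d₁ ≠ d₂)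
    {p q : ℕ × ℕ} (hp : p ∈ d₁) (hq : q ∈ d₂) (hd : cellDist p q < 2) : False := by
  have := (mem_configF.mp hS).2.2 d₁ h1 d₂ h2 hne p hp q hq
  omega

lemma R2 {k a : ℕ} (ha : 1 ≤ a) :
    Ncfg (k+1) a (a+1) = Ncfg (k+1) a a + Ncfg k (a-1) (a-2) := by
  classical
  have hd₀ : Vd (a-1) 1 ∈ domF a (a+1) := Vd_dom1 (by omega)
  have hsplit := Finset.card_filter_add_card_filter_not
      (s := configF (k+1) a (a+1)) (p := fun S => Vd (a-1) 1 ∈ S)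
  have h1 : ((configF (k+1) a (a+1)).filter (fun S => Vd (a-1) 1 ∈ S)).card
      = Ncfg k (a-1) (a-2) :=
    card_contains (by omega) (by omega) hd₀ (fun x hx => compat_V1' ha hx)
  have h2 : (configF (k+1) a (a+1)).filter (fun S => ¬ Vd (a-1) 1 ∈ S)
      = configF (k+1) a a := by
    rw [← configF_filter_sub (le_refl a) (by omega : a ≤ a + 1)]
    apply Finset.filter_congr
    intro S hS
    have hSsub := (mem_configF.mp hS).1
    constructor
    · intro hV x hx
      by_contra hns
      exact hV ((classify2 ha (hSsub hx) hns) ▸ hx)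
    · intro hall hV
      have hsubV := hall _ hV
      have hmem : ((a-1)+1, 1) ∈ Vd (a-1) 1 := by simp [Vd]
      have := mem_cellsF.mp (hsubV hmem)
      simp at this
      omega
  rw [h1, h2] at hsplit
  simp only [Ncfg] at *
  omega

lemma R2' {k a : ℕ} (ha : 1 ≤ a) :
    Ncfg (k+1) (a+1) a = Ncfg (k+1) a a + Ncfg k (a-2) (a-1) := by
  classical
  have hd₀ : Vd (a-1) 0 ∈ domF (a+1) a := Vd_dom0 (by omega)
  have hsplit := Finset.card_filter_add_card_filter_not
      (s := configF (k+1) (a+1) a) (p := fun S => Vd (a-1) 0 ∈ S)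
  have h1 : ((configF (k+1) (a+1) a).filter (fun S => Vd (a-1) 0 ∈ S)).card
      = Ncfg k (a-2) (a-1) :=
    card_contains (by omega) (by omega) hd₀ (fun x hx => compat_V0' ha hx)
  have h2 : (configF (k+1) (a+1) a).filter (fun S => ¬ Vd (a-1) 0 ∈ S)
      = configF (k+1) a a := by
    rw [← configF_filter_sub (by omega : a ≤ a + 1) (le_refl a)]
    apply Finset.filter_congr
    intro S hS
    have hSsub := (mem_configF.mp hS).1
    constructor
    · intro hV x hx
      by_contra hns
      exact hV ((classify2' ha (hSsub hx) hns) ▸ hx)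
    · intro hall hV
      have hsubV := hall _ hV
      have hmem : ((a-1)+1, 0) ∈ Vd (a-1) 0 := by simp [Vd]
      have := mem_cellsF.mp (hsubV hmem)
      simp at this
      omega
  rw [h1, h2] at hsplit
  simp only [Ncfg] at *
  omega

lemma R1 {k m : ℕ} (hm : 2 ≤ m) :
    Ncfg (k+1) m m = Ncfg (k+1) (m-1) (m-1) + Ncfg k (m-2) (m-2)
      + Ncfg k (m-3) (m-2) + Ncfg k (m-2) (m-3) := by
  classical
  have hm1 : m - 2 + 1 = m - 1 := by omega
  have hH : Hd (m-1) ∈ domF m m := Hd_dom (by omega) (by omega)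
  have hV0 : Vd (m-2) 0 ∈ domF m m := Vd_dom0 (by omega)
  have hV1 : Vd (m-2) 1 ∈ domF m m := Vd_dom1 (by omega)
  -- distinctness
  have hne0 : Hd (m-1) ≠ Vd (m-2) 0 := by
    intro h
    have : ((m-1 : ℕ), (1 : ℕ)) ∈ Vd (m-2) 0 := h ▸ (by simp [Hd])
    simp [Vd, Prod.ext_iff] at this
  have hne1 : Hd (m-1) ≠ Vd (m-2) 1 := by
    intro h
    have : ((m-1 : ℕ), (0 : ℕ)) ∈ Vd (m-2) 1 := h ▸ (by simp [Hd])
    simp [Vd, Prod.ext_iff] at this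
  have hne2 : Vd (m-2) 0 ≠ Vd (m-2) 1 := by
    intro h
    have : ((m-2 : ℕ), (0 : ℕ)) ∈ Vd (m-2) 1 := h ▸ (by simp [Vd])
    simp [Vd, Prod.ext_iff] at this
  have s1 := Finset.card_filter_add_card_filter_not
      (s := configF (k+1) m m) (p := fun S => Hd (m-1) ∈ S)
  have s2 := Finset.card_filter_add_card_filter_not
      (s := (configF (k+1) m m).filter (fun S => ¬ Hd (m-1) ∈ S)) (p := fun S => Vd (m-2) 0 ∈ S)
  have s3 := Finset.card_filter_add_card_filter_not
      (s := ((configF (k+1) m m).filter (fun S => ¬ Hd (m-1) ∈ S)).filter (fun S => ¬ Vd (m-2) 0 ∈ S))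
      (p := fun S => Vd (m-2) 1 ∈ S)
  have e1 : ((configF (k+1) m m).filter (fun S => ¬ Hd (m-1) ∈ S)).filter (fun S => Vd (m-2) 0 ∈ S)
      = (configF (k+1) m m).filter (fun S => Vd (m-2) 0 ∈ S) := by
    rw [Finset.filter_filter]
    apply Finset.filter_congr
    intro S hS
    constructor
    · rintro ⟨h1, h2⟩; exact h2
    · intro h2
      refine ⟨fun hHS => ?_, h2⟩
      refine not_both' hS hHS h2 hne0 (p := (m-1, 0)) (q := ((m-2)+1, 0)) (by simp [Hd])
        (by simp [Vd]) ?_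
      rw [hm1]
      simp [cellDist]
  have e2 : (((configF (k+1) m m).filter (fun S => ¬ Hd (m-1) ∈ S)).filter (fun S => ¬ Vd (m-2) 0 ∈ S)).filter
        (fun S => Vd (m-2) 1 ∈ S)
      = (configF (k+1) m m).filter (fun S => Vd (m-2) 1 ∈ S) := by
    rw [Finset.filter_filter, Finset.filter_filter]
    apply Finset.filter_congr
    intro S hS
    constructor
    · rintro ⟨h1, h2, h3⟩; exact h3
    · intro h3
      refine ⟨fun hHS => ?_, fun hVS => ?_, h3⟩
      · refine not_both' hS hHS h3 hne1 (p := (m-1, 1)) (q := ((m-2)+1, 1)) (by simp [Hd])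
          (by simp [Vd]) ?_
        rw [hm1]
        simp [cellDist]
      · refine not_both' hS hVS h3 hne2 (p := (m-2, 0)) (q := (m-2, 1)) (by simp [Vd])
          (by simp [Vd]) ?_
        simp [cellDist]
  have e3 : (((configF (k+1) m m).filter (fun S => ¬ Hd (m-1) ∈ S)).filter (fun S => ¬ Vd (m-2) 0 ∈ S)).filter
        (fun S => ¬ Vd (m-2) 1 ∈ S)
      = configF (k+1) (m-1) (m-1) := by
    rw [Finset.filter_filter, Finset.filter_filter,
      ← configF_filter_sub (by omega : m - 1 ≤ m) (by omega : m - 1 ≤ m)]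
    apply Finset.filter_congr
    intro S hS
    have hSsub := (mem_configF.mp hS).1
    constructor
    · rintro ⟨h1, h2, h3⟩ x hx
      by_contra hns
      rcases classify1 hm (hSsub hx) hns with rfl | rfl | rfl
      · exact h1 hx
      · exact h2 hx
      · exact h3 hx
    · intro hall
      refine ⟨fun h => ?_, fun h => ?_, fun h => ?_⟩
      · have := mem_cellsF.mp (hall _ h (show ((m-1 : ℕ), (0:ℕ)) ∈ Hd (m-1) by simp [Hd]))
        simp at this
        try omega
      · have := mem_cellsF.mp (hall _ h (show ((m-2)+1, (0:ℕ)) ∈ Vd (m-2) 0 by simp [Vd]))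
        simp at this
        try omega
      · have := mem_cellsF.mp (hall _ h (show ((m-2)+1, (1:ℕ)) ∈ Vd (m-2) 1 by simp [Vd]))
        simp at this
        try omega
  have c1 : ((configF (k+1) m m).filter (fun S => Hd (m-1) ∈ S)).card = Ncfg k (m-2) (m-2) :=
    card_contains (by omega) (by omega) hH (fun x hx => compat_H hm hx)
  have c2 : ((configF (k+1) m m).filter (fun S => Vd (m-2) 0 ∈ S)).card = Ncfg k (m-3) (m-2) :=
    card_contains (by omega) (by omega) hV0 (fun x hx => compat_V0 hm hx)
  have c3 : ((configF (k+1) m m).filter (fun S => Vd (m-2) 1 ∈ S)).card = Ncfg k (m-2) (m-3) :=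
    card_contains (by omega) (by omega) hV1 (fun x hx => compat_V1 hm hx)
  rw [e1] at s2
  rw [e2, e3] at s3
  rw [c1] at s1
  rw [c2] at s2
  rw [c3] at s3
  simp only [Ncfg] at s1 s2 s3 ⊢
  omega

lemma Ncfg0 (a b : ℕ) : Ncfg 0 a b = 1 := by
  unfold Ncfg configF
  rw [Finset.powersetCard_zero, Finset.filter_singleton, if_pos]
  · exact Finset.card_singleton _
  · intro x hx
    exact absurd hx (Finset.notMem_empty x)

def f1 (m : ℕ) : ℕ := 3*m - 2
def f1p (m : ℕ) : ℕ := 2*m + (m-1)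
def f2 (m : ℕ) : ℕ :=
  Nat.choose (m-1) 2 + 6 * Nat.choose (m-2) 2 + 2 * Nat.choose (m-3) 2
def f2p (m : ℕ) : ℕ :=
  3 * Nat.choose (m-1) 2 + 5 * Nat.choose (m-2) 2 + Nat.choose (m-3) 2
def f3 (m : ℕ) : ℕ :=
  Nat.choose (m-2) 3 + 12 * Nat.choose (m-3) 3 + 12 * Nat.choose (m-4) 3
    + 2 * Nat.choose (m-5) 3

lemma pas2 (n : ℕ) : Nat.choose (n+1) 2 = Nat.choose n 2 + n := by
  rw [Nat.choose_succ_succ, Nat.choose_one_right, Nat.add_comm]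

lemma pas3 (n : ℕ) : Nat.choose (n+1) 3 = Nat.choose n 3 + Nat.choose n 2 := by
  rw [Nat.choose_succ_succ, Nat.add_comm]

lemma A2 {m : ℕ} (h : 5 ≤ m) : f2 (m-1) + f1 (m-2) + f1p (m-3) + f1p (m-3) = f2 m := by
  rcases le_or_gt 8 m with h8 | h8
  · obtain ⟨t, rfl⟩ : ∃ t, m = t + 8 := ⟨m - 8, by omega⟩
    simp only [f1, f1p, f2]
    simp only [show t+4-1 = t+3 from by omega, show t+4-2 = t+2 from by omega, show t+4-3 = t+1 from by omega, show t+4-4 = t+0 from by omega, show t+5-1 = t+4 from by omega, show t+5-2 = t+3 from by omega, show t+5-3 = t+2 from by omega, show t+5-4 = t+1 from by omega, show t+5-5 = t+0 from by omega, show t+6-1 = t+5 from by omega, show t+6-2 = t+4 from by omega, show t+6-3 = t+3 from by omega, show t+6-4 = t+2 from by omega, show t+6-5 = t+1 from by omega, show t+7-1 = t+6 from by omega, show t+7-2 = t+5 from by omega, show t+7-3 = t+4 from by omega, show t+7-4 = t+3 from by omega, show t+7-5 = t+2 from by omega, show t+8-1 = t+7 from by omega, show t+8-2 = t+6 from by omega,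 show t+8-3 = t+5 from by omega, show t+8-4 = t+4 from by omega, show t+8-5 = t+3 from by omega, show 3*(t+6)-2 = 3*t+16 from by omega]
    have q1 := pas2 (t+3); have q2 := pas2 (t+4); have q3 := pas2 (t+5)
    have q4 := pas2 (t+6); have q5 := pas2 (t+7)
    norm_num at q1 q2 q3 q4 q5
    linarith
  · interval_cases m <;> decide

lemma A2p {m : ℕ} (h : 5 ≤ m) : f2 m + f1p (m-2) = f2p m := by
  rcases le_or_gt 8 m with h8 | h8
  · obtain ⟨t, rfl⟩ : ∃ t, m = t + 8 := ⟨m - 8, by omega⟩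
    simp only [f1p, f2, f2p]
    simp only [show t+4-1 = t+3 from by omega, show t+4-2 = t+2 from by omega, show t+4-3 = t+1 from by omega, show t+4-4 = t+0 from by omega, show t+5-1 = t+4 from by omega, show t+5-2 = t+3 from by omega, show t+5-3 = t+2 from by omega, show t+5-4 = t+1 from by omega, show t+5-5 = t+0 from by omega, show t+6-1 = t+5 from by omega, show t+6-2 = t+4 from by omega, show t+6-3 = t+3 from by omega, show t+6-4 = t+2 from by omega, show t+6-5 = t+1 from by omega, show t+7-1 = t+6 from by omega, show t+7-2 = t+5 from by omega, show t+7-3 = t+4 from by omega, show t+7-4 = t+3 from by omega, show t+7-5 = t+2 from by omega, show t+8-1 = t+7 from by omega, show t+8-2 = t+6 from by omega, show t+8-3 = t+5 from by omega, show t+8-4 = t+4 from by omega, show t+8-5 = t+3 from by omega]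
    have q1 := pas2 (t+5); have q2 := pas2 (t+6); have q3 := pas2 (t+7)
    norm_num at q1 q2 q3
    linarith
  · interval_cases m <;> decide

lemma A3 {m : ℕ} (h : 5 ≤ m) : f3 (m-1) + f2 (m-2) + f2p (m-3) + f2p (m-3) = f3 m := by
  rcases le_or_gt 8 m with h8 | h8
  · obtain ⟨t, rfl⟩ : ∃ t, m = t + 8 := ⟨m - 8, by omega⟩
    simp only [f2, f2p, f3]
    simp only [show t+4-1 = t+3 from by omega, show t+4-2 = t+2 from by omega, show t+4-3 = t+1 from by omega, show t+4-4 = t+0 from by omega, show t+5-1 = t+4 from by omega, show t+5-2 = t+3 from by omega, show t+5-3 = t+2 from by omega, show t+5-4 = t+1 from by omega, show t+5-5 = t+0 from by omega, show t+6-1 = t+5 from by omega, show t+6-2 = t+4 from by omega, show t+6-3 = t+3 from by omega, show t+6-4 = t+2 from by omega, show t+6-5 = t+1 from by omega, show t+7-1 = t+6 from by omega, show t+7-2 = t+5 from by omega, show t+7-3 = t+4 from by omega, show t+7-4 = t+3 from by omega, show t+7-5 = t+2 from by omega, show t+8-1 = t+7 from by omega, show t+8-2 = t+6 from by omega, show t+8-3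 = t+5 from by omega, show t+8-4 = t+4 from by omega, show t+8-5 = t+3 from by omega]
    have q1 := pas2 (t+2); have q2 := pas2 (t+3); have q3 := pas2 (t+4)
    have q4 := pas2 (t+5); have q5 := pas2 (t+6)
    have p1 := pas3 (t+2); have p2 := pas3 (t+3); have p3 := pas3 (t+4)
    have p4 := pas3 (t+5); have p5 := pas3 (t+6)
    norm_num at q1 q2 q3 q4 q5 p1 p2 p3 p4 p5
    linarith
  · interval_cases m <;> decide

lemma master : ∀ m : ℕ, Ncfg 1 m m = f1 m ∧ Ncfg 1 m (m+1) = f1p m ∧ Ncfg 1 (m+1) m = f1p m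
    ∧ Ncfg 2 m m = f2 m ∧ Ncfg 2 m (m+1) = f2p m ∧ Ncfg 2 (m+1) m = f2p m
    ∧ Ncfg 3 m m = f3 m := by
  intro m
  induction m using Nat.strong_induction_on with
  | _ m ih =>
    rcases le_or_gt m 4 with hm | hm
    · interval_cases m <;> exact (by decide)
    · have h5 : 5 ≤ m := hm
      obtain ⟨ih1a, ih1b, ih1c, ih1d, ih1e, ih1f, ih1g⟩ := ih (m-1) (by omega)
      obtain ⟨ih2a, ih2b, ih2c, ih2d, ih2e, ih2f, ih2g⟩ := ih (m-2) (by omega)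
      obtain ⟨ih3a, ih3b, ih3c, ih3d, ih3e, ih3f, ih3g⟩ := ih (m-3) (by omega)
      rw [show m-2+1 = m-1 from by omega] at ih2b ih2c ih2e ih2f
      rw [show m-3+1 = m-2 from by omega] at ih3b ih3c ih3e ih3f
      have hr1 := R1 (k := 0) (show 2 ≤ m by omega)
      have hr1' := R1 (k := 1) (show 2 ≤ m by omega)
      have hr1'' := R1 (k := 2) (show 2 ≤ m by omega)
      have hr2 := R2 (k := 0) (a := m) (show 1 ≤ m by omega)
      have hr2' := R2' (k := 0) (a := m) (show 1 ≤ m by omega)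
      have hr2b := R2 (k := 1) (a := m) (show 1 ≤ m by omega)
      have hr2b' := R2' (k := 1) (a := m) (show 1 ≤ m by omega)
      norm_num at hr1 hr1' hr1'' hr2 hr2' hr2b hr2b'
      have g1 : Ncfg 1 m m = f1 m := by
        rw [hr1, ih1a]
        simp only [Ncfg0, f1]
        omega
      have g2 : Ncfg 1 m (m+1) = f1p m := by
        rw [hr2, g1]
        simp only [Ncfg0, f1, f1p]
        omega
      have g3 : Ncfg 1 (m+1) m = f1p m := by
        rw [hr2', g1]
        simp only [Ncfg0, f1, f1p]
        omega
      have g4 : Ncfg 2 m m = f2 m := by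
        rw [hr1', ih1d, ih2a, ih3b, ih3c]
        exact A2 h5
      have g5 : Ncfg 2 m (m+1) = f2p m := by
        rw [hr2b, g4, ih2c]
        exact A2p h5
      have g6 : Ncfg 2 (m+1) m = f2p m := by
        rw [hr2b', g4, ih2b]
        exact A2p h5
      have g7 : Ncfg 3 m m = f3 m := by
        rw [hr1'', ih1g, ih2d, ih3e, ih3f]
        exact A3 h5
      exact ⟨g1, g2, g3, g4, g5, g6, g7⟩

theorem nbD_col2_three (r : ℕ) :
    nbD r 2 3 = Nat.choose (r - 2) 3 + 12 * Nat.choose (r - 3) 3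
      + 12 * Nat.choose (r - 4) 3 + 2 * Nat.choose (r - 5) 3 := by
  rw [nbD_eq_Ncfg, (master r).2.2.2.2.2.2]
  rfl
end

section
/- For every natural number r, the number of ways to place 3 pairwise non-bonding dominoes on the r×3 board is D(r,3,3) = 12·C(r−1,3) + 36·C(r−2,3) + 50·C(r−3,3) + 24·C(r−4,3) + 3·C(r−5,3), where C(n,k) denotes the binomial coefficient (taken to be 0 when n < k). -/
open Finset

namespace NB3

def box2 (m : ℕ) : Finset (ℕ × ℕ) := range m ×ˢ range m

def box (m : ℕ) : Finset (ℕ × ℕ × ℕ) := range m ×ˢ range m ×ˢ range m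

lemma mem_box2 {m : ℕ} {x : ℕ × ℕ} : x ∈ box2 m ↔ x.1 < m ∧ x.2 < m := by
  simp [box2, Finset.mem_product]

lemma mem_box {m : ℕ} {x : ℕ × ℕ × ℕ} :
    x ∈ box m ↔ x.1 < m ∧ x.2.1 < m ∧ x.2.2 < m := by
  simp [box, Finset.mem_product]

lemma choose2_succ (n : ℕ) : Nat.choose (n+1) 2 = Nat.choose n 2 + n := by
  rw [show (2:ℕ) = 1+1 from rfl, Nat.choose_succ_succ n 1, Nat.choose_one_right]
  simp [Nat.succ_eq_add_one]
  omega

lemma choose3_succ (n : ℕ) : Nat.choose (n+1) 3 = Nat.choose n 3 + Nat.choose n 2 := by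
  rw [show (3:ℕ) = 2+1 from rfl, Nat.choose_succ_succ n 2]
  simp [Nat.succ_eq_add_one]
  omega

/-- two-dimensional count: pairs (i,j) with i+a ≤ j and j+b ≤ u. -/
lemma cnt2 (a b : ℕ) : ∀ u : ℕ,
    ((box2 (u+1)).filter (fun p => p.1 + a ≤ p.2 ∧ p.2 + b ≤ u)).card
      = Nat.choose (u + 2 - (a + b)) 2 := by
  intro u
  induction u with
  | zero =>
    rw [show (box2 1) = {((0:ℕ),(0:ℕ))} by decide, Finset.filter_singleton]
    split_ifs with h
    · have : a + b = 0 := by omega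
      rw [this]
      simp
    · have h2 : 2 - (a + b) ≤ 1 := by omega
      rw [Finset.card_empty, Nat.choose_eq_zero_of_lt (by omega)]
  | succ u ih =>
    have hun : (box2 (u+2)).filter (fun p => p.1+a ≤ p.2 ∧ p.2+b ≤ u+1)
        = ((box2 (u+1)).filter (fun p => p.1+a ≤ p.2 ∧ p.2+b ≤ u)) ∪
          ((box2 (u+2)).filter (fun p => p.1+a ≤ p.2 ∧ p.2+b = u+1)) := by
      ext x
      simp only [Finset.mem_filter, Finset.mem_union, mem_box2]
      omega
    have hdis : Disjoint ((box2 (u+1)).filter (fun p => p.1+a ≤ p.2 ∧ p.2+b ≤ u))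
        ((box2 (u+2)).filter (fun p => p.1+a ≤ p.2 ∧ p.2+b = u+1)) := by
      rw [Finset.disjoint_left]
      intro x hx hy
      simp only [Finset.mem_filter, mem_box2] at hx hy
      omega
    have hlayer : ((box2 (u+2)).filter (fun p => p.1+a ≤ p.2 ∧ p.2+b = u+1)).card
        = u+2-(a+b) := by
      rcases le_or_gt b (u+1) with hb | hb
      · rw [show u+2-(a+b) = (range (u+2-(a+b))).card from (Finset.card_range _).symm]
        apply Finset.card_bij' (i := fun (p : ℕ × ℕ) _ => p.1)
          (j := fun (i : ℕ) _ => ((i, u+1-b) : ℕ × ℕ))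
        · intro p hp
          simp only [Finset.mem_filter, mem_box2] at hp
          simp only [Finset.mem_range]
          omega
        · intro i hi
          simp only [Finset.mem_range] at hi
          simp only [Finset.mem_filter, mem_box2]
          omega
        · intro p hp
          simp only [Finset.mem_filter, mem_box2] at hp
          obtain ⟨p1, p2⟩ := p
          simp at hp
          simp only [Prod.mk.injEq, true_and]
          omega
        · intro i hi
          rfl
      · have he : ((box2 (u+2)).filter (fun p => p.1+a ≤ p.2 ∧ p.2+b = u+1)) = ∅ := by
          apply Finset.eq_empty_of_forall_notMem
          intro x hx
          simp only [Finset.mem_filter, mem_box2] at hx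
          omega
        rw [he]
        simp only [Finset.card_empty]
        omega
    rw [hun, Finset.card_union_of_disjoint hdis, ih, hlayer]
    rcases le_or_gt (a+b) (u+2) with h | h
    · rw [show u+1+2-(a+b) = (u+2-(a+b))+1 by omega, choose2_succ]
    · rw [show u+2-(a+b) = 0 by omega, show u+1+2-(a+b) = u+3-(a+b) by omega]
      rw [Nat.choose_eq_zero_of_lt (by omega), Nat.choose_eq_zero_of_lt (by omega)]

/-- three-dimensional count without the 1-3 constraint -/
lemma cnt0 (a b h : ℕ) (hh : 1 ≤ h) : ∀ r : ℕ,
    ((box r).filter (fun x => x.1 + a ≤ x.2.1 ∧ x.2.1 + b ≤ x.2.2 ∧ x.2.2 + h ≤ r)).card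
      = Nat.choose (r + 3 - (h + a + b)) 3 := by
  intro r
  induction r with
  | zero =>
    rw [show box 0 = ∅ by simp [box]]
    rw [Finset.filter_empty, Finset.card_empty, Nat.choose_eq_zero_of_lt (by omega)]
  | succ r ih =>
    have hun : (box (r+1)).filter (fun x => x.1 + a ≤ x.2.1 ∧ x.2.1 + b ≤ x.2.2 ∧ x.2.2 + h ≤ r+1)
        = ((box r).filter (fun x => x.1 + a ≤ x.2.1 ∧ x.2.1 + b ≤ x.2.2 ∧ x.2.2 + h ≤ r)) ∪
          ((box (r+1)).filter (fun x => x.1 + a ≤ x.2.1 ∧ x.2.1 + b ≤ x.2.2 ∧ x.2.2 + h = r+1)) := by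
      ext x
      simp only [Finset.mem_filter, Finset.mem_union, mem_box]
      omega
    have hdis : Disjoint
        ((box r).filter (fun x => x.1 + a ≤ x.2.1 ∧ x.2.1 + b ≤ x.2.2 ∧ x.2.2 + h ≤ r))
        ((box (r+1)).filter (fun x => x.1 + a ≤ x.2.1 ∧ x.2.1 + b ≤ x.2.2 ∧ x.2.2 + h = r+1)) := by
      rw [Finset.disjoint_left]
      intro x hx hy
      simp only [Finset.mem_filter, mem_box] at hx hy
      omega
    have hlayer : ((box (r+1)).filter
        (fun x => x.1 + a ≤ x.2.1 ∧ x.2.1 + b ≤ x.2.2 ∧ x.2.2 + h = r+1)).card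
        = Nat.choose (r + 3 - (h + a + b)) 2 := by
      rcases le_or_gt h (r+1) with hle | hlt
      · have hbij : ((box (r+1)).filter
            (fun x => x.1 + a ≤ x.2.1 ∧ x.2.1 + b ≤ x.2.2 ∧ x.2.2 + h = r+1)).card
            = ((box2 (r+1-h+1)).filter (fun p => p.1 + a ≤ p.2 ∧ p.2 + b ≤ r+1-h)).card := by
          apply Finset.card_bij' (i := fun (x : ℕ × ℕ × ℕ) _ => (x.1, x.2.1))
            (j := fun (p : ℕ × ℕ) _ => ((p.1, p.2, r+1-h) : ℕ × ℕ × ℕ))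
          · intro x hx
            simp only [Finset.mem_filter, mem_box] at hx
            simp only [Finset.mem_filter, mem_box2]
            omega
          · intro p hp
            simp only [Finset.mem_filter, mem_box2] at hp
            simp only [Finset.mem_filter, mem_box]
            omega
          · intro x hx
            simp only [Finset.mem_filter, mem_box] at hx
            obtain ⟨x1, x2, x3⟩ := x
            simp only [Prod.mk.injEq, true_and] at hx ⊢
            omega
          · intro p hp
            rfl
        rw [hbij, cnt2, show r+1-h+2-(a+b) = r+3-(h+a+b) by omega]
      · have he : ((box (r+1)).filter
            (fun x => x.1 + a ≤ x.2.1 ∧ x.2.1 + b ≤ x.2.2 ∧ x.2.2 + h = r+1)) = ∅ := by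
          apply Finset.eq_empty_of_forall_notMem
          intro x hx
          simp only [Finset.mem_filter, mem_box] at hx
          omega
        rw [he, Finset.card_empty, Nat.choose_eq_zero_of_lt (by omega)]
    rw [hun, Finset.card_union_of_disjoint hdis, ih, hlayer]
    rcases le_or_gt (h+a+b) (r+3) with hle | hlt
    · rw [show r+1+3-(h+a+b) = (r+3-(h+a+b))+1 by omega, choose3_succ]
    · rw [show r+3-(h+a+b) = 0 by omega, show r+1+3-(h+a+b) = 0 by omega]
      simp

/-- count of the exceptional layers: triples with fixed difference x.2.2 = x.1 + d -/
lemma cntE (a b h d : ℕ) (hh : 1 ≤ h) : ∀ r : ℕ,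
    ((box r).filter (fun x => x.1 + a ≤ x.2.1 ∧ x.2.1 + b ≤ x.2.2 ∧ x.2.2 = x.1 + d
        ∧ x.2.2 + h ≤ r)).card
      = (d + 1 - (a + b)) * (r + 1 - (d + h)) := by
  intro r
  induction r with
  | zero =>
    rw [show box 0 = ∅ by simp [box]]
    rw [Finset.filter_empty, Finset.card_empty, show 1 - (d+h) = 0 by omega, Nat.mul_zero]
  | succ r ih =>
    have hun : (box (r+1)).filter
        (fun x => x.1 + a ≤ x.2.1 ∧ x.2.1 + b ≤ x.2.2 ∧ x.2.2 = x.1 + d ∧ x.2.2 + h ≤ r+1)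
        = ((box r).filter
            (fun x => x.1 + a ≤ x.2.1 ∧ x.2.1 + b ≤ x.2.2 ∧ x.2.2 = x.1 + d ∧ x.2.2 + h ≤ r)) ∪
          ((box (r+1)).filter
            (fun x => x.1 + a ≤ x.2.1 ∧ x.2.1 + b ≤ x.2.2 ∧ x.2.2 = x.1 + d ∧ x.2.2 + h = r+1)) := by
      ext x
      simp only [Finset.mem_filter, Finset.mem_union, mem_box]
      omega
    have hdis : Disjoint
        ((box r).filter
            (fun x => x.1 + a ≤ x.2.1 ∧ x.2.1 + b ≤ x.2.2 ∧ x.2.2 = x.1 + d ∧ x.2.2 + h ≤ r))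
        ((box (r+1)).filter
            (fun x => x.1 + a ≤ x.2.1 ∧ x.2.1 + b ≤ x.2.2 ∧ x.2.2 = x.1 + d ∧ x.2.2 + h = r+1)) := by
      rw [Finset.disjoint_left]
      intro x hx hy
      simp only [Finset.mem_filter, mem_box] at hx hy
      omega
    rw [hun, Finset.card_union_of_disjoint hdis, ih]
    rcases le_or_gt (d+h) (r+1) with hle | hlt
    · have hlayer : ((box (r+1)).filter
          (fun x => x.1 + a ≤ x.2.1 ∧ x.2.1 + b ≤ x.2.2 ∧ x.2.2 = x.1 + d ∧ x.2.2 + h = r+1)).card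
          = d + 1 - (a + b) := by
        rw [show d + 1 - (a+b) = (range (d + 1 - (a+b))).card from (Finset.card_range _).symm]
        apply Finset.card_bij' (i := fun (x : ℕ × ℕ × ℕ) _ => x.2.1 - (x.1 + a))
          (j := fun (jj : ℕ) _ => ((r+1-h-d, r+1-h-d+a+jj, r+1-h) : ℕ × ℕ × ℕ))
        · intro x hx
          simp only [Finset.mem_filter, mem_box] at hx
          simp only [Finset.mem_range]
          omega
        · intro jj hjj
          simp only [Finset.mem_range] at hjj
          simp only [Finset.mem_filter, mem_box]
          omega
        · intro x hx
          simp only [Finset.mem_filter, mem_box] at hx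
          obtain ⟨x1, x2, x3⟩ := x
          simp only at hx
          simp only [Prod.mk.injEq]
          omega
        · intro jj hjj
          simp only [Finset.mem_range] at hjj
          simp only
          omega
      rw [hlayer, show r+1+1-(d+h) = (r+1-(d+h))+1 by omega, Nat.mul_succ]
    · have he : ((box (r+1)).filter
          (fun x => x.1 + a ≤ x.2.1 ∧ x.2.1 + b ≤ x.2.2 ∧ x.2.2 = x.1 + d ∧ x.2.2 + h = r+1)) = ∅ := by
        apply Finset.eq_empty_of_forall_notMem
        intro x hx
        simp only [Finset.mem_filter, mem_box] at hx
        omega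
      rw [he, Finset.card_empty, show r+1+1-(d+h) = 0 by omega, show r+1-(d+h) = 0 by omega]
      simp

/-- the full three-dimensional count, additively stated -/
lemma cntC (a b c h r : ℕ) (hc : c ≤ a + b + 2) (hh : 1 ≤ h) :
    ((box r).filter (fun x => x.1 + a ≤ x.2.1 ∧ x.2.1 + b ≤ x.2.2 ∧ x.1 + c ≤ x.2.2
        ∧ x.2.2 + h ≤ r)).card
      + ((if a+b+1 ≤ c then r + 1 - (h+a+b) else 0)
        + (if a+b+2 ≤ c then 2 * (r - (h+a+b)) else 0))
      = Nat.choose (r + 3 - (h + a + b)) 3 := by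
  rcases le_or_gt c (a+b) with h0 | h1
  · rw [if_neg (by omega), if_neg (by omega)]
    rw [show ((box r).filter (fun x => x.1 + a ≤ x.2.1 ∧ x.2.1 + b ≤ x.2.2 ∧ x.1 + c ≤ x.2.2
        ∧ x.2.2 + h ≤ r))
      = ((box r).filter (fun x => x.1 + a ≤ x.2.1 ∧ x.2.1 + b ≤ x.2.2 ∧ x.2.2 + h ≤ r)) by
        apply Finset.filter_congr
        intro x hx
        omega]
    rw [cnt0 a b h hh r]
    omega
  rcases le_or_gt c (a+b+1) with h2 | h3
  · -- c = a+b+1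
    have hc1 : c = a+b+1 := by omega
    subst hc1
    rw [if_pos (by omega), if_neg (by omega)]
    have hun : ((box r).filter (fun x => x.1 + a ≤ x.2.1 ∧ x.2.1 + b ≤ x.2.2 ∧ x.2.2 + h ≤ r))
        = ((box r).filter (fun x => x.1 + a ≤ x.2.1 ∧ x.2.1 + b ≤ x.2.2 ∧ x.1 + (a+b+1) ≤ x.2.2
            ∧ x.2.2 + h ≤ r)) ∪
          ((box r).filter (fun x => x.1 + a ≤ x.2.1 ∧ x.2.1 + b ≤ x.2.2 ∧ x.2.2 = x.1 + (a+b)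
            ∧ x.2.2 + h ≤ r)) := by
      ext x
      simp only [Finset.mem_filter, Finset.mem_union, mem_box]
      omega
    have hdis : Disjoint
        ((box r).filter (fun x => x.1 + a ≤ x.2.1 ∧ x.2.1 + b ≤ x.2.2 ∧ x.1 + (a+b+1) ≤ x.2.2
            ∧ x.2.2 + h ≤ r))
        ((box r).filter (fun x => x.1 + a ≤ x.2.1 ∧ x.2.1 + b ≤ x.2.2 ∧ x.2.2 = x.1 + (a+b)
            ∧ x.2.2 + h ≤ r)) := by
      rw [Finset.disjoint_left]
      intro x hx hy
      simp only [Finset.mem_filter, mem_box] at hx hy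
      omega
    have := cnt0 a b h hh r
    rw [hun, Finset.card_union_of_disjoint hdis, cntE a b h (a+b) hh r] at this
    rw [show a+b+1-(a+b) = 1 by omega, one_mul] at this
    rw [show a+b+(h:ℕ) = h+a+b by ring] at this
    omega
  · -- c = a+b+2
    have hc2 : c = a+b+2 := by omega
    subst hc2
    rw [if_pos (by omega), if_pos (by omega)]
    have hun : ((box r).filter (fun x => x.1 + a ≤ x.2.1 ∧ x.2.1 + b ≤ x.2.2 ∧ x.2.2 + h ≤ r))
        = (((box r).filter (fun x => x.1 + a ≤ x.2.1 ∧ x.2.1 + b ≤ x.2.2 ∧ x.1 + (a+b+2) ≤ x.2.2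
            ∧ x.2.2 + h ≤ r)) ∪
          ((box r).filter (fun x => x.1 + a ≤ x.2.1 ∧ x.2.1 + b ≤ x.2.2 ∧ x.2.2 = x.1 + (a+b)
            ∧ x.2.2 + h ≤ r))) ∪
          ((box r).filter (fun x => x.1 + a ≤ x.2.1 ∧ x.2.1 + b ≤ x.2.2 ∧ x.2.2 = x.1 + (a+b+1)
            ∧ x.2.2 + h ≤ r)) := by
      ext x
      simp only [Finset.mem_filter, Finset.mem_union, mem_box]
      omega
    have hdis1 : Disjoint
        ((box r).filter (fun x => x.1 + a ≤ x.2.1 ∧ x.2.1 + b ≤ x.2.2 ∧ x.1 + (a+b+2) ≤ x.2.2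
            ∧ x.2.2 + h ≤ r))
        ((box r).filter (fun x => x.1 + a ≤ x.2.1 ∧ x.2.1 + b ≤ x.2.2 ∧ x.2.2 = x.1 + (a+b)
            ∧ x.2.2 + h ≤ r)) := by
      rw [Finset.disjoint_left]
      intro x hx hy
      simp only [Finset.mem_filter, mem_box] at hx hy
      omega
    have hdis2 : Disjoint
        ((((box r).filter (fun x => x.1 + a ≤ x.2.1 ∧ x.2.1 + b ≤ x.2.2 ∧ x.1 + (a+b+2) ≤ x.2.2
            ∧ x.2.2 + h ≤ r)) ∪
          ((box r).filter (fun x => x.1 + a ≤ x.2.1 ∧ x.2.1 + b ≤ x.2.2 ∧ x.2.2 = x.1 + (a+b)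
            ∧ x.2.2 + h ≤ r))))
        ((box r).filter (fun x => x.1 + a ≤ x.2.1 ∧ x.2.1 + b ≤ x.2.2 ∧ x.2.2 = x.1 + (a+b+1)
            ∧ x.2.2 + h ≤ r)) := by
      rw [Finset.disjoint_left]
      intro x hx hy
      simp only [Finset.mem_filter, Finset.mem_union, mem_box] at hx hy
      omega
    have := cnt0 a b h hh r
    rw [hun, Finset.card_union_of_disjoint hdis2, Finset.card_union_of_disjoint hdis1,
      cntE a b h (a+b) hh r, cntE a b h (a+b+1) hh r] at this
    rw [show a+b+1-(a+b) = 1 by omega, one_mul, show a+b+1+1-(a+b) = 2 by omega] at this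
    rw [show a+b+(h:ℕ) = h+a+b by ring, show a+b+1+h = (h+a+b)+1 by ring] at this
    have h2 : r + 1 - ((h+a+b)+1) = r - (h+a+b) := by omega
    rw [h2] at this
    omega

end NB3

namespace NB3

/-- height of a domino type -/
def ht (t : ℕ) : ℕ := if t < 2 then 1 else 2

lemma ht_pos (t : ℕ) : 1 ≤ ht t := by unfold ht; split <;> omega

/-- the minimal row offset table -/
def ee (t u : ℕ) : ℕ :=
  if t = 0 then (if u = 4 then 1 else 2)
  else if t = 1 then (if u = 2 then 1 else 2)
  else if t = 2 then (if u = 0 then 3 else if u = 2 then 3 else if u = 4 then 0 else 2)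
  else if t = 3 then (if u = 0 then 3 else if u = 1 then 3 else if u = 3 then 3 else 2)
  else (if u = 1 then 3 else if u = 2 then 1 else if u = 3 then 2 else if u = 4 then 3 else 2)

/-- cells of a domino of type `t` with top row `i` -/
def cellsT (t i : ℕ) : Finset (ℕ × ℕ) :=
  if t = 0 then {(i,0),(i,1)}
  else if t = 1 then {(i,1),(i,2)}
  else if t = 2 then {(i,0),(i+1,0)}
  else if t = 3 then {(i,1),(i+1,1)}
  else {(i,2),(i+1,2)}

/-- cells of the domino with code `n` -/
def cells (n : ℕ) : Finset (ℕ × ℕ) := cellsT (n % 5) (n / 5)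

def valid (r n : ℕ) : Prop := n / 5 + ht (n % 5) ≤ r

instance (r n : ℕ) : Decidable (valid r n) := by unfold valid; infer_instance

def comp (m n : ℕ) : Prop := NonBonding (cells m) (cells n)

instance (m n : ℕ) : Decidable (comp m n) := by unfold comp NonBonding; infer_instance

lemma cells_eq (t i : ℕ) (ht5 : t < 5) : cells (5 * i + t) = cellsT t i := by
  unfold cells
  rw [show (5 * i + t) % 5 = t by omega, show (5 * i + t) / 5 = i by omega]

set_option maxHeartbeats 2000000 in
lemma pair_aux : ∀ t u i j : ℕ, t < 5 → u < 5 →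
    ((5*i+t < 5*j+u ∧ comp (5*i+t) (5*j+u)) ↔ i + ee t u ≤ j) := by
  intro t u i j ht5 hu5
  unfold comp
  rw [cells_eq t i ht5, cells_eq u j hu5]
  interval_cases t <;> interval_cases u <;>
    (simp [cellsT, NonBonding, cellDist, ee]; omega)

lemma pair_iff (m n : ℕ) : (m < n ∧ comp m n) ↔ m / 5 + ee (m % 5) (n % 5) ≤ n / 5 := by
  have := pair_aux (m % 5) (n % 5) (m / 5) (n / 5) (by omega) (by omega)
  rwa [Nat.div_add_mod m 5, Nat.div_add_mod n 5] at this

lemma fpair {α : Type*} [DecidableEq α] (a b c d : α) :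
    ({a,b} : Finset α) = {c,d} ↔ (a = c ∧ b = d) ∨ (a = d ∧ b = c) := by
  rw [← Finset.coe_inj]
  simp only [Finset.coe_insert, Finset.coe_singleton]
  exact Set.pair_eq_pair_iff

lemma cellsT_inj : ∀ t u i j : ℕ, t < 5 → u < 5 → cellsT t i = cellsT u j → t = u ∧ i = j := by
  intro t u i j ht5 hu5 h
  interval_cases t <;> interval_cases u <;>
    (simp only [cellsT, if_true, if_false] at h <;> norm_num at h) <;>
    (rw [fpair] at h; simp only [Prod.mk.injEq] at h; omega)

lemma cells_inj {m n : ℕ} (h : cells m = cells n) : m = n := by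
  unfold cells at h
  have := cellsT_inj (m % 5) (n % 5) (m / 5) (n / 5) (by omega) (by omega) h
  omega

lemma valid_mk (t i r : ℕ) (ht5 : t < 5) (hb : i + ht t ≤ r) : valid r (5*i+t) := by
  unfold valid
  rw [show (5*i+t) % 5 = t by omega, show (5*i+t) / 5 = i by omega]
  exact hb

lemma build {r : ℕ} (t i : ℕ) (ht5 : t < 5) (hb : i + ht t ≤ r) (S : Finset (ℕ × ℕ))
    (hS : S = cellsT t i) : ∃ n, valid r n ∧ S = cells n :=
  ⟨5*i+t, valid_mk t i r ht5 hb, by rw [cells_eq t i ht5]; exact hS⟩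

lemma cellsT_0 (i : ℕ) : cellsT 0 i = {(i,0),(i,1)} := by simp [cellsT]
lemma cellsT_1 (i : ℕ) : cellsT 1 i = {(i,1),(i,2)} := by simp [cellsT]
lemma cellsT_2 (i : ℕ) : cellsT 2 i = {(i,0),(i+1,0)} := by simp [cellsT]
lemma cellsT_3 (i : ℕ) : cellsT 3 i = {(i,1),(i+1,1)} := by simp [cellsT]
lemma cellsT_4 (i : ℕ) : cellsT 4 i = {(i,2),(i+1,2)} := by simp [cellsT]

lemma isDomino_iff {r : ℕ} (S : Finset (ℕ × ℕ)) :
    IsDomino r 3 S ↔ ∃ n, valid r n ∧ S = cells n := by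
  constructor
  · rintro ⟨hcard, hbound, hdist⟩
    obtain ⟨p, q, hpq, rfl⟩ := Finset.card_eq_two.mp hcard
    obtain ⟨p1, p2⟩ := p
    obtain ⟨q1, q2⟩ := q
    have hd := hdist (p1, p2) (by simp) (q1, q2) (by simp) hpq
    have hb1 := hbound (p1, p2) (by simp)
    have hb2 := hbound (q1, q2) (by simp)
    simp only [cellDist] at hd
    simp only at hb1 hb2
    have hcases : (p1 = q1 ∧ (q2 = p2 + 1 ∨ p2 = q2 + 1)) ∨
        (p2 = q2 ∧ (q1 = p1 + 1 ∨ p1 = q1 + 1)) := by omega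
    rcases hcases with ⟨he, hor | hor⟩ | ⟨he, hor | hor⟩
    · rcases (by omega : p2 = 0 ∨ p2 = 1) with h0 | h0
      · exact build 0 p1 (by norm_num) (by simp [ht]; omega) _
          (by rw [cellsT_0]; subst he h0 hor; rfl)
      · exact build 1 p1 (by norm_num) (by simp [ht]; omega) _
          (by rw [cellsT_1]; subst he h0 hor; rfl)
    · rcases (by omega : q2 = 0 ∨ q2 = 1) with h0 | h0
      · exact build 0 q1 (by norm_num) (by simp [ht]; omega) _
          (by rw [cellsT_0]; subst he hor h0; exact Finset.pair_comm _ _)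
      · exact build 1 q1 (by norm_num) (by simp [ht]; omega) _
          (by rw [cellsT_1]; subst he hor h0; exact Finset.pair_comm _ _)
    · rcases (by omega : p2 = 0 ∨ p2 = 1 ∨ p2 = 2) with h0 | h0 | h0
      · exact build 2 p1 (by norm_num) (by simp [ht]; omega) _
          (by rw [cellsT_2]; subst hor h0; subst he; rfl)
      · exact build 3 p1 (by norm_num) (by simp [ht]; omega) _
          (by rw [cellsT_3]; subst hor h0; subst he; rfl)
      · exact build 4 p1 (by norm_num) (by simp [ht]; omega) _
          (by rw [cellsT_4]; subst hor h0; subst he; rfl)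
    · rcases (by omega : p2 = 0 ∨ p2 = 1 ∨ p2 = 2) with h0 | h0 | h0
      · exact build 2 q1 (by norm_num) (by simp [ht]; omega) _
          (by rw [cellsT_2]; subst hor h0; subst he; exact Finset.pair_comm _ _)
      · exact build 3 q1 (by norm_num) (by simp [ht]; omega) _
          (by rw [cellsT_3]; subst hor h0; subst he; exact Finset.pair_comm _ _)
      · exact build 4 q1 (by norm_num) (by simp [ht]; omega) _
          (by rw [cellsT_4]; subst hor h0; subst he; exact Finset.pair_comm _ _)
  · rintro ⟨n, hv, rfl⟩
    have h5 : n % 5 < 5 := by omega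
    have hv' : n / 5 + ht (n % 5) ≤ r := hv
    rw [show cells n = cellsT (n % 5) (n / 5) from rfl]
    set t := n % 5 with hts
    set i := n / 5 with his
    clear_value t i
    simp only [ht] at hv'
    refine ⟨?_, ?_, ?_⟩
    · interval_cases t <;>
        simp [cellsT_0, cellsT_1, cellsT_2, cellsT_3, cellsT_4, Prod.ext_iff]
    · intro p hp
      interval_cases t <;>
        simp only [cellsT_0, cellsT_1, cellsT_2, cellsT_3, cellsT_4,
          Finset.mem_insert, Finset.mem_singleton] at hp <;>
        (norm_num at hv') <;>
        rcases hp with h | h <;> subst h <;> constructor <;> simp <;> omega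
    · intro p hp q hq hne
      interval_cases t <;>
        simp only [cellsT_0, cellsT_1, cellsT_2, cellsT_3, cellsT_4,
          Finset.mem_insert, Finset.mem_singleton] at hp hq <;>
        rcases hp with h1 | h1 <;> rcases hq with h2 | h2 <;> subst h1 <;> subst h2 <;>
        first
          | exact absurd rfl hne
          | simp [cellDist]

lemma comp_symm {m n : ℕ} (h : comp m n) : comp n m := by
  intro p hp q hq
  have := h q hq p hp
  simp only [cellDist] at this ⊢
  omega

def Good (r : ℕ) (x : ℕ × ℕ × ℕ) : Prop :=
  valid r x.1 ∧ valid r x.2.1 ∧ valid r x.2.2 ∧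
  (x.1 < x.2.1 ∧ comp x.1 x.2.1) ∧ (x.2.1 < x.2.2 ∧ comp x.2.1 x.2.2) ∧
  (x.1 < x.2.2 ∧ comp x.1 x.2.2)

instance (r : ℕ) (x : ℕ × ℕ × ℕ) : Decidable (Good r x) := by unfold Good; infer_instance

def Tset (r : ℕ) : Finset (ℕ × ℕ × ℕ) := (box (5*r)).filter (Good r)

def Phi (x : ℕ × ℕ × ℕ) : Finset (Finset (ℕ × ℕ)) := {cells x.1, cells x.2.1, cells x.2.2}

lemma valid_lt {r n : ℕ} (h : valid r n) : n < 5*r := by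
  have h1 := ht_pos (n % 5)
  have h2 : n / 5 + ht (n % 5) ≤ r := h
  omega

lemma exists_sorted (r na nb nc : ℕ) (hva : valid r na) (hvb : valid r nb) (hvc : valid r nc)
    (hab : na ≠ nb) (hac : na ≠ nc) (hbc : nb ≠ nc)
    (cab : comp na nb) (cac : comp na nc) (cbc : comp nb nc) :
    ∃ x ∈ Tset r, Phi x = {cells na, cells nb, cells nc} := by
  have mk : ∀ x y z : ℕ, valid r x → valid r y → valid r z →
      x < y → y < z → comp x y → comp y z → comp x z →
      ({cells x, cells y, cells z} : Finset (Finset (ℕ × ℕ))) = {cells na, cells nb, cells nc} →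
      ∃ w ∈ Tset r, Phi w = {cells na, cells nb, cells nc} := by
    intro x y z hvx hvy hvz hxy hyz cxy cyz cxz hperm
    refine ⟨(x, y, z), Finset.mem_filter.mpr ⟨mem_box.mpr ⟨valid_lt hvx, valid_lt hvy, valid_lt hvz⟩,
      hvx, hvy, hvz, ⟨hxy, cxy⟩, ⟨hyz, cyz⟩, ⟨Nat.lt_trans hxy hyz, cxz⟩⟩, hperm⟩
  rcases Nat.lt_trichotomy na nb with h1 | h1 | h1
  · rcases Nat.lt_trichotomy nb nc with h2 | h2 | h2
    · exact mk na nb nc hva hvb hvc h1 h2 cab cbc cac rfl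
    · exact absurd h2 hbc
    · rcases Nat.lt_trichotomy na nc with h3 | h3 | h3
      · exact mk na nc nb hva hvc hvb h3 h2 cac (comp_symm cbc) cab
          (by ext s; simp [Finset.mem_insert]; tauto)
      · exact absurd h3 hac
      · exact mk nc na nb hvc hva hvb h3 h1 (comp_symm cac) cab (comp_symm cbc)
          (by ext s; simp [Finset.mem_insert]; tauto)
  · exact absurd h1 hab
  · rcases Nat.lt_trichotomy na nc with h2 | h2 | h2
    · exact mk nb na nc hvb hva hvc h1 h2 (comp_symm cab) cac cbc
        (by ext s; simp [Finset.mem_insert]; tauto)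
    · exact absurd h2 hac
    · rcases Nat.lt_trichotomy nb nc with h3 | h3 | h3
      · exact mk nb nc na hvb hvc hva h3 h2 cbc (comp_symm cac) (comp_symm cab)
          (by ext s; simp [Finset.mem_insert]; tauto)
      · exact absurd h3 hbc
      · exact mk nc nb na hvc hvb hva h3 h1 (comp_symm cbc) (comp_symm cab) (comp_symm cac)
          (by ext s; simp [Finset.mem_insert]; tauto)

lemma set_eq (r : ℕ) :
    {S : Finset (Finset (ℕ × ℕ)) | S.card = 3 ∧ (∀ x ∈ S, IsDomino r 3 x) ∧
      ∀ x ∈ S, ∀ y ∈ S, x ≠ y → NonBonding x y} = ↑((Tset r).image Phi) := by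
  ext S
  simp only [Set.mem_setOf_eq, Finset.coe_image, Set.mem_image, Finset.mem_coe]
  constructor
  · rintro ⟨h3, hdom, hnb⟩
    obtain ⟨A, B, C, hAB, hAC, hBC, rfl⟩ := Finset.card_eq_three.mp h3
    obtain ⟨na, hva, rfl⟩ := (isDomino_iff A).mp (hdom A (by simp))
    obtain ⟨nb, hvb, rfl⟩ := (isDomino_iff B).mp (hdom B (by simp))
    obtain ⟨nc, hvc, rfl⟩ := (isDomino_iff C).mp (hdom C (by simp))
    have hab : na ≠ nb := fun h => hAB (by rw [h])
    have hac : na ≠ nc := fun h => hAC (by rw [h])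
    have hbc : nb ≠ nc := fun h => hBC (by rw [h])
    have cab : comp na nb := hnb _ (by simp) _ (by simp) hAB
    have cac : comp na nc := hnb _ (by simp) _ (by simp) hAC
    have cbc : comp nb nc := hnb _ (by simp) _ (by simp) hBC
    obtain ⟨x, hx, hphi⟩ := exists_sorted r na nb nc hva hvb hvc hab hac hbc cab cac cbc
    exact ⟨x, hx, hphi⟩
  · rintro ⟨x, hx, rfl⟩
    obtain ⟨hbox, hvx, hvy, hvz, ⟨o1, c1⟩, ⟨o2, c2⟩, ⟨o3, c3⟩⟩ := Finset.mem_filter.mp hx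
    have ne1 : cells x.1 ≠ cells x.2.1 := fun h => by have := cells_inj h; omega
    have ne2 : cells x.1 ≠ cells x.2.2 := fun h => by have := cells_inj h; omega
    have ne3 : cells x.2.1 ≠ cells x.2.2 := fun h => by have := cells_inj h; omega
    refine ⟨Finset.card_eq_three.mpr ⟨_, _, _, ne1, ne2, ne3, rfl⟩, ?_, ?_⟩
    · intro y hy
      simp only [Phi, Finset.mem_insert, Finset.mem_singleton] at hy
      rcases hy with rfl | rfl | rfl
      · exact (isDomino_iff _).mpr ⟨x.1, hvx, rfl⟩
      · exact (isDomino_iff _).mpr ⟨x.2.1, hvy, rfl⟩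
      · exact (isDomino_iff _).mpr ⟨x.2.2, hvz, rfl⟩
    · intro u hu v hv hne
      simp only [Phi, Finset.mem_insert, Finset.mem_singleton] at hu hv
      rcases hu with rfl | rfl | rfl <;> rcases hv with rfl | rfl | rfl <;>
        first
          | exact absurd rfl hne
          | exact c1
          | exact c2
          | exact c3
          | exact comp_symm c1
          | exact comp_symm c2
          | exact comp_symm c3

lemma nbD_eq_card (r : ℕ) : nbD r 3 3 = (Tset r).card := by
  unfold nbD
  rw [set_eq r, Set.ncard_coe_finset]
  rw [Finset.card_image_of_injOn]
  intro x hx y hy hxy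
  obtain ⟨x1, x2, x3⟩ := x
  obtain ⟨y1, y2, y3⟩ := y
  obtain ⟨_, _, _, _, ⟨ox1, _⟩, ⟨ox2, _⟩, _⟩ := Finset.mem_filter.mp hx
  obtain ⟨_, _, _, _, ⟨oy1, _⟩, ⟨oy2, _⟩, _⟩ := Finset.mem_filter.mp hy
  simp only at ox1 ox2 oy1 oy2
  have m1 : cells x1 = cells y1 ∨ cells x1 = cells y2 ∨ cells x1 = cells y3 := by
    have : cells x1 ∈ Phi (y1, y2, y3) := by rw [← hxy]; simp [Phi]
    simpa [Phi] using this
  have m2 : cells x2 = cells y1 ∨ cells x2 = cells y2 ∨ cells x2 = cells y3 := by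
    have : cells x2 ∈ Phi (y1, y2, y3) := by rw [← hxy]; simp [Phi]
    simpa [Phi] using this
  have m3 : cells x3 = cells y1 ∨ cells x3 = cells y2 ∨ cells x3 = cells y3 := by
    have : cells x3 ∈ Phi (y1, y2, y3) := by rw [← hxy]; simp [Phi]
    simpa [Phi] using this
  have d1 : x1 = y1 ∨ x1 = y2 ∨ x1 = y3 := by
    rcases m1 with h | h | h
    exacts [Or.inl (cells_inj h), Or.inr (Or.inl (cells_inj h)), Or.inr (Or.inr (cells_inj h))]
  have d2 : x2 = y1 ∨ x2 = y2 ∨ x2 = y3 := by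
    rcases m2 with h | h | h
    exacts [Or.inl (cells_inj h), Or.inr (Or.inl (cells_inj h)), Or.inr (Or.inr (cells_inj h))]
  have d3 : x3 = y1 ∨ x3 = y2 ∨ x3 = y3 := by
    rcases m3 with h | h | h
    exacts [Or.inl (cells_inj h), Or.inr (Or.inl (cells_inj h)), Or.inr (Or.inr (cells_inj h))]
  simp only [Prod.mk.injEq]
  omega

def sv (t1 t2 t3 : ℕ) : ℕ := ht t3 + ee t1 t2 + ee t2 t3

def corrT (t1 t2 t3 r : ℕ) : ℕ :=
  (if ee t1 t2 + ee t2 t3 + 1 ≤ ee t1 t3 then r + 1 - sv t1 t2 t3 else 0) +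
  (if ee t1 t2 + ee t2 t3 + 2 ≤ ee t1 t3 then 2 * (r - sv t1 t2 t3) else 0)

lemma fact_ht_ee : ∀ t < 5, ∀ u < 5, ht t ≤ ee t u + ht u := by decide

lemma fact_tri : ∀ t1 < 5, ∀ t2 < 5, ∀ t3 < 5, ee t1 t3 ≤ ee t1 t2 + ee t2 t3 + 2 := by decide

lemma fiber_bij (r t1 t2 t3 : ℕ) (h1 : t1 < 5) (h2 : t2 < 5) (h3 : t3 < 5) :
    ((Tset r).filter (fun x => (x.1 % 5, x.2.1 % 5, x.2.2 % 5) = (t1, t2, t3))).card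
      = ((box r).filter (fun y => y.1 + ee t1 t2 ≤ y.2.1 ∧ y.2.1 + ee t2 t3 ≤ y.2.2 ∧
          y.1 + ee t1 t3 ≤ y.2.2 ∧ y.2.2 + ht t3 ≤ r ∧ y.2.1 + ht t2 ≤ r ∧
          y.1 + ht t1 ≤ r)).card := by
  apply Finset.card_bij' (i := fun (x : ℕ × ℕ × ℕ) _ => (x.1 / 5, x.2.1 / 5, x.2.2 / 5))
    (j := fun (y : ℕ × ℕ × ℕ) _ => (5 * y.1 + t1, 5 * y.2.1 + t2, 5 * y.2.2 + t3))
  · intro x hx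
    obtain ⟨hT, hmod⟩ := Finset.mem_filter.mp hx
    obtain ⟨hbox, hvx, hvy, hvz, ⟨o1, c1⟩, ⟨o2, c2⟩, ⟨o3, c3⟩⟩ := Finset.mem_filter.mp hT
    simp only [Prod.mk.injEq] at hmod
    obtain ⟨e1, e2, e3⟩ := hmod
    have p1 := (pair_iff x.1 x.2.1).mp ⟨o1, c1⟩
    have p2 := (pair_iff x.2.1 x.2.2).mp ⟨o2, c2⟩
    have p3 := (pair_iff x.1 x.2.2).mp ⟨o3, c3⟩
    rw [e1, e2] at p1
    rw [e2, e3] at p2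
    rw [e1, e3] at p3
    have q1 : x.1 / 5 + ht t1 ≤ r := by rw [← e1]; exact hvx
    have q2 : x.2.1 / 5 + ht t2 ≤ r := by rw [← e2]; exact hvy
    have q3 : x.2.2 / 5 + ht t3 ≤ r := by rw [← e3]; exact hvz
    have g1 := ht_pos t1
    have g2 := ht_pos t2
    have g3 := ht_pos t3
    have w1 : x.1 / 5 < r := by omega
    have w2 : x.2.1 / 5 < r := by omega
    have w3 : x.2.2 / 5 < r := by omega
    exact Finset.mem_filter.mpr ⟨mem_box.mpr ⟨w1, w2, w3⟩, p1, p2, p3, q3, q2, q1⟩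
  · intro y hy
    obtain ⟨hbox, b1, b2, b3, b4, b5, b6⟩ := Finset.mem_filter.mp hy
    have g1 := ht_pos t1
    have g2 := ht_pos t2
    have g3 := ht_pos t3
    have w1 : 5 * y.1 + t1 < 5 * r := by omega
    have w2 : 5 * y.2.1 + t2 < 5 * r := by omega
    have w3 : 5 * y.2.2 + t3 < 5 * r := by omega
    have m1 : (5 * y.1 + t1) % 5 = t1 := by omega
    have m2 : (5 * y.2.1 + t2) % 5 = t2 := by omega
    have m3 : (5 * y.2.2 + t3) % 5 = t3 := by omega
    have pa : 5 * y.1 + t1 < 5 * y.2.1 + t2 ∧ comp (5 * y.1 + t1) (5 * y.2.1 + t2) := by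
      apply (pair_iff _ _).mpr
      rw [m1, m2, show (5*y.1+t1) / 5 = y.1 by omega, show (5*y.2.1+t2) / 5 = y.2.1 by omega]
      exact b1
    have pb : 5 * y.2.1 + t2 < 5 * y.2.2 + t3 ∧ comp (5 * y.2.1 + t2) (5 * y.2.2 + t3) := by
      apply (pair_iff _ _).mpr
      rw [m2, m3, show (5*y.2.1+t2) / 5 = y.2.1 by omega, show (5*y.2.2+t3) / 5 = y.2.2 by omega]
      exact b2
    have pc : 5 * y.1 + t1 < 5 * y.2.2 + t3 ∧ comp (5 * y.1 + t1) (5 * y.2.2 + t3) := by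
      apply (pair_iff _ _).mpr
      rw [m1, m3, show (5*y.1+t1) / 5 = y.1 by omega, show (5*y.2.2+t3) / 5 = y.2.2 by omega]
      exact b3
    exact Finset.mem_filter.mpr ⟨Finset.mem_filter.mpr ⟨mem_box.mpr ⟨w1, w2, w3⟩,
      valid_mk t1 y.1 r h1 b6, valid_mk t2 y.2.1 r h2 b5, valid_mk t3 y.2.2 r h3 b4,
      pa, pb, pc⟩, by rw [Prod.mk.injEq, Prod.mk.injEq]; exact ⟨m1, m2, m3⟩⟩
  · intro x hx
    obtain ⟨hT, hmod⟩ := Finset.mem_filter.mp hx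
    simp only [Prod.mk.injEq] at hmod
    have e1 : 5 * (x.1 / 5) + t1 = x.1 := by omega
    have e2 : 5 * (x.2.1 / 5) + t2 = x.2.1 := by omega
    have e3 : 5 * (x.2.2 / 5) + t3 = x.2.2 := by omega
    calc (5 * (x.1 / 5) + t1, 5 * (x.2.1 / 5) + t2, 5 * (x.2.2 / 5) + t3)
        = (x.1, x.2.1, x.2.2) := by rw [e1, e2, e3]
      _ = x := rfl
  · intro y hy
    have e1 : (5 * y.1 + t1) / 5 = y.1 := by omega
    have e2 : (5 * y.2.1 + t2) / 5 = y.2.1 := by omega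
    have e3 : (5 * y.2.2 + t3) / 5 = y.2.2 := by omega
    calc ((5 * y.1 + t1) / 5, (5 * y.2.1 + t2) / 5, (5 * y.2.2 + t3) / 5)
        = (y.1, y.2.1, y.2.2) := by rw [e1, e2, e3]
      _ = y := rfl

lemma fiber_count (r t1 t2 t3 : ℕ) (h1 : t1 < 5) (h2 : t2 < 5) (h3 : t3 < 5) :
    ((Tset r).filter (fun x => (x.1 % 5, x.2.1 % 5, x.2.2 % 5) = (t1, t2, t3))).card
      + corrT t1 t2 t3 r = Nat.choose (r + 3 - sv t1 t2 t3) 3 := by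
  rw [fiber_bij r t1 t2 t3 h1 h2 h3]
  have hre : ((box r).filter (fun y => y.1 + ee t1 t2 ≤ y.2.1 ∧ y.2.1 + ee t2 t3 ≤ y.2.2 ∧
      y.1 + ee t1 t3 ≤ y.2.2 ∧ y.2.2 + ht t3 ≤ r ∧ y.2.1 + ht t2 ≤ r ∧ y.1 + ht t1 ≤ r))
      = ((box r).filter (fun y => y.1 + ee t1 t2 ≤ y.2.1 ∧ y.2.1 + ee t2 t3 ≤ y.2.2 ∧
      y.1 + ee t1 t3 ≤ y.2.2 ∧ y.2.2 + ht t3 ≤ r)) := by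
    apply Finset.filter_congr
    intro y hy
    have f1 := fact_ht_ee t1 h1 t2 h2
    have f2 := fact_ht_ee t2 h2 t3 h3
    constructor
    · rintro ⟨a1, a2, a3, a4, a5, a6⟩; exact ⟨a1, a2, a3, a4⟩
    · rintro ⟨a1, a2, a3, a4⟩; exact ⟨a1, a2, a3, a4, by omega, by omega⟩
  rw [hre]
  have := cntC (ee t1 t2) (ee t2 t3) (ee t1 t3) (ht t3) r
    (fact_tri t1 h1 t2 h2 t3 h3) (ht_pos t3)
  unfold corrT sv
  exact this

lemma sum_fibers (r : ℕ) :
    (Tset r).card = ∑ y ∈ (range 5 ×ˢ range 5 ×ˢ range 5),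
      ((Tset r).filter (fun x => (x.1 % 5, x.2.1 % 5, x.2.2 % 5) = y)).card := by
  apply Finset.card_eq_sum_card_fiberwise
  intro x hx
  simp only [Finset.mem_coe, Finset.mem_product, Finset.mem_range]
  exact ⟨by omega, by omega, by omega⟩

lemma master (r : ℕ) :
    (Tset r).card + (∑ y ∈ (range 5 ×ˢ range 5 ×ˢ range 5), corrT y.1 y.2.1 y.2.2 r)
      = ∑ y ∈ (range 5 ×ˢ range 5 ×ˢ range 5), Nat.choose (r + 3 - sv y.1 y.2.1 y.2.2) 3 := by
  rw [sum_fibers r, ← Finset.sum_add_distrib]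
  apply Finset.sum_congr rfl
  intro y hy
  simp only [Finset.mem_product, Finset.mem_range] at hy
  exact fiber_count r y.1 y.2.1 y.2.2 hy.1 hy.2.1 hy.2.2

lemma sum_corr (r : ℕ) :
    (∑ y ∈ (range 5 ×ˢ range 5 ×ˢ range 5), corrT y.1 y.2.1 y.2.2 r)
      = 4*(r-2) + 4*(r-3) := by
  simp only [Finset.sum_product]
  simp only [Finset.sum_range_succ, Finset.sum_range_zero]
  norm_num [corrT, sv, ee, ht]
  omega

lemma sum_choose (r : ℕ) :
    (∑ y ∈ (range 5 ×ˢ range 5 ×ˢ range 5), Nat.choose (r + 3 - sv y.1 y.2.1 y.2.2) 3)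
      = 4*Nat.choose r 3 + 8*Nat.choose (r-1) 3 + 32*Nat.choose (r-2) 3
        + 54*Nat.choose (r-3) 3 + 24*Nat.choose (r-4) 3 + 3*Nat.choose (r-5) 3 := by
  have E3 : r+3-3 = r := by omega
  have E4 : r+3-4 = r-1 := by omega
  have E5 : r+3-5 = r-2 := by omega
  have E6 : r+3-6 = r-3 := by omega
  have E7 : r+3-7 = r-4 := by omega
  have E8 : r+3-8 = r-5 := by omega
  simp only [Finset.sum_product]
  simp only [Finset.sum_range_succ, Finset.sum_range_zero]
  norm_num [sv, ee, ht]
  simp only [E3, E4, E5, E6, E7, E8]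
  ring

lemma two_choose (x : ℕ) : 2 * Nat.choose (x+1) 2 = x * (x+1) := by
  induction x with
  | zero => decide
  | succ x ih =>
    rw [show x+1+1 = (x+1)+1 from rfl, choose2_succ (x+1), Nat.mul_add, ih]
    ring

lemma six_choose (x : ℕ) : 6 * Nat.choose (x+2) 3 = x * (x+1) * (x+2) := by
  induction x with
  | zero => decide
  | succ x ih =>
    rw [show x+1+2 = (x+2)+1 from rfl, choose3_succ (x+2), Nat.mul_add, ih,
      show (6:ℕ) * Nat.choose (x+2) 2 = 3 * (2 * Nat.choose ((x+1)+1) 2) by ring_nf,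
      two_choose (x+1)]
    ring

lemma chooseid (r : ℕ) :
    12*Nat.choose (r-1) 3 + 36*Nat.choose (r-2) 3 + 50*Nat.choose (r-3) 3
      + 24*Nat.choose (r-4) 3 + 3*Nat.choose (r-5) 3 + (4*(r-2) + 4*(r-3))
    = 4*Nat.choose r 3 + 8*Nat.choose (r-1) 3 + 32*Nat.choose (r-2) 3
      + 54*Nat.choose (r-3) 3 + 24*Nat.choose (r-4) 3 + 3*Nat.choose (r-5) 3 := by
  rcases le_or_gt r 6 with h | h
  · interval_cases r <;> decide
  · obtain ⟨w, rfl⟩ : ∃ w, r = w + 7 := ⟨r - 7, by omega⟩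
    have s1 : w+7-1 = w+6 := by omega
    have s2 : w+7-2 = w+5 := by omega
    have s3 : w+7-3 = w+4 := by omega
    have s4 : w+7-4 = w+3 := by omega
    have s5 : w+7-5 = w+2 := by omega
    simp only [s1, s2, s3, s4, s5]
    have c2 : 6 * Nat.choose (w+2) 3 = w*(w+1)*(w+2) := six_choose w
    have c3 : 6 * Nat.choose (w+3) 3 = (w+1)*(w+2)*(w+3) := by
      have := six_choose (w+1); linarith [this]
    have c4 : 6 * Nat.choose (w+4) 3 = (w+2)*(w+3)*(w+4) := by
      have := six_choose (w+2); linarith [this]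
    have c5 : 6 * Nat.choose (w+5) 3 = (w+3)*(w+4)*(w+5) := by
      have := six_choose (w+3); linarith [this]
    have c6 : 6 * Nat.choose (w+6) 3 = (w+4)*(w+5)*(w+6) := by
      have := six_choose (w+4); linarith [this]
    have c7 : 6 * Nat.choose (w+7) 3 = (w+5)*(w+6)*(w+7) := by
      have := six_choose (w+5); linarith [this]
    apply Nat.eq_of_mul_eq_mul_left (show 0 < 6 by norm_num)
    zify at c2 c3 c4 c5 c6 c7 ⊢
    linear_combination -4*c7 + 4*c6 + 4*c5 - 4*c4

end NB3

theorem nbD_col3_three (r : ℕ) :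
    nbD r 3 3 = 12 * Nat.choose (r - 1) 3 + 36 * Nat.choose (r - 2) 3
      + 50 * Nat.choose (r - 3) 3 + 24 * Nat.choose (r - 4) 3
      + 3 * Nat.choose (r - 5) 3 := by
  have h1 := NB3.master r
  rw [NB3.sum_corr r, NB3.sum_choose r] at h1
  have h2 := NB3.chooseid r
  rw [NB3.nbD_eq_card r]
  omega
end

section
/- There are exactly 4 configurations of 7 pairwise non-bonding dominoes on the 9×3 board: D(9,3,7) = 4. In particular, since 7 > 2·9·3/9 = 6, when both side lengths are multiples of 3 more than 2rc/9 non-bonding dominoes may fit into the r×c rectangle. -/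
/- ### Auxiliary development -/

instance : DecidableRel NonBonding := fun _ _ => by unfold NonBonding; infer_instance

instance : DecidablePred (IsDomino 9 3) := fun _ => by unfold IsDomino; infer_instance

lemma NonBonding.symm {a b : Finset (ℕ × ℕ)} (h : NonBonding a b) : NonBonding b a :=
  fun p hp q hq => (cellDist_comm p q) ▸ h q hq p hp

/-- The pairwise non-bonding predicate on a finite family of dominoes. -/
def Pw (S : Finset (Finset (ℕ × ℕ))) : Prop :=
  ∀ x ∈ S, ∀ y ∈ S, x ≠ y → NonBonding x y

instance : DecidablePred Pw := fun _ => by unfold Pw; infer_instance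

lemma Pw_insert {a : Finset (ℕ × ℕ)} {S : Finset (Finset (ℕ × ℕ))} (ha : a ∉ S) :
    Pw (insert a S) ↔ Pw S ∧ ∀ x ∈ S, NonBonding a x := by
  constructor
  · intro h
    refine ⟨fun x hx y hy hxy => h x (Finset.mem_insert_of_mem hx)
      y (Finset.mem_insert_of_mem hy) hxy, fun x hx => ?_⟩
    exact h a (Finset.mem_insert_self _ _) x (Finset.mem_insert_of_mem hx)
      (by rintro rfl; exact ha hx)
  · rintro ⟨h1, h2⟩ x hx y hy hxy
    rcases Finset.mem_insert.1 hx with hxa | hx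
    · rcases Finset.mem_insert.1 hy with hya | hy
      · exact absurd (hxa.trans hya.symm) hxy
      · exact hxa ▸ h2 y hy
    · rcases Finset.mem_insert.1 hy with hya | hy
      · exact hya ▸ (h2 x hx).symm
      · exact h1 x hx y hy hxy

/-- Backtracking count of `k`-element pairwise non-bonding subsets of a list. -/
def countNB : ℕ → List (Finset (ℕ × ℕ)) → ℕ
  | 0, _ => 1
  | k + 1, l =>
    l.rec 0 fun d t ih => countNB k (t.filter fun e => decide (NonBonding d e)) + ih

theorem countNB_zero (l) : countNB 0 l = 1 := rfl
theorem countNB_nil (k) : countNB (k + 1) [] = 0 := rfl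
theorem countNB_cons (k d t) :
    countNB (k + 1) (d :: t) =
      countNB k (t.filter fun e => decide (NonBonding d e)) + countNB (k + 1) t := rfl

lemma countNB_correct : ∀ n k (l : List (Finset (ℕ × ℕ))), l.length ≤ n → l.Nodup →
    ((l.toFinset.powersetCard k).filter Pw).card = countNB k l := by
  intro n
  induction n with
  | zero =>
    intro k l hlen hnd
    rw [List.length_eq_zero_iff.1 (Nat.le_zero.1 hlen)]
    cases k with
    | zero =>
      rw [countNB_zero, Finset.powersetCard_zero]
      rw [Finset.filter_eq_self.2 (by
        intro S hS
        rw [Finset.mem_singleton.1 hS]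
        intro x hx; simp at hx)]
      simp
    | succ k =>
      rw [countNB_nil, List.toFinset_nil,
        Finset.powersetCard_eq_empty.2 (by simp), Finset.filter_empty, Finset.card_empty]
  | succ n ih =>
    intro k l hlen hnd
    cases k with
    | zero =>
      rw [countNB_zero, Finset.powersetCard_zero]
      rw [Finset.filter_eq_self.2 (by
        intro S hS
        rw [Finset.mem_singleton.1 hS]
        intro x hx; simp at hx)]
      simp
    | succ k =>
      cases l with
      | nil =>
        rw [countNB_nil, List.toFinset_nil,
          Finset.powersetCard_eq_empty.2 (by simp), Finset.filter_empty, Finset.card_empty]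
      | cons d t =>
        rw [List.nodup_cons] at hnd
        obtain ⟨hd, hndt⟩ := hnd
        have hdf : d ∉ t.toFinset := by simpa using hd
        rw [List.toFinset_cons, Finset.powersetCard_succ_insert hdf, Finset.filter_union]
        have hdisj : Disjoint ((Finset.powersetCard (k+1) t.toFinset).filter Pw)
            (((Finset.powersetCard k t.toFinset).image (insert d)).filter Pw) := by
          rw [Finset.disjoint_left]
          intro S h1 h2
          have hS1 : S ⊆ t.toFinset := (Finset.mem_powersetCard.1 (Finset.mem_filter.1 h1).1).1
          obtain ⟨T, hT, rfl⟩ := Finset.mem_image.1 (Finset.mem_filter.1 h2).1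
          exact hdf (hS1 (Finset.mem_insert_self d T))
        rw [Finset.card_union_of_disjoint hdisj]
        have hA : ((Finset.powersetCard (k+1) t.toFinset).filter Pw).card
            = countNB (k+1) t := by
          exact ih (k+1) t (by simp at hlen; omega) hndt
        have hkey : (((Finset.powersetCard k t.toFinset).image (insert d)).filter Pw)
            = ((Finset.powersetCard k (t.toFinset.filter (NonBonding d))).filter Pw).image
              (insert d) := by
          rw [Finset.filter_image]
          congr 1
          ext S
          simp only [Finset.mem_filter, Finset.mem_powersetCard]
          constructor
          · rintro ⟨⟨hsub, hcard⟩, hPw⟩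
            have hdS : d ∉ S := fun h => hdf (hsub h)
            rw [Pw_insert hdS] at hPw
            exact ⟨⟨fun x hx => Finset.mem_filter.2 ⟨hsub hx, hPw.2 x hx⟩, hcard⟩, hPw.1⟩
          · rintro ⟨⟨hsub, hcard⟩, hPw⟩
            have hsub' : S ⊆ t.toFinset := fun x hx => (Finset.mem_filter.1 (hsub hx)).1
            have hdS : d ∉ S := fun h => hdf (hsub' h)
            rw [Pw_insert hdS]
            exact ⟨⟨hsub', hcard⟩, hPw, fun x hx => (Finset.mem_filter.1 (hsub hx)).2⟩
        rw [hkey]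
        have hinj : Set.InjOn (insert d)
            (↑((Finset.powersetCard k (t.toFinset.filter (NonBonding d))).filter Pw) : Set (Finset (Finset (ℕ × ℕ)))) := by
          intro S hS T hT hST
          have hdS : d ∉ S := fun h => hdf (Finset.mem_filter.1
            ((Finset.mem_powersetCard.1 (Finset.mem_filter.1 hS).1).1 h)).1
          have hdT : d ∉ T := fun h => hdf (Finset.mem_filter.1
            ((Finset.mem_powersetCard.1 (Finset.mem_filter.1 hT).1).1 h)).1
          have : (insert d S).erase d = (insert d T).erase d := by rw [hST]
          rwa [Finset.erase_insert hdS, Finset.erase_insert hdT] at this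
        rw [Finset.card_image_of_injOn hinj]
        have hfilt : t.toFinset.filter (NonBonding d)
            = (t.filter fun e => decide (NonBonding d e)).toFinset := by
          rw [List.toFinset_filter]
          ext x
          simp
        have hB : ((Finset.powersetCard k (t.toFinset.filter (NonBonding d))).filter Pw).card
            = countNB k (t.filter fun e => decide (NonBonding d e)) := by
          rw [hfilt]
          refine ih k _ (le_trans (List.length_filter_le _ t) (by simp at hlen; omega))
            (hndt.filter _)
        rw [hA, hB, countNB_cons, Nat.add_comm]

/-- The explicit list of all dominoes on the 9×3 board. -/
def dList : List (Finset (ℕ × ℕ)) :=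
  (List.range 9).flatMap fun i => (List.range 3).flatMap fun j =>
    (if i + 1 < 9 then [({(i,j),(i+1,j)} : Finset (ℕ×ℕ))] else []) ++
    (if j + 1 < 3 then [({(i,j),(i,j+1)} : Finset (ℕ×ℕ))] else [])

lemma dList_nodup : dList.Nodup := by decide

/-- The finset of dominoes via powerset of the grid. -/
def dominoSet : Finset (Finset (ℕ × ℕ)) :=
  ((Finset.range 9 ×ˢ Finset.range 3).powersetCard 2).filter
    (fun dom => ∀ p ∈ dom, ∀ q ∈ dom, p ≠ q → cellDist p q = 1)

lemma dList_toFinset : dList.toFinset = dominoSet := by decide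

lemma mem_dominoSet_iff (x : Finset (ℕ × ℕ)) : x ∈ dominoSet ↔ IsDomino 9 3 x := by
  unfold dominoSet IsDomino
  rw [Finset.mem_filter, Finset.mem_powersetCard]
  constructor
  · rintro ⟨⟨hsub, hcard⟩, h⟩
    refine ⟨hcard, fun p hp => ?_, h⟩
    have := hsub hp
    rw [Finset.mem_product, Finset.mem_range, Finset.mem_range] at this
    exact this
  · rintro ⟨hcard, hbd, h⟩
    refine ⟨⟨fun p hp => ?_, hcard⟩, h⟩
    rw [Finset.mem_product, Finset.mem_range, Finset.mem_range]
    exact hbd p hp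

lemma countNB_value : countNB 7 dList = 4 := by decide

theorem nbD_9_3_7 : nbD 9 3 7 = 4 ∧ 2 * 9 * 3 / 9 < 7 := by
  refine ⟨?_, by norm_num⟩
  unfold nbD
  have hset : {S : Finset (Finset (ℕ × ℕ)) | S.card = 7 ∧ (∀ x ∈ S, IsDomino 9 3 x) ∧
      ∀ x ∈ S, ∀ y ∈ S, x ≠ y → NonBonding x y}
      = ↑((dList.toFinset.powersetCard 7).filter Pw) := by
    ext S
    simp only [Set.mem_setOf_eq, Finset.coe_filter, Finset.mem_powersetCard,
      dList_toFinset]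
    constructor
    · rintro ⟨h1, h2, h3⟩
      exact ⟨⟨fun x hx => (mem_dominoSet_iff x).2 (h2 x hx), h1⟩, h3⟩
    · rintro ⟨⟨hsub, h1⟩, h3⟩
      exact ⟨h1, fun x hx => (mem_dominoSet_iff x).1 (hsub hx), h3⟩
  rw [hset, Set.ncard_coe_finset,
    countNB_correct dList.length 7 dList le_rfl dList_nodup, countNB_value]
end
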